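/- arXiv:2307.00851 — 7 statements merged into one kernel-verified Lean document; each statement's English description precedes it below -/
import Mathlib

section
/- Let X be a zero-dimensional metrizable compact space, D ⊆ X, and f : D → X an injective map which is continuous with respect to the subspace topology on D. (a) If D is open in X, then either (X,G_f) admits a continuous coloring with finitely many colors, or (X,G_f) admits no countable continuous coloring. (b) If D is closed in X, then either (X,G_f) admits a continuous 3-coloring, or (X,G_f) admits no countable continuous coloring. Moreover, there exist a countable zero-dimensional Polish space X, an open subset D ⊆ X, and a fixed point free homeomorphism f from D onto an open subset of X, such that (X,G_f) admits a countable continuous coloring but no continuous coloring with finitely many colors. -/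
open TopologicalSpace

/-- A *graph* on `X`: a symmetric irreflexive binary relation on `X`. -/
def IsGraph {X : Type*} (G : Set (X × X)) : Prop :=
  (∀ x y : X, (x, y) ∈ G → (y, x) ∈ G) ∧ ∀ x : X, (x, x) ∉ G

/-- `(X, G)` admits a continuous coloring with `n` colors
(`Fin n` carries the discrete topology). -/
def HasContColoring {X : Type*} [TopologicalSpace X] (G : Set (X × X)) (n : ℕ) : Prop :=
  ∃ c : X → Fin n, Continuous c ∧ ∀ x y : X, (x, y) ∈ G → c x ≠ c y

/-- `(X, G)` admits a countable continuous coloring (`ℕ` is discrete). -/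
def HasCtbleContColoring {X : Type*} [TopologicalSpace X] (G : Set (X × X)) : Prop :=
  ∃ c : X → ℕ, Continuous c ∧ ∀ x y : X, (x, y) ∈ G → c x ≠ c y

/-- `(X,G) ≼_c (Y,H)` : there is a continuous homomorphism. -/
def RedC {X Y : Type*} [TopologicalSpace X] [TopologicalSpace Y]
    (G : Set (X × X)) (H : Set (Y × Y)) : Prop :=
  ∃ φ : X → Y, Continuous φ ∧ ∀ x y : X, (x, y) ∈ G → (φ x, φ y) ∈ H

/-- `(X,G) ≼^i_c (Y,H)` : there is an injective continuous homomorphism. -/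
def RedIC {X Y : Type*} [TopologicalSpace X] [TopologicalSpace Y]
    (G : Set (X × X)) (H : Set (Y × Y)) : Prop :=
  ∃ φ : X → Y, Continuous φ ∧ Function.Injective φ ∧
    ∀ x y : X, (x, y) ∈ G → (φ x, φ y) ∈ H

/-- A space is zero-dimensional if the clopen sets form a basis. -/
def ZeroDim (X : Type*) [TopologicalSpace X] : Prop :=
  IsTopologicalBasis {s : Set X | IsClopen s}

/-- zero-dimensional metrizable compact -/
def Is0DMC (X : Type*) [TopologicalSpace X] : Prop :=
  CompactSpace X ∧ MetrizableSpace X ∧ ZeroDim X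

/-- zero-dimensional metrizable separable -/
def Is0DMS (X : Type*) [TopologicalSpace X] : Prop :=
  MetrizableSpace X ∧ SeparableSpace X ∧ ZeroDim X

/-- The graph induced by a partial function `f` with domain `D ⊆ X`:
`G_f = s(Graph(f)) \ Δ(X)`. -/
def PartialGraph {X : Type*} (D : Set X) (f : ↥D → X) : Set (X × X) :=
  {p | p.1 ≠ p.2 ∧
    ((∃ h : p.1 ∈ D, f ⟨p.1, h⟩ = p.2) ∨ ∃ h : p.2 ∈ D, f ⟨p.2, h⟩ = p.1)}

/-!
(a) A continuous `ℕ`-valued coloring of a compact space has finite range.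

(b) Given a continuous countable coloring `c`, the fixed points of `f` are exactly the points of
`D` where `c ∘ f = c`, a relatively clopen subset of `D`; removing them leaves a closed domain on
which `f` has no fixed point. Compactness and zero-dimensionality give a finite clopen coloring
`j` with `j ∘ f ≠ j`, and repeatedly extending `u ∘ f` off the domain gives continuous maps
`g₀ = j, g₁, …` into a finite linear order with `gₙ₊₁ = gₙ ∘ f` on the domain and `gₙ₊₁ ≠ gₙ`
everywhere. The bit sequence `n ↦ [gₙ x < gₙ₊₁ x]` is never constant and `f` shifts it by one.
Coloring a sequence by `2` when its first change occurs at an odd position, and by its first bit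
otherwise, distinguishes every such sequence from its shift.

(c) Take points `pᵢ` and, for `i < j` and `k ∈ ℕ`, isolated points `aᵢⱼₖ → pᵢ` and `bᵢⱼₖ → pⱼ`
(as `k → ∞`) with `g aᵢⱼₖ = bᵢⱼₖ`. Coloring each point by the index of its limit is a countable
continuous coloring, while a continuous finite coloring would have to separate `pᵢ` from `pⱼ` for
all `i ≠ j`. In the Cantor space `T → Bool` the points are the indicators of `{τ, σ τ}` for an
idempotent `σ` on the codes `T`; together with `0` they form the closed set of sequences whose
support is `σ`-closed and pairwise `σ`-related, so the space is Polish.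
-/
open Set Filter Topology TopologicalSpace

lemma HasCtbleContColoring.exists_hasContColoring {X : Type*} [TopologicalSpace X]
    [CompactSpace X] {G : Set (X × X)} (h : HasCtbleContColoring G) :
    ∃ n, HasContColoring G n := by
  obtain ⟨c, hc, hcol⟩ := h
  obtain ⟨N, hN⟩ := ((isCompact_range hc).finite_of_discrete).bddAbove
  have hval (x : X) : (Fin.ofNat (N + 1) (c x) : ℕ) = c x :=
    Nat.mod_eq_of_lt (Nat.lt_succ_of_le (hN ⟨x, rfl⟩))
  refine ⟨N + 1, Fin.ofNat (N + 1) ∘ c, continuous_of_discreteTopology.comp hc, ?_⟩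
  intro x y hxy heq
  exact hcol x y hxy (by rw [← hval x, ← hval y]; exact congrArg Fin.val heq)

section Profinite

variable {X : Type*} [TopologicalSpace X] [CompactSpace X] [T2Space X]
  [TotallyDisconnectedSpace X]

lemma exists_continuous_fin_fiber_subset (U : X → Set X) (hU : ∀ x, IsOpen (U x))
    (hxU : ∀ x, x ∈ U x) :
    ∃ (m : ℕ) (j : X → Fin m), Continuous j ∧ ∀ y, ∃ x, j ⁻¹' {j y} ⊆ U x := by
  obtain ⟨m, W, hW, hcover, hdisj⟩ := (IsOpenCover.of_sets hU
    (iUnion_eq_univ_iff.2 fun x => ⟨x, hxU x⟩)).exists_finite_nonempty_disjoint_clopen_cover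
  have hunique (y : X) : ∃! i, y ∈ W i := by
    obtain ⟨i, hi⟩ := mem_iUnion.1 (hcover (mem_univ y))
    exact ⟨i, hi, fun i' hi' =>
      hdisj.eq fun h => Set.disjoint_left.1 (Clopens.coe_disjoint.2 h) hi' hi⟩
  choose j hj hj' using hunique
  have hfiber (i : Fin m) : j ⁻¹' {i} = W i :=
    Set.ext fun y => ⟨fun h => h ▸ hj y, fun h => (hj' y i h).symm⟩
  refine ⟨m, j, continuous_discrete_rng.2 fun i => hfiber i ▸ (W i).isOpen, fun y => ?_⟩
  obtain ⟨x, hx⟩ := (hW (j y)).2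
  exact ⟨x, hfiber (j y) ▸ hx⟩

lemma IsClosed.exists_continuous_extension {K : Set X} (hK : IsClosed K) {A : Type*}
    [TopologicalSpace A] [DiscreteTopology A] [Finite A] [Nonempty A] {h : K → A}
    (hh : Continuous h) : ∃ H : X → A, Continuous H ∧ ∀ z : K, H z = h z := by
  have : CompactSpace K := isCompact_iff_compactSpace.1 hK.isCompact
  obtain ⟨H, hH, -, hHK⟩ := Profinite.exists_lift_of_finite_of_injective_of_surjective
    Subtype.val continuous_subtype_val Subtype.val_injective (fun _ : A => ())
    (fun _ => ⟨Classical.arbitrary A, rfl⟩) h hh (fun _ : X => ()) continuous_const rfl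
  exact ⟨H, hH, congrFun hHK⟩

variable {D : Set X} {f : D → X}

lemma exists_continuous_fin_apply_ne (hD : IsClosed D) (hf : Continuous f)
    (hfix : ∀ z, f z ≠ z) : ∃ (m : ℕ) (j : X → Fin m), Continuous j ∧ ∀ z, j (f z) ≠ j z := by
  have hsep (x : X) : ∃ U, IsOpen U ∧ x ∈ U ∧ ∀ z : D, (z : X) ∈ U → f z ∉ U := by
    by_cases hx : x ∈ D
    · obtain ⟨P, Q, hP, hQ, hxP, hfQ, hPQ⟩ := t2_separation (hfix ⟨x, hx⟩).symm
      obtain ⟨O, hO, hOQ⟩ := isOpen_induced_iff.1 (hQ.preimage hf)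
      have hxO : x ∈ O := (Set.ext_iff.1 hOQ ⟨x, hx⟩).2 hfQ
      refine ⟨P ∩ O, hP.inter hO, ⟨hxP, hxO⟩, fun z hz hfz => ?_⟩
      exact hPQ.notMem_of_mem_left hfz.1 ((Set.ext_iff.1 hOQ z).1 hz.2)
    · exact ⟨Dᶜ, hD.isOpen_compl, hx, fun z hz => absurd z.2 hz⟩
  choose U hU hxU hUf using hsep
  obtain ⟨m, j, hj, hfiber⟩ := exists_continuous_fin_fiber_subset U hU hxU
  refine ⟨m, j, hj, fun z hjz => ?_⟩
  obtain ⟨x, hx⟩ := hfiber z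
  exact hUf x z (hx rfl) (hx hjz)

variable {A : Type*} [AddCommGroup A] [DecidableEq A] [Finite A] [Nontrivial A]
  [TopologicalSpace A] [DiscreteTopology A]

lemma exists_continuous_eq_comp_of_ne (hD : IsClosed D) (hf : Continuous f) {u : X → A}
    (hu : Continuous u) (huf : ∀ z, u (f z) ≠ u z) :
    ∃ w : X → A, Continuous w ∧ (∀ z : D, w z = u (f z)) ∧ ∀ x, w x ≠ u x := by
  obtain ⟨a, ha⟩ := exists_ne (0 : A)
  obtain ⟨v, hv, hvD⟩ := hD.exists_continuous_extension (h := fun z => u (f z) - u z)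
    (by fun_prop)
  refine ⟨fun x => u x + if v x = 0 then a else v x,
    (continuous_of_discreteTopology (f := fun p : A × A => p.1 + if p.2 = 0 then a else p.2)).comp
      (hu.prodMk hv), fun z => ?_, fun x => ?_⟩
  · dsimp only
    rw [hvD z, if_neg (sub_ne_zero.2 (huf z)), add_sub_cancel]
  · rw [Ne, add_eq_left]
    split_ifs with h
    exacts [ha, h]

lemma exists_seq_continuous_succ_eq_comp (hD : IsClosed D) (hf : Continuous f) {j : X → A}
    (hj : Continuous j) (hjf : ∀ z, j (f z) ≠ j z) :
    ∃ g : ℕ → X → A, (∀ n, Continuous (g n)) ∧ (∀ n (z : D), g (n + 1) z = g n (f z)) ∧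
      ∀ n x, g (n + 1) x ≠ g n x := by
  let Admissible := {u : X → A // Continuous u ∧ ∀ z, u (f z) ≠ u z}
  have step (u : Admissible) :
      ∃ w : Admissible, (∀ z : D, w.1 z = u.1 (f z)) ∧ ∀ x, w.1 x ≠ u.1 x := by
    obtain ⟨w, hw, hwD, hwu⟩ := exists_continuous_eq_comp_of_ne hD hf u.2.1 u.2.2
    exact ⟨⟨w, hw, fun z h => hwu (f z) (h.trans (hwD z))⟩, hwD, hwu⟩
  choose next hnextD hnext using step
  let seq (n : ℕ) : Admissible := next^[n] ⟨j, hj, hjf⟩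
  have hseq (n : ℕ) : seq (n + 1) = next (seq n) := Function.iterate_succ_apply' next n _
  exact ⟨fun n => (seq n).1, fun n => (seq n).2.1,
    fun n z => by simp only [hseq, hnextD], fun n x => by simpa only [hseq] using hnext (seq n) x⟩

end Profinite

section ShiftColoring

noncomputable def firstChange (s : ℕ → Bool) : ℕ := sInf {n | s n ≠ s (n + 1)}

noncomputable def shiftColor (s : ℕ → Bool) : Fin 3 :=
  if Odd (firstChange s) then 2 else if s 0 then 1 else 0

variable {s : ℕ → Bool}

lemma firstChange_eq_zero (h : s 0 ≠ s 1) : firstChange s = 0 :=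
  Nat.sInf_eq_zero.2 (Or.inl h)

lemma firstChange_eq_succ (h : s 0 = s 1) (hs : ∃ n, s n ≠ s (n + 1)) :
    firstChange s = firstChange (fun n => s (n + 1)) + 1 := by
  have hpos : 1 ≤ firstChange s := by
    refine Nat.one_le_iff_ne_zero.2 fun h0 => ?_
    obtain ⟨n, hn⟩ := hs
    rcases Nat.sInf_eq_zero.1 h0 with h0 | hempty
    exacts [h0 h, hempty.subset hn]
  exact (Nat.sInf_add hpos).symm

lemma firstChange_congr (hs : ∃ n, s n ≠ s (n + 1)) {s' : ℕ → Bool}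
    (h : ∀ k ≤ firstChange s + 1, s' k = s k) : firstChange s' = firstChange s := by
  have hmem : firstChange s ∈ {n | s n ≠ s (n + 1)} := Nat.sInf_mem hs
  have hmem' : firstChange s ∈ {n | s' n ≠ s' (n + 1)} := by
    simpa only [Set.mem_ofPred_eq, h _ le_self_add, h _ le_rfl] using hmem
  refine le_antisymm (Nat.sInf_le hmem') (not_lt.1 fun hlt => ?_)
  have hk : firstChange s' ∈ {n | s' n ≠ s' (n + 1)} := Nat.sInf_mem ⟨_, hmem'⟩
  rw [Set.mem_ofPred_eq, h _ (by omega), h _ (by omega)] at hk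
  exact Nat.notMem_of_lt_sInf hlt hk

lemma shiftColor_ne (hs : ∃ n, s n ≠ s (n + 1)) :
    shiftColor s ≠ shiftColor (fun n => s (n + 1)) := by
  by_cases h : s 0 = s 1
  · simp only [shiftColor, firstChange_eq_succ h hs, Nat.odd_add_one]
    by_cases hodd : Odd (firstChange fun n => s (n + 1)) <;> simp [hodd] <;>
      split_ifs <;> decide
  · rw [shiftColor, shiftColor, firstChange_eq_zero h]
    revert h
    cases s 0 <;> cases s 1 <;> simp <;> split_ifs <;> decide

lemma continuousAt_shiftColor (hs : ∃ n, s n ≠ s (n + 1)) : ContinuousAt shiftColor s := by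
  have hnear : ∀ᶠ s' in 𝓝 s, ∀ k ∈ Finset.range (firstChange s + 2), s' k = s k :=
    (Filter.eventually_all_finset _).2 fun k _ =>
      ((isOpen_discrete {s k}).preimage (continuous_apply k)).mem_nhds (Set.mem_singleton (s k))
  refine ContinuousAt.congr (f := fun _ => shiftColor s) continuousAt_const
    (hnear.mono fun s' hs' => ?_)
  have hcongr := firstChange_congr hs fun k hk => hs' k (Finset.mem_range.2 (by omega))
  simp only [shiftColor, hcongr, hs' 0 (Finset.mem_range.2 (by omega))]

end ShiftColoring

lemma PartialGraph.induction_on {X : Type*} {D : Set X} {f : D → X} {P : X → X → Prop}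
    (h₁ : ∀ z : D, P z (f z)) (h₂ : ∀ z : D, P (f z) z) {x y : X}
    (hxy : (x, y) ∈ PartialGraph D f) : P x y := by
  obtain ⟨-, ⟨hx, hfx⟩ | ⟨hy, hfy⟩⟩ := hxy
  · rw [← show f ⟨x, hx⟩ = y from hfx]
    exact h₁ ⟨x, hx⟩
  · rw [← show f ⟨y, hy⟩ = x from hfy]
    exact h₂ ⟨y, hy⟩

section ThreeColoring

variable {X : Type*} [TopologicalSpace X] {D : Set X} {f : D → X}

lemma hasContColoring_three_of_shift (B : X → ℕ → Bool) (hB : Continuous B)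
    (hne : ∀ x, ∃ n, B x n ≠ B x (n + 1)) (hshift : ∀ z, B (f z) = fun n => B z (n + 1)) :
    HasContColoring (PartialGraph D f) 3 := by
  have hcolor (z : D) : shiftColor (B z) ≠ shiftColor (B (f z)) := by
    rw [hshift z]
    exact shiftColor_ne (hne z)
  exact ⟨shiftColor ∘ B, continuous_iff_continuousAt.2 fun x =>
    (continuousAt_shiftColor (hne x)).comp hB.continuousAt,
    fun x y => PartialGraph.induction_on (P := fun x y => shiftColor (B x) ≠ shiftColor (B y))
      hcolor fun z => (hcolor z).symm⟩

lemma exists_decide_lt_ne {A : Type*} [LinearOrder A] [Finite A] {u : ℕ → A}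
    (hu : ∀ n, u (n + 1) ≠ u n) :
    ∃ n, decide (u n < u (n + 1)) ≠ decide (u (n + 1) < u (n + 1 + 1)) := by
  by_contra! hconst
  have hall (n : ℕ) : decide (u n < u (n + 1)) = decide (u 0 < u 1) := by
    induction n with
    | zero => rfl
    | succ n ih => rw [← hconst n, ih]
  by_cases h01 : u 0 < u 1
  · refine not_injective_infinite_finite u (strictMono_nat_of_lt_succ fun n => ?_).injective
    simpa [h01] using hall n
  · refine not_injective_infinite_finite u (strictAnti_nat_of_succ_lt fun n => ?_).injective
    have : ¬ u n < u (n + 1) := by simpa [h01] using hall n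
    exact lt_of_le_of_ne (not_lt.1 this) (hu n)

variable [CompactSpace X] [T2Space X] [TotallyDisconnectedSpace X]

lemma hasContColoring_three_of_fixedPointFree (hD : IsClosed D) (hf : Continuous f)
    (hfix : ∀ z, f z ≠ z) : HasContColoring (PartialGraph D f) 3 := by
  obtain ⟨m, j, hj, hjf⟩ := exists_continuous_fin_apply_ne hD hf hfix
  obtain ⟨g, hg, hgf, hgne⟩ := exists_seq_continuous_succ_eq_comp hD hf
    (j := Fin.castAdd 2 ∘ j) (continuous_of_discreteTopology.comp hj)
    fun z => (Fin.castAdd_injective m 2).ne (hjf z)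
  refine hasContColoring_three_of_shift (fun x n => decide (g n x < g (n + 1) x))
    (continuous_pi fun n => (continuous_of_discreteTopology (f := fun p : Fin (m + 2) × _ =>
      decide (p.1 < p.2))).comp ((hg n).prodMk (hg (n + 1))))
    (fun x => exists_decide_lt_ne fun n => hgne n x) fun z => ?_
  funext n
  rw [hgf, hgf]

lemma HasCtbleContColoring.hasContColoring_three (hD : IsClosed D) (hf : Continuous f)
    (hc : HasCtbleContColoring (PartialGraph D f)) : HasContColoring (PartialGraph D f) 3 := by
  obtain ⟨c, hc, hcol⟩ := hc
  have hmoved (z : D) : f z ≠ z ↔ c (f z) ≠ c z :=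
    ⟨fun h => (hcol _ _ ⟨h.symm, Or.inl ⟨z.2, rfl⟩⟩).symm, fun h hfz => h (hfz ▸ rfl)⟩
  let D' : Set X := {x | ∃ h : x ∈ D, f ⟨x, h⟩ ≠ x}
  have hD' : IsClosed D' := by
    have : D' = Subtype.val '' {z : D | c (f z) ≠ c z} := by
      ext x
      simp only [D', Set.mem_ofPred_eq, Set.mem_image, Subtype.exists, exists_and_right,
        exists_eq_right, hmoved]
    rw [this]
    exact hD.isClosedEmbedding_subtypeVal.isClosedMap _ ((isClosed_discrete
      {p : ℕ × ℕ | p.1 ≠ p.2}).preimage ((hc.comp hf).prodMk (hc.comp continuous_subtype_val)))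
  let f' : D' → X := fun z => f ⟨z, z.2.1⟩
  have hf' : Continuous f' := hf.comp (continuous_subtype_val.subtype_mk fun z => z.2.1)
  obtain ⟨d, hd, hdcol⟩ := hasContColoring_three_of_fixedPointFree hD' hf' fun z => z.2.2
  refine ⟨d, hd, fun x y hxy => hdcol x y (PartialGraph.induction_on
    (P := fun x y => x ≠ y → (x, y) ∈ PartialGraph D' f') (fun z hz => ?_) (fun z hz => ?_)
    hxy hxy.1)⟩
  exacts [⟨hz, Or.inl ⟨⟨z.2, hz.symm⟩, rfl⟩⟩, ⟨hz, Or.inr ⟨⟨z.2, hz⟩, rfl⟩⟩]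

end ThreeColoring

lemma Continuous.apply_ne_of_tendsto {X β ι : Type*} [TopologicalSpace X] [TopologicalSpace β]
    [DiscreteTopology β] {G : Set (X × X)} {c : X → β} (hc : Continuous c)
    (hcol : ∀ x y, (x, y) ∈ G → c x ≠ c y) {l : Filter ι} [l.NeBot] {u v : ι → X} {x y : X}
    (hu : Tendsto u l (𝓝 x)) (hv : Tendsto v l (𝓝 y)) (huv : ∀ k, (u k, v k) ∈ G) :
    c x ≠ c y := by
  have hu' : ∀ᶠ k in l, c (u k) = c x :=
    (hc.tendsto x).comp hu ((isOpen_discrete {c x}).mem_nhds (mem_singleton _))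
  have hv' : ∀ᶠ k in l, c (v k) = c y :=
    (hc.tendsto y).comp hv ((isOpen_discrete {c y}).mem_nhds (mem_singleton _))
  obtain ⟨k, hk, hk'⟩ := (hu'.and hv').exists
  exact hk ▸ hk' ▸ hcol _ _ (huv k)

section TagSpace

variable {T : Type*} [DecidableEq T]

def tagPoint (σ : T → T) (τ : T) : T → Bool := fun x => decide (x = τ ∨ x = σ τ)

def tagSpace (σ : T → T) : Set (T → Bool) := range (tagPoint σ)

variable {σ : T → T}

@[simp]
lemma tagPoint_eq_true {τ x : T} : tagPoint σ τ x = true ↔ x = τ ∨ x = σ τ := by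
  simp [tagPoint]

lemma tagPoint_injective (hσ : ∀ τ, σ (σ τ) = σ τ) : Function.Injective (tagPoint σ) := by
  intro τ τ' h
  have h₁ : τ = τ' ∨ τ = σ τ' := tagPoint_eq_true.1 (h ▸ tagPoint_eq_true.2 (Or.inl rfl))
  have h₂ : τ' = τ ∨ τ' = σ τ := tagPoint_eq_true.1 (h ▸ tagPoint_eq_true.2 (Or.inl rfl))
  rcases h₁ with h₁ | h₁
  · exact h₁
  rcases h₂ with h₂ | h₂
  · exact h₂.symm
  rw [h₁, h₂, hσ]

lemma insert_tagSpace_eq (hσ : ∀ τ, σ (σ τ) = σ τ) :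
    insert (fun _ => false) (tagSpace σ) =
      {z | ∀ x y, z x = true → z y = true → x = y ∨ x = σ y ∨ y = σ x} ∩
        {z | ∀ x, z x = true → z (σ x) = true} := by
  ext z
  constructor
  · rintro (rfl | ⟨τ, rfl⟩)
    · simp
    · refine ⟨?_, ?_⟩ <;> simp only [Set.mem_ofPred_eq, tagPoint_eq_true]
      · rintro x y (rfl | rfl) (rfl | rfl) <;> simp
      · rintro x (rfl | rfl) <;> simp [hσ]
  · rintro ⟨hpair, hclosed⟩
    refine or_iff_not_imp_left.2 fun hz => ?_
    obtain ⟨x, hx⟩ : ∃ x, z x = true := by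
      by_contra! h
      exact hz (funext fun x => by simpa using h x)
    -- a moved point of the support, if any, determines the support
    obtain ⟨τ, hτ, hmoved⟩ : ∃ τ, z τ = true ∧ ∀ y, z y = true → σ y = y ∨ σ τ ≠ τ := by
      by_cases h : ∃ τ, z τ = true ∧ σ τ ≠ τ
      · obtain ⟨τ, hτ, hστ⟩ := h
        exact ⟨τ, hτ, fun _ _ => Or.inr hστ⟩
      · push Not at h
        exact ⟨x, hx, fun y hy => Or.inl (h y hy)⟩
    refine ⟨τ, funext fun y => Bool.eq_iff_iff.2 ?_⟩
    rw [tagPoint_eq_true]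
    constructor
    · rintro (rfl | rfl)
      exacts [hτ, hclosed _ hτ]
    · intro hy
      rcases hpair τ y hτ hy with h | h | h
      · exact Or.inl h.symm
      · rcases hmoved y hy with h' | h'
        · exact Or.inl (h.trans h').symm
        · exact absurd (by rw [h, hσ]) h'
      · exact Or.inr h

lemma isClosed_setOf_apply₂ {I : Type*} (x y : I) (P : Bool → Bool → Prop) :
    IsClosed {z : I → Bool | P (z x) (z y)} :=
  (isClosed_discrete {b : Bool × Bool | P b.1 b.2}).preimage
    (f := fun z : I → Bool => (z x, z y)) (by fun_prop)

lemma isClosed_insert_tagSpace (hσ : ∀ τ, σ (σ τ) = σ τ) :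
    IsClosed (insert (fun _ => false) (tagSpace σ)) := by
  rw [insert_tagSpace_eq hσ, Set.ofPred_forall, Set.ofPred_forall]
  refine (isClosed_iInter fun x => ?_).inter (isClosed_iInter fun x => ?_)
  · simp only [Set.ofPred_forall]
    exact isClosed_iInter fun y =>
      isClosed_setOf_apply₂ x y fun a b => a = true → b = true → x = y ∨ x = σ y ∨ y = σ x
  · exact isClosed_setOf_apply₂ x (σ x) (fun a b => a = true → b = true)

lemma polishSpace_tagSpace [Countable T] (hσ : ∀ τ, σ (σ τ) = σ τ) :
    PolishSpace (tagSpace σ) := by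
  have : IsCompletelyMetrizableSpace (T → Bool) := inferInstance
  let O : Set (T → Bool) := {fun _ => false}ᶜ
  have : PolishSpace O := isClosed_singleton.isOpen_compl.polishSpace
  have hsub : tagSpace σ ⊆ O := by
    rintro _ ⟨τ, rfl⟩ h
    simpa [tagPoint] using congrFun h τ
  refine (IsClosedEmbedding.mk (IsEmbedding.inclusion hsub) ?_).polishSpace
  rw [Set.range_inclusion]
  convert (isClosed_insert_tagSpace hσ).preimage continuous_subtype_val using 1
  ext z
  exact (or_iff_right z.2).symm

noncomputable def tagEquiv (hσ : ∀ τ, σ (σ τ) = σ τ) : T ≃ tagSpace σ :=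
  Equiv.ofInjective _ (tagPoint_injective hσ)

@[simp]
lemma coe_tagEquiv (hσ : ∀ τ, σ (σ τ) = σ τ) (τ : T) :
    (tagEquiv hσ τ : T → Bool) = tagPoint σ τ :=
  rfl

lemma isOpen_setOf_tagSpace_apply (x : T) :
    IsOpen {z : tagSpace σ | (z : T → Bool) x = true} :=
  (isOpen_discrete {true}).preimage
    ((continuous_apply (A := fun _ : T => Bool) x).comp continuous_subtype_val)

lemma isOpen_singleton_tagEquiv (hσ : ∀ τ, σ (σ τ) = σ τ) {τ : T} (hτ : σ τ ≠ τ) :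
    IsOpen {tagEquiv hσ τ} := by
  convert isOpen_setOf_tagSpace_apply (σ := σ) τ using 1
  ext z
  obtain ⟨τ', rfl⟩ := (tagEquiv hσ).surjective z
  simp only [mem_singleton_iff, (tagEquiv hσ).injective.eq_iff, Set.mem_ofPred_eq,
    coe_tagEquiv, tagPoint_eq_true]
  refine ⟨fun h => Or.inl h.symm, ?_⟩
  rintro (h | h)
  · exact h.symm
  · exact absurd (by rw [h, hσ]) hτ

lemma continuous_tagEquiv_symm_root [TopologicalSpace T] [DiscreteTopology T]
    (hσ : ∀ τ, σ (σ τ) = σ τ) : Continuous fun z => σ ((tagEquiv hσ).symm z) := by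
  refine continuous_discrete_rng.2 fun t => ?_
  by_cases ht : σ t = t
  · convert isOpen_setOf_tagSpace_apply (σ := σ) t using 1
    ext z
    obtain ⟨τ, rfl⟩ := (tagEquiv hσ).surjective z
    simp only [mem_preimage, Equiv.symm_apply_apply, mem_singleton_iff, Set.mem_ofPred_eq,
      coe_tagEquiv, tagPoint_eq_true]
    refine ⟨fun h => Or.inr h.symm, ?_⟩
    rintro (rfl | h)
    exacts [ht, h.symm]
  · convert isOpen_empty
    refine eq_empty_of_forall_notMem fun z hz => ht ?_
    rw [← show σ ((tagEquiv hσ).symm z) = t from hz, hσ]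

lemma tendsto_tagEquiv (hσ : ∀ τ, σ (σ τ) = σ τ) {ι : Type*} {l : Filter ι} {u : ι → T}
    (hu : Tendsto u l cofinite) {t : T} (ht : σ t = t) (hut : ∀ k, σ (u k) = t) :
    Tendsto (fun k => tagEquiv hσ (u k)) l (𝓝 (tagEquiv hσ t)) := by
  simp only [tendsto_subtype_rng, coe_tagEquiv, tendsto_pi_nhds]
  intro x
  refine tendsto_const_nhds.congr' ?_
  filter_upwards [hu.eventually (eventually_cofinite_ne x)] with k hk
  simp [tagPoint, ht, hut, hk.symm]

end TagSpace

namespace CantorExample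

/-- `inl i` codes `pᵢ`; `inr (inl (i, d, k))` and `inr (inr (i, d, k))` code `aᵢⱼₖ` and `bᵢⱼₖ`
for `j = i + d + 1`. -/
abbrev Tag := ℕ ⊕ (ℕ × ℕ × ℕ) ⊕ (ℕ × ℕ × ℕ)

def tagRoot : Tag → Tag
  | .inl i => .inl i
  | .inr (.inl (i, _, _)) => .inl i
  | .inr (.inr (i, d, _)) => .inl (i + d + 1)

def tagPartner : Tag → Tag
  | .inr (.inl x) => .inr (.inr x)
  | t => t

def enc : Tag ≃ ℕ := Denumerable.eqv Tag

def root (n : ℕ) : ℕ := enc (tagRoot (enc.symm n))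

def partner (n : ℕ) : ℕ := enc (tagPartner (enc.symm n))

def s (i : ℕ) : ℕ := enc (.inl i)

def a (i d k : ℕ) : ℕ := enc (.inr (.inl (i, d, k)))

def b (i d k : ℕ) : ℕ := enc (.inr (.inr (i, d, k)))

lemma root_root (n : ℕ) : root (root n) = root n := by
  simp only [root, Equiv.symm_apply_apply]
  rcases enc.symm n with _ | ⟨_, _, _⟩ | ⟨_, _, _⟩ <;> rfl

@[simp] lemma root_s (i : ℕ) : root (s i) = s i := by simp [root, s, tagRoot]
@[simp] lemma root_a (i d k : ℕ) : root (a i d k) = s i := by simp [root, s, a, tagRoot]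
@[simp] lemma root_b (i d k : ℕ) : root (b i d k) = s (i + d + 1) := by simp [root, s, b, tagRoot]
@[simp] lemma partner_a (i d k : ℕ) : partner (a i d k) = b i d k := by
  simp [partner, a, b, tagPartner]

lemma s_injective : Function.Injective s := fun i j h => by simpa [s] using h

lemma s_ne_a (i i' d k : ℕ) : s i ≠ a i' d k := by simp [s, a]
lemma s_ne_b (i i' d k : ℕ) : s i ≠ b i' d k := by simp [s, b]
lemma a_ne_b (i d k i' d' k' : ℕ) : a i d k ≠ b i' d' k' := by simp [a, b]

lemma b_injective {i d k i' d' k' : ℕ} (h : b i d k = b i' d' k') : i = i' ∧ d = d' ∧ k = k' := by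
  simpa [b] using h

lemma a_injective_right (i d : ℕ) : Function.Injective (a i d) := fun k k' h => by simpa [a] using h
lemma b_injective_right (i d : ℕ) : Function.Injective (b i d) := fun k k' h => by simpa [b] using h

abbrev Z : Set (ℕ → Bool) := tagSpace root

noncomputable abbrev pt : ℕ ≃ Z := tagEquiv root_root

def E : Set Z := ⋃ i, ⋃ d, ⋃ k, {pt (a i d k)}

noncomputable def g (z : E) : Z := pt (partner (pt.symm z))

lemma a_mem_E (i d k : ℕ) : pt (a i d k) ∈ E := by
  simp only [E, mem_iUnion, mem_singleton_iff]
  exact ⟨i, d, k, rfl⟩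

lemma g_mk (i d k : ℕ) : g ⟨pt (a i d k), a_mem_E i d k⟩ = pt (b i d k) := by simp [g]

lemma exists_eq_of_mem_E (z : E) : ∃ i d k, (z : Z) = pt (a i d k) ∧ g z = pt (b i d k) := by
  obtain ⟨z, hz⟩ := z
  simp only [E, mem_iUnion, mem_singleton_iff] at hz
  obtain ⟨i, d, k, rfl⟩ := hz
  exact ⟨i, d, k, rfl, g_mk i d k⟩

lemma isOpen_singleton_a (i d k : ℕ) : IsOpen {pt (a i d k)} :=
  isOpen_singleton_tagEquiv root_root (by simpa using s_ne_a i i d k)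

lemma isOpen_singleton_b (i d k : ℕ) : IsOpen {pt (b i d k)} :=
  isOpen_singleton_tagEquiv root_root (by simpa using s_ne_b (i + d + 1) i d k)

lemma isOpen_E : IsOpen E :=
  isOpen_iUnion fun i => isOpen_iUnion fun d => isOpen_iUnion fun k => isOpen_singleton_a i d k

instance : DiscreteTopology E := by
  refine discreteTopology_iff_isOpen_singleton.2 fun z => ?_
  obtain ⟨i, d, k, hz, -⟩ := exists_eq_of_mem_E z
  convert (isOpen_singleton_a i d k).preimage continuous_subtype_val
  ext w
  simp [← hz, Subtype.ext_iff]

lemma g_injective : Function.Injective g := by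
  intro z z' h
  obtain ⟨i, d, k, hz, hgz⟩ := exists_eq_of_mem_E z
  obtain ⟨i', d', k', hz', hgz'⟩ := exists_eq_of_mem_E z'
  obtain ⟨rfl, rfl, rfl⟩ := b_injective (pt.injective (hgz.symm.trans (h.trans hgz')))
  exact Subtype.ext (hz.trans hz'.symm)

lemma isOpenEmbedding_g : IsOpenEmbedding g := by
  refine .of_continuous_injective_isOpenMap continuous_of_discreteTopology g_injective
    fun U _ => ?_
  rw [← biUnion_of_singleton U, image_iUnion₂]
  refine isOpen_biUnion fun z _ => ?_
  obtain ⟨i, d, k, -, hgz⟩ := exists_eq_of_mem_E z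
  rw [image_singleton, hgz]
  exact isOpen_singleton_b i d k

lemma g_ne (z : E) : g z ≠ z := by
  obtain ⟨i, d, k, hz, hgz⟩ := exists_eq_of_mem_E z
  rw [hgz, hz, Ne, pt.injective.eq_iff]
  exact (a_ne_b i d k i d k).symm

lemma hasCtbleContColoring : HasCtbleContColoring (PartialGraph E g) := by
  have hcol (z : E) : root (pt.symm z) ≠ root (pt.symm (g z)) := by
    obtain ⟨i, d, k, hz, hgz⟩ := exists_eq_of_mem_E z
    rw [hz, hgz, Equiv.symm_apply_apply, Equiv.symm_apply_apply, root_a, root_b]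
    exact s_injective.ne (by omega)
  exact ⟨fun z => root (pt.symm z), continuous_tagEquiv_symm_root root_root,
    fun x y => PartialGraph.induction_on (P := fun x y => root (pt.symm x) ≠ root (pt.symm y))
      hcol fun z => (hcol z).symm⟩

lemma not_hasContColoring (n : ℕ) : ¬ HasContColoring (PartialGraph E g) n := by
  rintro ⟨c, hc, hcol⟩
  have hne (i d : ℕ) : c (pt (s i)) ≠ c (pt (s (i + d + 1))) := by
    refine hc.apply_ne_of_tendsto hcol (l := cofinite) (u := fun k => pt (a i d k))
      (v := fun k => pt (b i d k)) ?_ ?_ fun k => ⟨?_, Or.inl ⟨a_mem_E i d k, g_mk i d k⟩⟩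
    · exact tendsto_tagEquiv root_root (a_injective_right i d).tendsto_cofinite (root_s i)
        (root_a i d)
    · exact tendsto_tagEquiv root_root (b_injective_right i d).tendsto_cofinite (root_s _)
        (root_b i d)
    · rw [Ne, pt.injective.eq_iff]
      exact a_ne_b i d k i d k
  refine not_injective_infinite_finite (fun i => c (pt (s i)))
    (Function.Injective.of_lt_imp_ne fun i j hij => ?_)
  obtain ⟨d, rfl⟩ := Nat.exists_eq_add_of_lt hij
  exact hne i d

end CantorExample

theorem stmt7_general (X : Type*) [TopologicalSpace X] (hX : Is0DMC X)
    (D : Set X) (f : ↥D → X) (hf : Continuous f) :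
    -- (a)
    (IsOpen D →
      (∃ n : ℕ, HasContColoring (PartialGraph D f) n) ∨
        ¬ HasCtbleContColoring (PartialGraph D f)) ∧
    -- (b)
    (IsClosed D →
      HasContColoring (PartialGraph D f) 3 ∨
        ¬ HasCtbleContColoring (PartialGraph D f)) ∧
    -- moreover: a countable zero-dimensional Polish example with CCN exactly ℵ₀,
    -- realized (as any countable 0D Polish space can be) inside the Cantor space
    (∃ Z : Set (ℕ → Bool), Z.Countable ∧ PolishSpace ↥Z ∧
      ∃ E : Set ↥Z, IsOpen E ∧
        ∃ g : ↥E → ↥Z, Topology.IsOpenEmbedding g ∧ (∀ d : ↥E, g d ≠ ↑d) ∧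
          HasCtbleContColoring (PartialGraph E g) ∧
          ∀ n : ℕ, ¬ HasContColoring (PartialGraph E g) n) := by
  obtain ⟨_, _, hzd⟩ := hX
  have : TotallySeparatedSpace X := totallySeparatedSpace_of_t0_of_basis_clopen hzd
  open CantorExample in
  exact ⟨fun _ => or_not_of_imp HasCtbleContColoring.exists_hasContColoring,
    fun hD => or_not_of_imp (HasCtbleContColoring.hasContColoring_three hD hf),
    Z, countable_range _, polishSpace_tagSpace root_root, E, isOpen_E, g, isOpenEmbedding_g, g_ne,
    hasCtbleContColoring, not_hasContColoring⟩

theorem stmt7 (X : Type*) [TopologicalSpace X] (hX : Is0DMC X)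
    (D : Set X) (f : ↥D → X) (hf : Continuous f) (hinj : Function.Injective f) :
    -- (a)
    (IsOpen D →
      (∃ n : ℕ, HasContColoring (PartialGraph D f) n) ∨
        ¬ HasCtbleContColoring (PartialGraph D f)) ∧
    -- (b)
    (IsClosed D →
      HasContColoring (PartialGraph D f) 3 ∨
        ¬ HasCtbleContColoring (PartialGraph D f)) ∧
    -- moreover: a countable zero-dimensional Polish example with CCN exactly ℵ₀,
    -- realized (as any countable 0D Polish space can be) inside the Cantor space
    (∃ Z : Set (ℕ → Bool), Z.Countable ∧ PolishSpace ↥Z ∧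
      ∃ E : Set ↥Z, IsOpen E ∧
        ∃ g : ↥E → ↥Z, Topology.IsOpenEmbedding g ∧ (∀ d : ↥E, g d ≠ ↑d) ∧
          HasCtbleContColoring (PartialGraph E g) ∧
          ∀ n : ℕ, ¬ HasContColoring (PartialGraph E g) n) :=
  stmt7_general X hX D f hf
end

section
/- Let σ : 2^ℤ → 2^ℤ be the shift map σ(x)(k) = x(k+1), let α₀ ∈ 2^ℤ be defined by α₀(k) = k mod 2 for all k ∈ ℤ, let β₀ ∈ 2^ℤ be defined by β₀(0) = 1, β₀(k) = (k+1) mod 2 for k ≥ 1, and β₀(k) = k mod 2 for k ≤ −1, and let K₀ := {σ^k(α₀) : k ∈ ℤ} ∪ {σ^k(β₀) : k ∈ ℤ}. Then K₀ is a countable compact subset of 2^ℤ with σ[K₀] = K₀, and, setting h₀ := σ↾K₀, the graph (K₀,G_{h₀}) has continuous chromatic number exactly three and is ≼^i_c-minimal both in the class 𝔊₂ of graphs induced by a homeomorphism of a zero-dimensional metrizable compact space with continuous chromatic number at least three, and in the class of closed graphs on zero-dimensional metrizable compact spaces with continuous chromatic number at least three. -/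
open TopologicalSpace

/-- The graph induced by a (total) function `f : X → X`. -/
def FnGraph {X : Type*} (f : X → X) : Set (X × X) :=
  {p | p.1 ≠ p.2 ∧ (p.2 = f p.1 ∨ p.1 = f p.2)}

/-- The shift map `σ : 2^ℤ → 2^ℤ`, `σ(x)(k) = x(k+1)`. -/
def shift : (ℤ → Bool) → (ℤ → Bool) := fun x k => x (k + 1)

/-- `α₀(k) = k mod 2`. -/
def alpha0 : ℤ → Bool := fun k => decide (k % 2 = 1)

/-- `β₀(0) = 1`, `β₀(k) = (k+1) mod 2` for `k ≥ 1`, `β₀(k) = k mod 2` for `k ≤ -1`. -/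
def beta0 : ℤ → Bool := fun k =>
  if k = 0 then true
  else if 0 < k then decide ((k + 1) % 2 = 1)
  else decide (k % 2 = 1)

/-- The orbit `{σ^k(x) : k ∈ ℤ}` of `x` under the shift;
note that `σ^k(x) = fun j => x (j + k)` for every `k ∈ ℤ`. -/
def shiftOrbit (x : ℤ → Bool) : Set (ℤ → Bool) :=
  {y | ∃ k : ℤ, y = fun j => x (j + k)}

/-- `K₀ = Orb_σ(α₀) ∪ Orb_σ(β₀)`. -/
def K0 : Set (ℤ → Bool) := shiftOrbit alpha0 ∪ shiftOrbit beta0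

/-- The graph `G_{σ↾K}` induced on `K ⊆ 2^ℤ` by the restriction of the shift. -/
def ShiftGraph (K : Set (ℤ → Bool)) : Set (↥K × ↥K) :=
  {p | (p.1 : ℤ → Bool) ≠ ↑p.2 ∧
    ((p.2 : ℤ → Bool) = shift ↑p.1 ∨ (p.1 : ℤ → Bool) = shift ↑p.2)}

/-!
The graph on `K₀` is the bi-infinite path `k ↦ σᵏβ₀` together with the single edge `{α₀, σα₀}`,
and the path converges to `α₀` along even `k → -∞` and to `σα₀` along even `k → +∞`: a continuous
2-colouring would give both ends of that edge the colour of `β₀`. The window `(x (-1), x 0)` is a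
continuous 3-colouring.

For minimality, let `φ` be an injective continuous homomorphism into `K₀` from a compact graph with
no continuous 2-colouring. Every edge of the path is the image of an edge, so the range of `φ`
contains the dense `β₀`-orbit and `φ` is a homeomorphism. Its inverse maps path edges to edges, and
`{α₀, σα₀}` to a limit of edges, which is an edge since the graph is closed off the diagonal (for
`G_g` because `g` is continuous).
-/

open Filter Function Set Topology

lemma Int.funext_of_apply_eq_of_forall_apply_eq_iff {x y : ℤ → Bool} (b : ℤ) (hb : x b = y b)
    (h : ∀ k, x k = x (k + 1) ↔ y k = y (k + 1)) : x = y := by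
  funext z
  induction z using Int.inductionOn' (b := b) with
  | zero => exact hb
  | succ k _ ih =>
    have step : ∀ a b c d : Bool, a = b → (a = c ↔ b = d) → c = d := by decide
    exact step _ _ _ _ ih (h k)
  | pred k _ ih =>
    have step : ∀ a b c d : Bool, c = d → (a = c ↔ b = d) → a = b := by decide
    have hk := h (k - 1)
    rw [sub_add_cancel] at hk
    exact step _ _ _ _ ih hk

lemma FnGraph.symm {X : Type*} (f : X → X) (x y : X) (h : (x, y) ∈ FnGraph f) :
    (y, x) ∈ FnGraph f :=
  ⟨Ne.symm h.1, h.2.symm⟩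

lemma FnGraph.mem_of_mem_closure {X : Type*} [TopologicalSpace X] [T2Space X] {f : X → X}
    (hf : Continuous f) (x y : X) (h : (x, y) ∈ closure (FnGraph f)) (hxy : x ≠ y) :
    (x, y) ∈ FnGraph f := by
  have hclosed : IsClosed {p : X × X | p.2 = f p.1 ∨ p.1 = f p.2} :=
    (isClosed_eq (by fun_prop) (by fun_prop)).union (isClosed_eq (by fun_prop) (by fun_prop))
  exact ⟨hxy, closure_minimal (fun p hp => hp.2) hclosed h⟩

lemma alpha0_ne_add_one (m : ℤ) : alpha0 m ≠ alpha0 (m + 1) := by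
  simp only [alpha0, ne_eq, decide_eq_decide]
  omega

lemma beta0_eq_add_one_iff (m : ℤ) : beta0 m = beta0 (m + 1) ↔ m = -1 := by
  unfold beta0
  split_ifs <;> simp <;> omega

lemma alpha0_or_alpha0_add_one (m : ℤ) : alpha0 m = true ∨ alpha0 (m + 1) = true := by
  simp only [alpha0, decide_eq_true_eq]
  omega

lemma beta0_or_beta0_add_one (m : ℤ) : beta0 m = true ∨ beta0 (m + 1) = true := by
  unfold beta0
  split_ifs <;> simp <;> omega

lemma countable_shiftOrbit (x : ℤ → Bool) : (shiftOrbit x).Countable :=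
  (countable_range fun k j => x (j + k)).mono <| by
    rintro _ ⟨k, rfl⟩
    exact ⟨k, rfl⟩

lemma shift_image_shiftOrbit (x : ℤ → Bool) : shift '' shiftOrbit x = shiftOrbit x := by
  ext y
  constructor
  · rintro ⟨z, ⟨k, rfl⟩, rfl⟩
    exact ⟨k + 1, by funext j; simp only [shift]; ring_nf⟩
  · rintro ⟨k, rfl⟩
    exact ⟨fun j => x (j + (k - 1)), ⟨k - 1, rfl⟩, by funext j; simp only [shift]; ring_nf⟩

namespace K0

def alpha (k : ℤ) : K0 := ⟨fun j => alpha0 (j + k), Or.inl ⟨k, rfl⟩⟩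

def beta (k : ℤ) : K0 := ⟨fun j => beta0 (j + k), Or.inr ⟨k, rfl⟩⟩

lemma alpha_or_beta (p : K0) : (∃ k, p = alpha k) ∨ ∃ k, p = beta k := by
  obtain ⟨x, ⟨k, rfl⟩ | ⟨k, rfl⟩⟩ := p
  exacts [Or.inl ⟨k, rfl⟩, Or.inr ⟨k, rfl⟩]

lemma shift_alpha (k : ℤ) : shift (alpha k).1 = (alpha (k + 1)).1 := by
  funext j
  simp only [shift, alpha]
  ring_nf

lemma shift_beta (k : ℤ) : shift (beta k).1 = (beta (k + 1)).1 := by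
  funext j
  simp only [shift, beta]
  ring_nf

lemma alpha_apply_ne (k j : ℤ) : (alpha k).1 j ≠ (alpha k).1 (j + 1) := by
  simpa only [alpha, add_right_comm] using alpha0_ne_add_one (j + k)

lemma beta_apply_eq_iff (k j : ℤ) : (beta k).1 j = (beta k).1 (j + 1) ↔ j + k = -1 := by
  simpa only [beta, add_right_comm] using beta0_eq_add_one_iff (j + k)

def IsAdmissible (x : ℤ → Bool) : Prop :=
  (∀ j, x j = true ∨ x (j + 1) = true) ∧ ∀ j k, x j = x (j + 1) → x k = x (k + 1) → j = k

lemma isAdmissible (p : K0) : IsAdmissible p.1 := by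
  rcases alpha_or_beta p with ⟨k, rfl⟩ | ⟨k, rfl⟩
  · refine ⟨fun j => ?_, fun j _ h => absurd h (alpha_apply_ne k j)⟩
    simpa only [alpha, add_right_comm] using alpha0_or_alpha0_add_one (j + k)
  · refine ⟨fun j => ?_, fun j l hj hl => ?_⟩
    · simpa only [beta, add_right_comm] using beta0_or_beta0_add_one (j + k)
    · rw [beta_apply_eq_iff] at hj hl
      omega

lemma mem_of_isAdmissible {x : ℤ → Bool} (hx : IsAdmissible x) : x ∈ K0 := by
  by_cases hrep : ∃ d, x d = x (d + 1)
  · obtain ⟨d, hd⟩ := hrep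
    have hxd : x d = true := (hx.1 d).elim id hd.trans
    have hβ : x = (beta (-d - 1)).1 := by
      refine Int.funext_of_apply_eq_of_forall_apply_eq_iff d ?_ fun k => ?_
      · rw [hxd]
        show true = beta0 (d + (-d - 1))
        rw [show d + (-d - 1) = -1 by ring]
        rfl
      · rw [beta_apply_eq_iff]
        exact ⟨fun hk => by rw [hx.2 k d hk hd]; ring, fun hk => by rwa [show k = d by omega]⟩
    exact hβ ▸ (beta _).2
  · push Not at hrep
    obtain ⟨m, hm⟩ : ∃ m, x 0 = (alpha m).1 0 := by
      cases x 0
      exacts [⟨0, rfl⟩, ⟨1, rfl⟩]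
    have hα : x = (alpha m).1 := Int.funext_of_apply_eq_of_forall_apply_eq_iff 0 hm
      fun k => iff_of_false (hrep k) (alpha_apply_ne m k)
    exact hα ▸ (alpha m).2

lemma eq_setOf_isAdmissible : K0 = {x | IsAdmissible x} :=
  Set.ext fun x => ⟨fun hx => isAdmissible ⟨x, hx⟩, mem_of_isAdmissible⟩

lemma isClosed : IsClosed K0 := by
  rw [eq_setOf_isAdmissible]
  simp only [IsAdmissible, ofPred_and, ofPred_forall]
  refine (isClosed_iInter fun j => ?_).inter (isClosed_iInter fun j => isClosed_iInter fun k => ?_)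
  · exact (isClosed_discrete {w : Bool × Bool | w.1 = true ∨ w.2 = true}).preimage
      (f := fun x : ℤ → Bool => (x j, x (j + 1))) (by fun_prop)
  · exact (isClosed_discrete
      {w : (Bool × Bool) × Bool × Bool | w.1.1 = w.1.2 → w.2.1 = w.2.2 → j = k}).preimage
      (f := fun x : ℤ → Bool => ((x j, x (j + 1)), (x k, x (k + 1)))) (by fun_prop)

lemma shift_ne_self (p : K0) : shift p.1 ≠ p.1 := fun h =>
  zero_ne_one ((isAdmissible p).2 0 1 (congrFun h 0).symm (congrFun h 1).symm)

lemma mem_shiftGraph_of_eq_shift {p q : K0} (h : q.1 = shift p.1) : (p, q) ∈ ShiftGraph K0 :=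
  ⟨fun e => shift_ne_self p (by rw [← h, e]), Or.inl h⟩

lemma alpha_edge (k : ℤ) : (alpha k, alpha (k + 1)) ∈ ShiftGraph K0 :=
  mem_shiftGraph_of_eq_shift (shift_alpha k).symm

lemma beta_edge (k : ℤ) : (beta k, beta (k + 1)) ∈ ShiftGraph K0 :=
  mem_shiftGraph_of_eq_shift (shift_beta k).symm

lemma eq_beta_of_apply_eq_apply_add_one {p : K0} {j k : ℤ} (hjk : j + k = -1)
    (h : p.1 j = p.1 (j + 1)) : p = beta k := by
  rcases alpha_or_beta p with ⟨m, rfl⟩ | ⟨m, rfl⟩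
  · exact absurd h (alpha_apply_ne m j)
  · rw [beta_apply_eq_iff] at h
    rw [show m = k by omega]

lemma eq_beta_of_mem_shiftGraph_of_apply_eq {p q : K0} (hpq : (p, q) ∈ ShiftGraph K0)
    {j k : ℤ} (hjk : j + k = -1) (h : p.1 j = q.1 j) :
    p = beta k ∧ q = beta (k + 1) ∨ q = beta k ∧ p = beta (k + 1) := by
  obtain ⟨-, hq | hp⟩ := hpq
  · have hp := eq_beta_of_apply_eq_apply_add_one hjk (h.trans (congrFun hq j))
    exact Or.inl ⟨hp, Subtype.ext (by rw [hq, hp, shift_beta])⟩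
  · have hq := eq_beta_of_apply_eq_apply_add_one hjk (h.symm.trans (congrFun hp j))
    exact Or.inr ⟨hq, Subtype.ext (by rw [hp, hq, shift_beta])⟩

lemma tendsto_beta_atBot (k : ℤ) :
    Tendsto (fun n : ℤ => beta (k + 2 * n)) atBot (𝓝 (alpha k)) := by
  refine tendsto_subtype_rng.2 (tendsto_pi_nhds.2 fun j => tendsto_const_nhds.congr' ?_)
  filter_upwards [eventually_le_atBot (-(j + k) - 1), eventually_le_atBot 0] with n hn hn'
  simp only [alpha, beta, alpha0, beta0]
  rw [if_neg (by omega), if_neg (by omega)]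
  exact decide_eq_decide.2 (by omega)

lemma tendsto_beta_atTop (k : ℤ) :
    Tendsto (fun n : ℤ => beta (k + 2 * n)) atTop (𝓝 (alpha (k + 1))) := by
  refine tendsto_subtype_rng.2 (tendsto_pi_nhds.2 fun j => tendsto_const_nhds.congr' ?_)
  filter_upwards [eventually_ge_atTop (-(j + k) + 1), eventually_ge_atTop 0] with n hn hn'
  simp only [alpha, beta, alpha0, beta0]
  rw [if_neg (by omega), if_pos (by omega)]
  exact decide_eq_decide.2 (by omega)

lemma denseRange_beta : DenseRange beta := fun p => by
  rcases alpha_or_beta p with ⟨k, rfl⟩ | ⟨k, rfl⟩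
  · exact mem_closure_of_tendsto (tendsto_beta_atBot k)
      (Eventually.of_forall fun _ => mem_range_self _)
  · exact subset_closure (mem_range_self k)

/-- On `K0` the window `(x (-1), x 0)` is never `(false, false)`, and the consecutive windows
`(x (-1), x 0)`, `(x 0, x 1)` are not both `(true, true)`, so colouring by the window is proper. -/
def windowColor (w : Bool × Bool) : Fin 3 :=
  if w.2 then (if w.1 then 2 else 1) else 0

lemma windowColor_ne {a b c : Bool} (hab : a = true ∨ b = true) (hbc : b = true ∨ c = true)
    (hrep : a = b → b = c → False) : windowColor (a, b) ≠ windowColor (b, c) := by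
  revert a b c
  decide

lemma hasContColoring_three : HasContColoring (ShiftGraph K0) 3 := by
  have hne : ∀ p : K0,
      windowColor (p.1 (-1), p.1 0) ≠ windowColor (shift p.1 (-1), shift p.1 0) := fun p =>
    windowColor_ne ((isAdmissible p).1 (-1)) ((isAdmissible p).1 0)
      fun h₁ h₂ => absurd ((isAdmissible p).2 (-1) 0 h₁ h₂) (by norm_num)
  refine ⟨fun p => windowColor (p.1 (-1), p.1 0),
    (continuous_of_discreteTopology (f := windowColor)).comp
      (((continuous_apply _).comp continuous_subtype_val).prodMk
        ((continuous_apply _).comp continuous_subtype_val)), ?_⟩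
  rintro p q ⟨-, hq | hp⟩
  · dsimp only at hq ⊢
    rw [hq]
    exact hne p
  · dsimp only at hp ⊢
    rw [hp]
    exact (hne q).symm

lemma not_hasContColoring_two : ¬ HasContColoring (ShiftGraph K0) 2 := by
  rintro ⟨c, hc, hproper⟩
  have hper : Periodic (c ∘ beta) 2 := fun k => by
    have fin_two : ∀ a b d : Fin 2, a ≠ b → b ≠ d → d = a := by decide
    have h₂ := hproper _ _ (beta_edge (k + 1))
    rw [add_assoc, one_add_one_eq_two] at h₂
    exact fin_two _ _ _ (hproper _ _ (beta_edge k)) h₂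
  have hclosed : IsClosed {p | c p = c (beta 0)} := (isClosed_discrete {c (beta 0)}).preimage hc
  have hmem : ∀ n : ℤ, beta (0 + 2 * n) ∈ {p | c p = c (beta 0)} := fun n => by
    show c (beta (0 + 2 * n)) = c (beta 0)
    simpa only [mul_comm, Int.cast_id, comp_apply] using hper.int_mul n 0
  have h₀ := hclosed.mem_of_tendsto (tendsto_beta_atBot 0) (Eventually.of_forall hmem)
  have h₁ := hclosed.mem_of_tendsto (tendsto_beta_atTop 0) (Eventually.of_forall hmem)
  exact hproper _ _ (alpha_edge 0) (h₀.trans h₁.symm)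

variable {L : Type*} [TopologicalSpace L] {H : Set (L × L)}

/-- Otherwise the `(-k-1)`-th coordinate would be a continuous 2-colouring: it is constant only
along the edge between `beta k` and `beta (k + 1)`. -/
lemma exists_edge_map_eq_beta (hH : ∀ x y, (x, y) ∈ H → (y, x) ∈ H)
    (h2 : ¬ HasContColoring H 2) {φ : L → K0} (hφ : Continuous φ)
    (hφH : ∀ x y, (x, y) ∈ H → (φ x, φ y) ∈ ShiftGraph K0) (k : ℤ) :
    ∃ x y, (x, y) ∈ H ∧ φ x = beta k ∧ φ y = beta (k + 1) := by
  by_contra hno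
  push Not at hno
  refine h2 ⟨fun x => finTwoEquiv.symm ((φ x).1 (-k - 1)),
    continuous_of_discreteTopology.comp
      ((continuous_apply _).comp (continuous_subtype_val.comp hφ)),
    fun x y hxy heq => ?_⟩
  rcases eq_beta_of_mem_shiftGraph_of_apply_eq (hφH x y hxy) (by ring)
    (finTwoEquiv.symm.injective heq) with ⟨hx, hy⟩ | ⟨hy, hx⟩
  · exact hno x y hxy hx hy
  · exact hno y x (hH x y hxy) hy hx

lemma map_mem_of_mem_shiftGraph (hH : ∀ x y, (x, y) ∈ H → (y, x) ∈ H)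
    (hcl : ∀ x y, (x, y) ∈ closure H → x ≠ y → (x, y) ∈ H) {ψ : K0 → L} (hψ : Continuous ψ)
    (hψi : Injective ψ) (hβ : ∀ k, (ψ (beta k), ψ (beta (k + 1))) ∈ H) (p q : K0)
    (hpq : (p, q) ∈ ShiftGraph K0) : (ψ p, ψ q) ∈ H := by
  have hα : ∀ k, (ψ (alpha k), ψ (alpha (k + 1))) ∈ H := fun k => by
    have ht := ((hψ.tendsto _).comp (tendsto_beta_atBot k)).prodMk_nhds
      ((hψ.tendsto _).comp (tendsto_beta_atBot (k + 1)))
    refine hcl _ _ (mem_closure_of_tendsto ht (Eventually.of_forall fun n => ?_))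
      (hψi.ne (ne_of_apply_ne Subtype.val (alpha_edge k).1))
    simpa only [comp_apply, add_right_comm] using hβ (k + 2 * n)
  have hshift : ∀ p q : K0, q.1 = shift p.1 → (ψ p, ψ q) ∈ H := by
    intro p q hq
    rcases alpha_or_beta p with ⟨k, rfl⟩ | ⟨k, rfl⟩
    · rw [show q = alpha (k + 1) from Subtype.ext (hq.trans (shift_alpha k))]
      exact hα k
    · rw [show q = beta (k + 1) from Subtype.ext (hq.trans (shift_beta k))]
      exact hβ k
  obtain ⟨-, hq | hp⟩ := hpq
  exacts [hshift p q hq, hH _ _ (hshift q p hp)]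

theorem redIC_of_redIC [CompactSpace L] (hH : ∀ x y, (x, y) ∈ H → (y, x) ∈ H)
    (hcl : ∀ x y, (x, y) ∈ closure H → x ≠ y → (x, y) ∈ H) (h2 : ¬ HasContColoring H 2)
    (hred : RedIC H (ShiftGraph K0)) : RedIC (ShiftGraph K0) H := by
  obtain ⟨φ, hφ, hφi, hφH⟩ := hred
  choose x y hxy hx hy using exists_edge_map_eq_beta hH h2 hφ hφH
  have hsurj : Surjective φ := by
    have hsub : closure (range beta) ⊆ range φ :=
      closure_minimal (range_subset_iff.2 fun k => ⟨x k, hx k⟩) (isCompact_range hφ).isClosed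
    exact fun p => hsub (denseRange_beta.closure_range ▸ mem_univ p)
  let e : L ≃ₜ K0 := hφ.homeoOfEquivCompactToT2 (f := Equiv.ofBijective φ ⟨hφi, hsurj⟩)
  have hβ : ∀ k, (e.symm (beta k), e.symm (beta (k + 1))) ∈ H := fun k => by
    have hinv : ∀ z, e.symm (φ z) = z := e.symm_apply_apply
    rw [← hx k, ← hy k, hinv, hinv]
    exact hxy k
  exact ⟨e.symm, e.symm.continuous, e.symm.injective,
    map_mem_of_mem_shiftGraph hH hcl e.symm.continuous e.symm.injective hβ⟩

end K0

theorem stmt9 :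
    K0.Countable ∧ IsCompact K0 ∧ shift '' K0 = K0 ∧
    (HasContColoring (ShiftGraph K0) 3 ∧ ¬ HasContColoring (ShiftGraph K0) 2) ∧
    -- ≼^i_c-minimality in 𝔊₂
    (∀ (L : Type*) [TopologicalSpace L], Is0DMC L →
      ∀ g : L ≃ₜ L, ¬ HasContColoring (FnGraph ⇑g) 2 →
        RedIC (FnGraph ⇑g) (ShiftGraph K0) → RedIC (ShiftGraph K0) (FnGraph ⇑g)) ∧
    -- ≼^i_c-minimality among closed graphs on 0DMC spaces with CCN ≥ 3
    (∀ (L : Type*) [TopologicalSpace L], Is0DMC L →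
      ∀ H : Set (L × L), IsGraph H → IsClosed H → ¬ HasContColoring H 2 →
        RedIC H (ShiftGraph K0) → RedIC (ShiftGraph K0) H) := by
  refine ⟨(countable_shiftOrbit _).union (countable_shiftOrbit _), K0.isClosed.isCompact,
    by simp only [K0, image_union, shift_image_shiftOrbit],
    ⟨K0.hasContColoring_three, K0.not_hasContColoring_two⟩, ?_, ?_⟩
  · rintro L _ ⟨_, _, -⟩ g h2 hred
    exact K0.redIC_of_redIC (FnGraph.symm g) (FnGraph.mem_of_mem_closure g.continuous) h2 hred
  · rintro L _ ⟨_, -, -⟩ H hH hHc h2 hred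
    exact K0.redIC_of_redIC hH.1 (fun x y h _ => hHc.closure_subset h) h2 hred
end

section
/- There is an assignment A ↦ (K_A,h_A), associating to each subset A ⊆ ℕ a countable zero-dimensional metrizable compact space K_A and a homeomorphism h_A of K_A such that (K_A,G_{h_A}) has continuous chromatic number exactly three, with the property that for all A,B ⊆ ℕ: A ⊆ B if and only if (K_A,G_{h_A}) ≼^i_c (K_B,G_{h_B}). In other words, the quasi-order of inclusion on the power set of ℕ embeds into ≼^i_c on the class of graphs induced by a homeomorphism of a countable zero-dimensional metrizable compact space with continuous chromatic number three. -/
open TopologicalSpace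

namespace S10

/-- Odd cycle length for gadget `n`: divisible by 3, odd, ≥ 9, injective. -/
def L (n : ℕ) : ℕ := 6 * n + 9

lemma L_pos (n : ℕ) : 0 < L n := by unfold L; omega
lemma L_ge (n : ℕ) : 9 ≤ L n := by unfold L; omega
lemma three_dvd_L (n : ℕ) : 3 ∣ L n := ⟨2 * n + 3, by unfold L; ring⟩
lemma L_odd (n : ℕ) : L n % 2 = 1 := by unfold L; omega
lemma L_inj {n m : ℕ} (h : L n = L m) : n = m := by unfold L at h; omega

/-- The cycle point `j` of gadget `n`, as a point of Cantor space. -/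
def P (n j : ℕ) : ℕ → Bool := fun i =>
  if i = 0 then decide (j % 3 = 1)
  else if i = 1 then decide (j % 3 = 2)
  else decide (i = 2 + Nat.pair n j)

/-- The three limit points, forming a triangle. -/
def R (t : ℕ) : ℕ → Bool := fun i =>
  if i = 0 then decide (t % 3 = 1)
  else if i = 1 then decide (t % 3 = 2)
  else false

attribute [local instance] Classical.propDecidable

lemma P_marker (n j c : ℕ) : P n j (2 + c) = decide (c = Nat.pair n j) := by
  simp only [P]
  rw [if_neg (by omega), if_neg (by omega)]
  exact decide_eq_decide.mpr (by omega)

lemma R_marker (t c : ℕ) : R t (2 + c) = false := by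
  simp only [R]
  rw [if_neg (by omega), if_neg (by omega)]

lemma P_inj {n j n' j' : ℕ} (h : P n j = P n' j') : n = n' ∧ j = j' := by
  have h2 := congrFun h (2 + Nat.pair n j)
  rw [P_marker, P_marker] at h2
  simp at h2
  exact h2

lemma R_ne_P (t n j : ℕ) : R t ≠ P n j := by
  intro h
  have h2 := congrFun h (2 + Nat.pair n j)
  rw [P_marker, R_marker] at h2
  simp at h2

lemma R_eq_R {t t' : ℕ} (h : t % 3 = t' % 3) : R t = R t' := by
  funext i; simp [R, h]

lemma R_inj {t t' : ℕ} (h : R t = R t') : t % 3 = t' % 3 := by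
  have h0 := congrFun h 0
  have h1 := congrFun h 1
  simp [R] at h0 h1
  omega

/-- Color of a point (value in `{0,1,2}` for points of our sets). -/
def colorOf (x : ℕ → Bool) : ℕ := if x 0 then 1 else if x 1 then 2 else 0

lemma colorOf_lt (x : ℕ → Bool) : colorOf x < 3 := by
  unfold colorOf; split_ifs <;> omega

lemma colorOf_R (t : ℕ) : colorOf (R t) = t % 3 := by
  have h : t % 3 = 0 ∨ t % 3 = 1 ∨ t % 3 = 2 := by omega
  rcases h with h | h | h <;> simp [colorOf, R, h]

lemma colorOf_P (n j : ℕ) : colorOf (P n j) = j % 3 := by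
  have h : j % 3 = 0 ∨ j % 3 = 1 ∨ j % 3 = 2 := by omega
  rcases h with h | h | h <;> simp [colorOf, P, h]

/-- The compact set associated to `A ⊆ ℕ`. -/
def KK (A : Set ℕ) : Set (ℕ → Bool) :=
  {x | (∃ t < 3, x = R t) ∨ ∃ n ∈ A, ∃ j < L n, x = P n j}

lemma R_mem {A : Set ℕ} {t : ℕ} (ht : t < 3) : R t ∈ KK A := Or.inl ⟨t, ht, rfl⟩

lemma P_mem {A : Set ℕ} {n j : ℕ} (hn : n ∈ A) (hj : j < L n) : P n j ∈ KK A :=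
  Or.inr ⟨n, hn, j, hj, rfl⟩

/-- The map implementing the rotation, defined globally on Cantor space. -/
noncomputable def phi (x : ℕ → Bool) : ℕ → Bool :=
  if h : ∃ c, x (2 + c) = true then
    P (Nat.unpair (Nat.find h)).1 (((Nat.unpair (Nat.find h)).2 + 1) % L (Nat.unpair (Nat.find h)).1)
  else R ((colorOf x + 1) % 3)

/-- The inverse rotation. -/
noncomputable def psi (x : ℕ → Bool) : ℕ → Bool :=
  if h : ∃ c, x (2 + c) = true then
    P (Nat.unpair (Nat.find h)).1 (((Nat.unpair (Nat.find h)).2 + (L (Nat.unpair (Nat.find h)).1 - 1)) % L (Nat.unpair (Nat.find h)).1)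
  else R ((colorOf x + 2) % 3)

lemma exists_marker_P (n j : ℕ) : ∃ c, P n j (2 + c) = true :=
  ⟨Nat.pair n j, by rw [P_marker]; simp⟩

lemma find_marker_P (n j : ℕ) (h : ∃ c, P n j (2 + c) = true) :
    Nat.find h = Nat.pair n j := by
  rw [Nat.find_eq_iff]
  constructor
  · rw [P_marker]; simp
  · intro k hk
    rw [P_marker]
    simp
    omega

lemma not_marker_R (t : ℕ) : ¬ ∃ c, R t (2 + c) = true := by
  rintro ⟨c, hc⟩
  rw [R_marker] at hc
  exact Bool.false_ne_true hc

lemma phi_P (n j : ℕ) : phi (P n j) = P n ((j + 1) % L n) := by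
  have h := exists_marker_P n j
  rw [phi, dif_pos h, find_marker_P n j h, Nat.unpair_pair]

lemma phi_R (t : ℕ) : phi (R t) = R ((t % 3 + 1) % 3) := by
  rw [phi, dif_neg (not_marker_R t), colorOf_R]

lemma psi_P (n j : ℕ) : psi (P n j) = P n ((j + (L n - 1)) % L n) := by
  have h := exists_marker_P n j
  rw [psi, dif_pos h, find_marker_P n j h, Nat.unpair_pair]

lemma psi_R (t : ℕ) : psi (R t) = R ((t % 3 + 2) % 3) := by
  rw [psi, dif_neg (not_marker_R t), colorOf_R]

lemma phi_mem {A : Set ℕ} {x : ℕ → Bool} (hx : x ∈ KK A) : phi x ∈ KK A := by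
  rcases hx with ⟨t, ht, rfl⟩ | ⟨n, hn, j, hj, rfl⟩
  · rw [phi_R]; exact R_mem (by omega)
  · rw [phi_P]; exact P_mem hn (Nat.mod_lt _ (L_pos n))

lemma psi_mem {A : Set ℕ} {x : ℕ → Bool} (hx : x ∈ KK A) : psi x ∈ KK A := by
  rcases hx with ⟨t, ht, rfl⟩ | ⟨n, hn, j, hj, rfl⟩
  · rw [psi_R]; exact R_mem (by omega)
  · rw [psi_P]; exact P_mem hn (Nat.mod_lt _ (L_pos n))

lemma psi_phi {A : Set ℕ} {x : ℕ → Bool} (hx : x ∈ KK A) : psi (phi x) = x := by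
  rcases hx with ⟨t, ht, rfl⟩ | ⟨n, hn, j, hj, rfl⟩
  · rw [phi_R, psi_R]
    exact R_eq_R (by omega)
  · rw [phi_P, psi_P]
    rw [Nat.mod_add_mod]
    have h9 := L_ge n
    have : j + 1 + (L n - 1) = j + L n := by omega
    rw [this, Nat.add_mod_right, Nat.mod_eq_of_lt hj]

lemma phi_psi {A : Set ℕ} {x : ℕ → Bool} (hx : x ∈ KK A) : phi (psi x) = x := by
  rcases hx with ⟨t, ht, rfl⟩ | ⟨n, hn, j, hj, rfl⟩
  · rw [psi_R, phi_R]
    exact R_eq_R (by omega)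
  · rw [psi_P, phi_P]
    rw [Nat.mod_add_mod]
    have h9 := L_ge n
    have : j + (L n - 1) + 1 = j + L n := by omega
    rw [this, Nat.add_mod_right, Nat.mod_eq_of_lt hj]

lemma colorOf_phi {A : Set ℕ} {x : ℕ → Bool} (hx : x ∈ KK A) :
    colorOf (phi x) = (colorOf x + 1) % 3 := by
  rcases hx with ⟨t, ht, rfl⟩ | ⟨n, hn, j, hj, rfl⟩
  · rw [phi_R, colorOf_R, colorOf_R]; omega
  · rw [phi_P, colorOf_P, colorOf_P, Nat.mod_mod_of_dvd _ (three_dvd_L n)]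
    omega



lemma isOpen_coord (i : ℕ) (b : Bool) : IsOpen {z : ℕ → Bool | z i = b} := by
  have : {z : ℕ → Bool | z i = b} = (fun z : ℕ → Bool => z i) ⁻¹' {b} := rfl
  rw [this]
  exact (isOpen_discrete ({b} : Set Bool)).preimage (continuous_apply i)

lemma isClosed_KK (A : Set ℕ) : IsClosed (KK A) := by
  rw [← isOpen_compl_iff, isOpen_iff_mem_nhds]
  intro x hx
  rw [mem_nhds_iff]
  by_cases h2 : ∃ c, ∃ c', c ≠ c' ∧ x (2 + c) = true ∧ x (2 + c') = true
  · obtain ⟨c, c', hne, hc, hc'⟩ := h2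
    refine ⟨{z | z (2 + c) = true} ∩ {z | z (2 + c') = true}, ?_, 
      (isOpen_coord _ _).inter (isOpen_coord _ _), hc, hc'⟩
    rintro z ⟨hz1, hz2⟩ hzK
    simp only [Set.mem_setOf_eq] at hz1 hz2
    rcases hzK with ⟨t, ht, rfl⟩ | ⟨n, hn, j, hj, rfl⟩
    · rw [R_marker] at hz1; exact Bool.false_ne_true hz1
    · rw [P_marker] at hz1 hz2
      simp at hz1 hz2
      exact hne (hz1.trans hz2.symm)
  by_cases h1 : ∃ c, x (2 + c) = true
  · obtain ⟨c, hc⟩ := h1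
    set n := (Nat.unpair c).1 with hn
    set j := (Nat.unpair c).2 with hj
    have hcnj : c = Nat.pair n j := by rw [hn, hj, Nat.pair_unpair]
    by_cases hv : n ∈ A ∧ j < L n
    · have hxP : x ≠ P n j := fun h => hx (h ▸ P_mem hv.1 hv.2)
      obtain ⟨i, hi⟩ : ∃ i, x i ≠ P n j i := by
        by_contra hcon; push_neg at hcon; exact hxP (funext hcon)
      refine ⟨{z | z i = x i} ∩ {z | z (2 + c) = true}, ?_, 
        (isOpen_coord _ _).inter (isOpen_coord _ _), rfl, hc⟩
      rintro z ⟨hz1, hz2⟩ hzK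
      simp only [Set.mem_setOf_eq] at hz1 hz2
      rcases hzK with ⟨t, ht, rfl⟩ | ⟨m, hm, k, hk, rfl⟩
      · rw [R_marker] at hz2; exact Bool.false_ne_true hz2
      · rw [P_marker] at hz2
        simp at hz2
        rw [hz2] at hcnj
        obtain ⟨hnm, hjk⟩ := Nat.pair_eq_pair.mp hcnj
        subst hnm; subst hjk
        exact hi hz1.symm
    · refine ⟨{z | z (2 + c) = true}, ?_, isOpen_coord _ _, hc⟩
      rintro z hz hzK
      simp only [Set.mem_setOf_eq] at hz
      rcases hzK with ⟨t, ht, rfl⟩ | ⟨m, hm, k, hk, rfl⟩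
      · rw [R_marker] at hz; exact Bool.false_ne_true hz
      · rw [P_marker] at hz
        simp at hz
        rw [hz] at hcnj
        obtain ⟨hnm, hjk⟩ := Nat.pair_eq_pair.mp hcnj
        subst hnm; subst hjk
        exact hv ⟨hm, hk⟩
  · push_neg at h1
    by_cases hb : x 0 = true ∧ x 1 = true
    · refine ⟨{z | z 0 = true} ∩ {z | z 1 = true}, ?_, 
        (isOpen_coord _ _).inter (isOpen_coord _ _), hb.1, hb.2⟩
      rintro z ⟨hz0, hz1⟩ hzK
      simp only [Set.mem_setOf_eq] at hz0 hz1
      rcases hzK with ⟨t, ht, rfl⟩ | ⟨n, hn, j, hj, rfl⟩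
      · simp [R] at hz0 hz1; omega
      · simp [P] at hz0 hz1; omega
    · exfalso
      apply hx
      have hxR : x = R (colorOf x) := by
        funext i
        match i with
        | 0 => 
          rcases Bool.eq_false_or_eq_true (x 0) with h0 | h0 <;>
          rcases Bool.eq_false_or_eq_true (x 1) with h1' | h1' <;>
            simp [colorOf, R, h0, h1']
        | 1 => 
          rcases Bool.eq_false_or_eq_true (x 0) with h0 | h0 <;>
          rcases Bool.eq_false_or_eq_true (x 1) with h1' | h1' <;>
            first
              | (exfalso; exact hb ⟨h0, h1'⟩)
              | simp [colorOf, R, h0, h1']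
        | (k+2) =>
          rw [show k + 2 = 2 + k from by omega, R_marker]
          exact Bool.eq_false_iff.mpr (h1 k)
      exact hxR ▸ R_mem (colorOf_lt x)



lemma isCompact_KK (A : Set ℕ) : IsCompact (KK A) := (isClosed_KK A).isCompact

lemma countable_KK (A : Set ℕ) : (KK A).Countable := by
  have hsub : KK A ⊆ Set.range R ∪ Set.range (fun q : ℕ × ℕ => P q.1 q.2) := by
    rintro x (⟨t, ht, rfl⟩ | ⟨n, hn, j, hj, rfl⟩)
    · exact Or.inl ⟨t, rfl⟩
    · exact Or.inr ⟨(n, j), rfl⟩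
  exact Set.Countable.mono hsub ((Set.countable_range _).union (Set.countable_range _))

lemma key_iff (c m k : ℕ) (hk : k < L m) (hvc : (Nat.unpair c).2 < L (Nat.unpair c).1) :
    Nat.pair (Nat.unpair c).1 (((Nat.unpair c).2 + (L (Nat.unpair c).1 - 1)) % L (Nat.unpair c).1) 
      = Nat.pair m k ↔ c = Nat.pair m ((k + 1) % L m) := by
  constructor
  · intro h1
    obtain ⟨hm, hk'⟩ := Nat.pair_eq_pair.mp h1
    subst hm; subst hk'
    rw [Nat.mod_add_mod, 
      show (Nat.unpair c).2 + (L (Nat.unpair c).1 - 1) + 1 = (Nat.unpair c).2 + L (Nat.unpair c).1 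
        from by have := L_ge (Nat.unpair c).1; omega,
      Nat.add_mod_right, Nat.mod_eq_of_lt hvc, Nat.pair_unpair]
  · rintro rfl
    rw [Nat.unpair_pair]
    congr 1
    rw [Nat.mod_add_mod, 
      show k + 1 + (L m - 1) = k + L m from by have := L_ge m; omega,
      Nat.add_mod_right, Nat.mod_eq_of_lt hk]

lemma continuous_phi_res (A : Set ℕ) : Continuous fun x : ↥(KK A) => phi x.val := by
  apply continuous_pi
  intro i
  have hev : ∀ c : ℕ, Continuous fun x : ↥(KK A) => x.val c :=
    fun c => (continuous_apply c).comp continuous_subtype_val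
  match i with
  | 0 =>
    have hg : Continuous fun x : ↥(KK A) =>
        (fun p : Bool × Bool => decide ((((if p.1 then 1 else if p.2 then 2 else 0) : ℕ) + 1) % 3 = 1))
        (x.val 0, x.val 1) :=
      Continuous.comp (continuous_of_discreteTopology (α := Bool × Bool)
        (f := fun p : Bool × Bool => decide ((((if p.1 then 1 else if p.2 then 2 else 0) : ℕ) + 1) % 3 = 1)))
        ((hev 0).prodMk (hev 1))
    apply hg.congr
    intro x
    show decide ((colorOf x.val + 1) % 3 = 1) = phi x.val 0
    rcases x.2 with ⟨t, ht, hx⟩ | ⟨n, hn, j, hj, hx⟩ <;> rw [hx]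
    · rw [phi_R, colorOf_R]
      simp only [R, if_pos rfl]
      exact decide_eq_decide.mpr (by omega)
    · rw [phi_P, colorOf_P]
      simp only [P, if_pos rfl]
      rw [Nat.mod_mod_of_dvd _ (three_dvd_L n)]
      exact decide_eq_decide.mpr (by omega)
  | 1 =>
    have hg : Continuous fun x : ↥(KK A) =>
        (fun p : Bool × Bool => decide ((((if p.1 then 1 else if p.2 then 2 else 0) : ℕ) + 1) % 3 = 2))
        (x.val 0, x.val 1) :=
      Continuous.comp (continuous_of_discreteTopology (α := Bool × Bool)
        (f := fun p : Bool × Bool => decide ((((if p.1 then 1 else if p.2 then 2 else 0) : ℕ) + 1) % 3 = 2)))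
        ((hev 0).prodMk (hev 1))
    apply hg.congr
    intro x
    show decide ((colorOf x.val + 1) % 3 = 2) = phi x.val 1
    rcases x.2 with ⟨t, ht, hx⟩ | ⟨n, hn, j, hj, hx⟩ <;> rw [hx]
    · rw [phi_R, colorOf_R]
      simp only [R, if_neg (by omega : ¬ (1 : ℕ) = 0), if_pos rfl]
      exact decide_eq_decide.mpr (by omega)
    · rw [phi_P, colorOf_P]
      simp only [P, if_neg (by omega : ¬ (1 : ℕ) = 0), if_pos rfl]
      rw [Nat.mod_mod_of_dvd _ (three_dvd_L n)]
      exact decide_eq_decide.mpr (by omega)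
  | (c+2) =>
    by_cases hvc : (Nat.unpair c).2 < L (Nat.unpair c).1
    · have hg : Continuous fun x : ↥(KK A) =>
          x.val (2 + Nat.pair (Nat.unpair c).1 
            (((Nat.unpair c).2 + (L (Nat.unpair c).1 - 1)) % L (Nat.unpair c).1)) := hev _
      apply hg.congr
      intro x
      rcases x.2 with ⟨t, ht, hx⟩ | ⟨m, hm, k, hk, hx⟩ <;> rw [hx]
      · rw [phi_R, R_marker, show c + 2 = 2 + c from by omega, R_marker]
      · rw [phi_P, P_marker, show c + 2 = 2 + c from by omega, P_marker]
        exact decide_eq_decide.mpr (key_iff c m k hk hvc)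
    · have hg : Continuous fun _ : ↥(KK A) => false := continuous_const
      apply hg.congr
      intro x
      rcases x.2 with ⟨t, ht, hx⟩ | ⟨m, hm, k, hk, hx⟩ <;> rw [hx]
      · rw [phi_R, show c + 2 = 2 + c from by omega, R_marker]
      · rw [phi_P, show c + 2 = 2 + c from by omega, P_marker]
        symm
        simp only [decide_eq_false_iff_not]
        intro hcc
        rw [hcc, Nat.unpair_pair] at hvc
        exact hvc (Nat.mod_lt _ (L_pos m))

noncomputable def hEquiv (A : Set ℕ) : ↥(KK A) ≃ ↥(KK A) where
  toFun x := ⟨phi x.val, phi_mem x.2⟩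
  invFun x := ⟨psi x.val, psi_mem x.2⟩
  left_inv x := Subtype.ext (psi_phi x.2)
  right_inv x := Subtype.ext (phi_psi x.2)

noncomputable def hh (A : Set ℕ) : ↥(KK A) ≃ₜ ↥(KK A) :=
  haveI : CompactSpace ↥(KK A) := isCompact_iff_compactSpace.mp (isCompact_KK A)
  Continuous.homeoOfEquivCompactToT2 (f := hEquiv A)
    (Continuous.subtype_mk (continuous_phi_res A) _)

lemma hh_val (A : Set ℕ) (x : ↥(KK A)) : (hh A x).val = phi x.val := rfl


lemma mem_FnGraph {X : Type*} (f : X → X) (x y : X) :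
    (x, y) ∈ FnGraph f ↔ x ≠ y ∧ (y = f x ∨ x = f y) := Iff.rfl

lemma coloring3 (A : Set ℕ) : HasContColoring (FnGraph ⇑(hh A)) 3 := by
  refine ⟨fun x => ⟨colorOf x.val, colorOf_lt _⟩, ?_, ?_⟩
  · have hev : ∀ c : ℕ, Continuous fun x : ↥(KK A) => x.val c :=
      fun c => (continuous_apply c).comp continuous_subtype_val
    have hg : Continuous fun x : ↥(KK A) =>
        (fun p : Bool × Bool => (⟨if p.1 then 1 else if p.2 then 2 else 0, 
          by split_ifs <;> omega⟩ : Fin 3)) (x.val 0, x.val 1) :=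
      Continuous.comp (continuous_of_discreteTopology (α := Bool × Bool)
        (f := fun p : Bool × Bool => (⟨if p.1 then 1 else if p.2 then 2 else 0, 
          by split_ifs <;> omega⟩ : Fin 3)))
        ((hev 0).prodMk (hev 1))
    apply hg.congr
    intro x
    rfl
  · intro x y hxy hcc
    obtain ⟨hne, hor⟩ := (mem_FnGraph _ x y).mp hxy
    have hv := congrArg Fin.val hcc
    simp only at hv
    -- hv : colorOf x.val = colorOf y.val
    have hx3 := colorOf_lt x.val
    rcases hor with h | h
    · have : colorOf y.val = (colorOf x.val + 1) % 3 := by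
        rw [congrArg Subtype.val h, hh_val]; exact colorOf_phi x.2
      omega
    · have : colorOf x.val = (colorOf y.val + 1) % 3 := by
        rw [congrArg Subtype.val h, hh_val]; exact colorOf_phi y.2
      omega

lemma no2 (A : Set ℕ) : ¬ HasContColoring (FnGraph ⇑(hh A)) 2 := by
  rintro ⟨c, -, hc⟩
  have hRmem : ∀ t : ℕ, t < 3 → R t ∈ KK A := fun t ht => R_mem ht
  set x0 : ↥(KK A) := ⟨R 0, hRmem 0 (by omega)⟩
  set x1 : ↥(KK A) := ⟨R 1, hRmem 1 (by omega)⟩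
  set x2 : ↥(KK A) := ⟨R 2, hRmem 2 (by omega)⟩
  have hRne : ∀ t t' : ℕ, t < 3 → t' < 3 → t ≠ t' → R t ≠ R t' := by
    intro t t' ht ht' hne h
    have := R_inj h
    omega
  have hhRR : ∀ t t' : ℕ, t < 3 → t' < 3 → (t % 3 + 1) % 3 = t' % 3 →
      ∀ (hT : R t ∈ KK A) (hT' : R t' ∈ KK A), 
        ((⟨R t', hT'⟩ : ↥(KK A)) = hh A ⟨R t, hT⟩) := by
    intro t t' ht ht' hmod hT hT'
    apply Subtype.ext
    show R t' = (hh A ⟨R t, hT⟩).val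
    rw [hh_val]
    show R t' = phi (R t)
    rw [phi_R]
    exact R_eq_R (by omega)
  have he01 : (x0, x1) ∈ FnGraph ⇑(hh A) := (mem_FnGraph _ _ _).mpr
    ⟨fun h => hRne 0 1 (by omega) (by omega) (by omega) (congrArg Subtype.val h),
     Or.inl (hhRR 0 1 (by omega) (by omega) (by omega) _ _)⟩
  have he12 : (x1, x2) ∈ FnGraph ⇑(hh A) := (mem_FnGraph _ _ _).mpr
    ⟨fun h => hRne 1 2 (by omega) (by omega) (by omega) (congrArg Subtype.val h),
     Or.inl (hhRR 1 2 (by omega) (by omega) (by omega) _ _)⟩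
  have he20 : (x2, x0) ∈ FnGraph ⇑(hh A) := (mem_FnGraph _ _ _).mpr
    ⟨fun h => hRne 2 0 (by omega) (by omega) (by omega) (congrArg Subtype.val h),
     Or.inl (hhRR 2 0 (by omega) (by omega) (by omega) _ _)⟩
  have h01 : (c x0).val ≠ (c x1).val := fun h => hc x0 x1 he01 (Fin.ext h)
  have h12 : (c x1).val ≠ (c x2).val := fun h => hc x1 x2 he12 (Fin.ext h)
  have h20 : (c x2).val ≠ (c x0).val := fun h => hc x2 x0 he20 (Fin.ext h)
  have b0 := (c x0).isLt
  have b1 := (c x1).isLt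
  have b2 := (c x2).isLt
  omega

lemma KK_mono {A B : Set ℕ} (hAB : A ⊆ B) : KK A ⊆ KK B := by
  rintro x (⟨t, ht, rfl⟩ | ⟨n, hn, j, hj, rfl⟩)
  · exact R_mem ht
  · exact P_mem (hAB hn) hj

lemma forward {A B : Set ℕ} (hAB : A ⊆ B) :
    RedIC (FnGraph ⇑(hh A)) (FnGraph ⇑(hh B)) := by
  refine ⟨Set.inclusion (KK_mono hAB), continuous_inclusion _, Set.inclusion_injective _, ?_⟩
  intro x y hxy
  obtain ⟨hne, hor⟩ := (mem_FnGraph _ x y).mp hxy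
  apply (mem_FnGraph _ _ _).mpr
  refine ⟨fun h => hne (Set.inclusion_injective (KK_mono hAB) h), ?_⟩
  rcases hor with h | h
  · left
    apply Subtype.ext
    show y.val = phi x.val
    rw [congrArg Subtype.val h, hh_val]
  · right
    apply Subtype.ext
    show x.val = phi y.val
    rw [congrArg Subtype.val h, hh_val]

lemma backward {A B : Set ℕ} (hred : RedIC (FnGraph ⇑(hh A)) (FnGraph ⇑(hh B))) :
    A ⊆ B := by
  obtain ⟨f, -, hinj, hhom⟩ := hred
  intro n hn
  have hLpos := L_pos n
  have hL9 := L_ge n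
  have cmem : ∀ j : ℕ, P n (j % L n) ∈ KK A := fun j => P_mem hn (Nat.mod_lt _ hLpos)
  set w : ℕ → ↥(KK B) := fun j => f ⟨P n (j % L n), cmem j⟩ with hw
  have hmodne : ∀ j : ℕ, (j % L n) ≠ ((j + 1) % L n) := by
    intro j h
    have ha : j % L n < L n := Nat.mod_lt _ hLpos
    rw [← Nat.mod_add_mod] at h
    rcases Nat.lt_or_ge (j % L n + 1) (L n) with hlt | hge
    · rw [Nat.mod_eq_of_lt hlt] at h; omega
    · have hE : j % L n + 1 = L n := by omega
      rw [hE, Nat.mod_self] at h; omega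
  have hedgeA : ∀ j : ℕ,
      ((⟨P n (j % L n), cmem j⟩ : ↥(KK A)), (⟨P n ((j + 1) % L n), cmem (j + 1)⟩ : ↥(KK A)))
        ∈ FnGraph ⇑(hh A) := by
    intro j
    apply (mem_FnGraph _ _ _).mpr
    refine ⟨?_, Or.inl ?_⟩
    · intro h
      exact hmodne j (P_inj (congrArg Subtype.val h)).2
    · apply Subtype.ext
      show P n ((j + 1) % L n) = ((hh A) ⟨P n (j % L n), cmem j⟩).val
      rw [hh_val]
      show P n ((j + 1) % L n) = phi (P n (j % L n))
      rw [phi_P, Nat.mod_add_mod]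
  have hedge : ∀ j : ℕ, (w j, w (j + 1)) ∈ FnGraph ⇑(hh B) := fun j => hhom _ _ (hedgeA j)
  have winj : ∀ j, j < L n → ∀ j', j' < L n → w j = w j' → j = j' := by
    intro j hj j' hj' h
    have h3 := (P_inj (congrArg Subtype.val (hinj h))).2
    rw [Nat.mod_eq_of_lt hj, Nat.mod_eq_of_lt hj'] at h3
    exact h3
  have stepR : ∀ u u' : ↥(KK B), (u, u') ∈ FnGraph ⇑(hh B) →
      (∃ t < 3, u.val = R t) → ∃ t' < 3, u'.val = R t' := by
    rintro u u' hmem ⟨t, ht, hu⟩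
    obtain ⟨hne, hor⟩ := (mem_FnGraph _ u u').mp hmem
    rcases hor with h | h
    · have hval : u'.val = phi u.val := by rw [congrArg Subtype.val h, hh_val]
      rw [hu, phi_R] at hval
      exact ⟨(t % 3 + 1) % 3, by omega, hval⟩
    · rcases u'.2 with ⟨t', ht', hu'⟩ | ⟨m, hm, k, hk, hu'⟩
      · exact ⟨t', ht', hu'⟩
      · exfalso
        have hval : u.val = phi u'.val := by rw [congrArg Subtype.val h, hh_val]
        rw [hu, hu', phi_P] at hval
        exact R_ne_P _ _ _ hval
  have stepP : ∀ m : ℕ, ∀ u u' : ↥(KK B), (u, u') ∈ FnGraph ⇑(hh B) →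
      (∃ k < L m, u.val = P m k) → ∃ k' < L m, u'.val = P m k' := by
    rintro m u u' hmem ⟨k, hk, hu⟩
    obtain ⟨hne, hor⟩ := (mem_FnGraph _ u u').mp hmem
    rcases hor with h | h
    · have hval : u'.val = phi u.val := by rw [congrArg Subtype.val h, hh_val]
      rw [hu, phi_P] at hval
      exact ⟨(k + 1) % L m, Nat.mod_lt _ (L_pos m), hval⟩
    · have hval : u.val = phi u'.val := by rw [congrArg Subtype.val h, hh_val]
      rcases u'.2 with ⟨t', ht', hu'⟩ | ⟨m', hm', k', hk', hu'⟩
      · exfalso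
        rw [hu, hu', phi_R] at hval
        exact R_ne_P _ _ _ hval.symm
      · rw [hu, hu', phi_P] at hval
        obtain ⟨hmm, hkk⟩ := P_inj hval
        subst hmm
        exact ⟨k', hk', hu'⟩
  rcases (w 0).2 with ⟨t0, ht0, hw0⟩ | ⟨m, hm, k0, hk0, hw0⟩
  · exfalso
    have hall : ∀ j, ∃ t < 3, (w j).val = R t := by
      intro j
      induction j with
      | zero => exact ⟨t0, ht0, hw0⟩
      | succ j ih => exact stepR _ _ (hedge j) ih
    choose t hlt heq using hall
    have hnet : ∀ j j', j < L n → j' < L n → t j = t j' → j = j' := by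
      intro j j' hj hj' h
      apply winj j hj j' hj'
      exact Subtype.ext (by rw [heq, heq, h])
    have h0 := hlt 0
    have h1 := hlt 1
    have h2 := hlt 2
    have h3 := hlt 3
    have d01 : t 0 ≠ t 1 := fun h => by have := hnet 0 1 (by omega) (by omega) h; omega
    have d02 : t 0 ≠ t 2 := fun h => by have := hnet 0 2 (by omega) (by omega) h; omega
    have d03 : t 0 ≠ t 3 := fun h => by have := hnet 0 3 (by omega) (by omega) h; omega
    have d12 : t 1 ≠ t 2 := fun h => by have := hnet 1 2 (by omega) (by omega) h; omega
    have d13 : t 1 ≠ t 3 := fun h => by have := hnet 1 3 (by omega) (by omega) h; omega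
    have d23 : t 2 ≠ t 3 := fun h => by have := hnet 2 3 (by omega) (by omega) h; omega
    omega
  · have hall : ∀ j, ∃ k < L m, (w j).val = P m k := by
      intro j
      induction j with
      | zero => exact ⟨k0, hk0, hw0⟩
      | succ j ih => exact stepP m _ _ (hedge j) ih
    choose k hklt hkeq using hall
    have hLmn : L n ≤ L m := by
      have hinjF : Function.Injective (fun j : Fin (L n) => (⟨k j.val, hklt j.val⟩ : Fin (L m))) := by
        intro a b hab
        have h1 : k a.val = k b.val := congrArg Fin.val hab
        apply Fin.ext
        apply winj a.val a.isLt b.val b.isLt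
        apply Subtype.ext
        rw [hkeq, hkeq, h1]
      calc L n = Fintype.card (Fin (L n)) := (Fintype.card_fin _).symm
        _ ≤ Fintype.card (Fin (L m)) := Fintype.card_le_of_injective _ hinjF
        _ = L m := Fintype.card_fin _
    haveI : NeZero (L m) := ⟨by have := L_pos m; omega⟩
    have hstep : ∀ j, ((k (j + 1) : ZMod (L m)) = (k j : ZMod (L m)) + 1) ∨
        ((k j : ZMod (L m)) = (k (j + 1) : ZMod (L m)) + 1) := by
      intro j
      obtain ⟨hne', hor⟩ := (mem_FnGraph _ _ _).mp (hedge j)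
      rcases hor with h | h
      · left
        have hval : (w (j + 1)).val = phi (w j).val := by rw [congrArg Subtype.val h, hh_val]
        rw [hkeq, hkeq, phi_P] at hval
        rw [(P_inj hval).2, ZMod.natCast_mod, Nat.cast_add, Nat.cast_one]
      · right
        have hval : (w j).val = phi (w (j + 1)).val := by rw [congrArg Subtype.val h, hh_val]
        rw [hkeq, hkeq, phi_P] at hval
        rw [(P_inj hval).2, ZMod.natCast_mod, Nat.cast_add, Nat.cast_one]
    classical
    set ε : ℕ → ℤ := fun j => if (k (j + 1) : ZMod (L m)) = (k j : ZMod (L m)) + 1 then 1 else -1 with hε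
    have hstep' : ∀ j, (k (j + 1) : ZMod (L m)) = (k j : ZMod (L m)) + ((ε j : ℤ) : ZMod (L m)) := by
      intro j
      by_cases hcase : (k (j + 1) : ZMod (L m)) = (k j : ZMod (L m)) + 1
      · simp only [hε, if_pos hcase]; rw [hcase]; push_cast; ring
      · have h2 := (hstep j).resolve_left hcase
        simp only [hε, if_neg hcase]
        rw [h2]; push_cast; ring
    have htel : ∀ j, (k j : ZMod (L m)) = (k 0 : ZMod (L m)) + ((∑ i ∈ Finset.range j, ε i : ℤ) : ZMod (L m)) := by
      intro j
      induction j with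
      | zero => simp
      | succ j ih =>
        rw [hstep' j, ih, Finset.sum_range_succ]
        push_cast
        ring
    have hwL : w (L n) = w 0 := by
      rw [hw]
      apply congrArg f
      apply Subtype.ext
      show P n (L n % L n) = P n (0 % L n)
      rw [Nat.mod_self, Nat.zero_mod]
    have hkL : k (L n) = k 0 := by
      have h1 := hkeq (L n)
      rw [hwL, hkeq 0] at h1
      exact ((P_inj h1).2).symm
    have hS0 : ((∑ i ∈ Finset.range (L n), ε i : ℤ) : ZMod (L m)) = 0 := by
      have h := htel (L n)
      rw [hkL] at h
      exact (left_eq_add.mp h)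
    have hdvd : (L m : ℤ) ∣ (∑ i ∈ Finset.range (L n), ε i) :=
      (ZMod.intCast_zmod_eq_zero_iff_dvd _ (L m)).mp hS0
    have habs : |∑ i ∈ Finset.range (L n), ε i| ≤ (L n : ℤ) := by
      calc |∑ i ∈ Finset.range (L n), ε i| ≤ ∑ i ∈ Finset.range (L n), |ε i| :=
            Finset.abs_sum_le_sum_abs _ _
        _ ≤ ∑ _i ∈ Finset.range (L n), 1 :=
            Finset.sum_le_sum (fun i _ => by simp only [hε]; split_ifs <;> simp)
        _ = (L n : ℤ) := by simp
    have hodd : (∑ i ∈ Finset.range (L n), ε i) % 2 = 1 := by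
      rw [Finset.sum_int_mod]
      have hone : ∀ i ∈ Finset.range (L n), ε i % 2 = 1 := fun i _ => by
        simp only [hε]; split_ifs <;> decide
      rw [Finset.sum_congr rfl hone]
      rw [Finset.sum_const, Finset.card_range, nsmul_eq_mul, mul_one]
      have := L_odd n
      omega
    have hSne : (∑ i ∈ Finset.range (L n), ε i) ≠ 0 := by
      intro h
      rw [h] at hodd
      norm_num at hodd
    have hle : (L m : ℤ) ≤ |∑ i ∈ Finset.range (L n), ε i| :=
      Int.le_of_dvd (abs_pos.mpr hSne) ((dvd_abs _ _).mpr hdvd)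
    have hfin : L m ≤ L n := by
      have h2 := hle.trans habs
      exact_mod_cast h2
    have hnm : n = m := L_inj (by omega)
    rw [hnm]
    exact hm

end S10


theorem stmt10 :
    ∃ (K : Set ℕ → Set (ℕ → Bool)) (h : ∀ A : Set ℕ, ↥(K A) ≃ₜ ↥(K A)),
      (∀ A, (K A).Countable) ∧ (∀ A, IsCompact (K A)) ∧
      (∀ A, HasContColoring (FnGraph ⇑(h A)) 3 ∧
        ¬ HasContColoring (FnGraph ⇑(h A)) 2) ∧
      ∀ A B : Set ℕ, A ⊆ B ↔ RedIC (FnGraph ⇑(h A)) (FnGraph ⇑(h B)) := by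
  exact ⟨S10.KK, S10.hh, S10.countable_KK, S10.isCompact_KK,
    fun A => ⟨S10.coloring3 A, S10.no2 A⟩,
    fun A B => ⟨fun h => S10.forward h, fun h => S10.backward h⟩⟩
end

section
/- Let 𝕏₁ := {0^∞} ∪ {0ⁿ1^∞ : n ∈ ℕ} ⊆ 2^ℕ (where 0ⁿ1^∞ is the sequence of n zeros followed by constant ones, and 0^∞ is the constant-zero sequence), with the subspace topology, and let ℝ₁ := {(0^{2n}1^∞, 0^{2n+1}1^∞) : n ∈ ℕ}. Let X be a topological space which is zero-dimensional (has a basis of clopen sets), Lindelöf and first countable, and let R be an arbitrary binary relation on X. Then exactly one of the following holds: (1) there is a continuous map c : X → ℕ (ℕ discrete) with c(x) ≠ c(y) for all (x,y) ∈ R; (2) there is a continuous map φ : 𝕏₁ → X with (φ(u),φ(v)) ∈ R for all (u,v) ∈ ℝ₁. -/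
open TopologicalSpace

/-- The space `𝕏₁ = {0^∞} ∪ {0ⁿ1^∞ : n ∈ ℕ} ⊆ 2^ℕ`. -/
def X1 : Set (ℕ → Bool) :=
  {x | x = fun _ => false} ∪ {x | ∃ n : ℕ, x = fun k => decide (n ≤ k)}

/-- The relation `ℝ₁ = {(0^{2n}1^∞, 0^{2n+1}1^∞) : n ∈ ℕ}`. -/
def R1 : Set ((ℕ → Bool) × (ℕ → Bool)) :=
  {p | ∃ n : ℕ, p.1 = (fun k => decide (2 * n ≤ k)) ∧ p.2 = fun k => decide (2 * n + 1 ≤ k)}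

/-! ### Auxiliary material -/

/-- The point `0ⁿ1^∞`. -/
def zpt (n : ℕ) : ℕ → Bool := fun k => decide (n ≤ k)

lemma zpt_mem (n : ℕ) : zpt n ∈ X1 := Or.inr ⟨n, rfl⟩

lemma zinf_mem : (fun _ => false) ∈ X1 := Or.inl rfl

lemma zpt_find {n : ℕ} (h : ∃ k, zpt n k = true) : Nat.find h = n := by
  rw [Nat.find_eq_iff]
  constructor
  · simp [zpt]
  · intro m hm
    simp [zpt, Nat.not_le.mpr hm]

/-- Basic open sets in `2^ℕ` given by finitely many coordinate constraints. -/
lemma isOpen_coord_false (N : ℕ) : IsOpen {w : ℕ → Bool | ∀ k < N, w k = false} := by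
  have : {w : ℕ → Bool | ∀ k < N, w k = false}
      = ⋂ k ∈ Finset.range N, (fun w : ℕ → Bool => w k) ⁻¹' {false} := by
    ext w
    simp [Finset.mem_range]
  rw [this]
  exact isOpen_biInter_finset fun k _ =>
    (continuous_apply k).isOpen_preimage _ (isOpen_discrete _)

lemma tendsto_zpt : Filter.Tendsto zpt Filter.atTop (nhds (fun _ => false : ℕ → Bool)) := by
  rw [tendsto_pi_nhds]
  intro k
  apply tendsto_nhds_of_eventually_eq
  filter_upwards [Filter.eventually_ge_atTop (k + 1)] with n hn
  simp [zpt, Nat.not_le.mpr hn]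

theorem stmt12 (X : Type*) [TopologicalSpace X]
    (hzd : ZeroDim X) [LindelofSpace X] [FirstCountableTopology X]
    (R : Set (X × X)) :
    Xor'
      (∃ c : X → ℕ, Continuous c ∧ ∀ x y : X, (x, y) ∈ R → c x ≠ c y)
      (∃ φ : ↥X1 → X, Continuous φ ∧
        ∀ u v : ↥X1, ((u : ℕ → Bool), (v : ℕ → Bool)) ∈ R1 → (φ u, φ v) ∈ R) := by
  classical
  by_cases hA : ∃ c : X → ℕ, Continuous c ∧ ∀ x y : X, (x, y) ∈ R → c x ≠ c y
  · -- a coloring exists; show there is no homomorphism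
    refine Or.inl ⟨hA, ?_⟩
    rintro ⟨φ, hφc, hφh⟩
    obtain ⟨c, hc, hcol⟩ := hA
    set zinf : ↥X1 := ⟨fun _ => false, zinf_mem⟩ with hzinf
    have hseq : Filter.Tendsto (fun n => (⟨zpt n, zpt_mem n⟩ : ↥X1)) Filter.atTop (nhds zinf) :=
      tendsto_subtype_rng.mpr tendsto_zpt
    have htd : Filter.Tendsto (fun n => c (φ ⟨zpt n, zpt_mem n⟩)) Filter.atTop
        (nhds (c (φ zinf))) := ((hc.comp hφc).tendsto zinf).comp hseq
    have hev : ∀ᶠ n in Filter.atTop, c (φ ⟨zpt n, zpt_mem n⟩) = c (φ zinf) :=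
      htd (IsOpen.mem_nhds (isOpen_discrete {c (φ zinf)}) rfl)
    obtain ⟨N, hN⟩ := Filter.eventually_atTop.mp hev
    have hedge : (zpt (2 * N), zpt (2 * N + 1)) ∈ R1 := ⟨N, rfl, rfl⟩
    have hR := hφh ⟨zpt (2 * N), zpt_mem _⟩ ⟨zpt (2 * N + 1), zpt_mem _⟩ hedge
    have h1 := hN (2 * N) (by omega)
    have h2 := hN (2 * N + 1) (by omega)
    exact hcol _ _ hR (h1.trans h2.symm)
  · -- no coloring: construct a homomorphism
    refine Or.inr ⟨?_, hA⟩
    -- Step 1: there is a "bad" point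
    have hbad : ∃ x : X, ∀ U ∈ nhds x, ∃ p ∈ R, p.1 ∈ U ∧ p.2 ∈ U := by
      by_contra hb
      push_neg at hb
      apply hA
      rcases isEmpty_or_nonempty X with hX | hX
      · exact ⟨fun _ => 0, continuous_const, fun x => (hX.false x).elim⟩
      have h2 : ∀ x : X, ∃ V : Set X, IsClopen V ∧ x ∈ V ∧
          ∀ p ∈ R, ¬(p.1 ∈ V ∧ p.2 ∈ V) := by
        intro x
        obtain ⟨U, hU, hUf⟩ := hb x
        obtain ⟨V, hV, hxV, hVU⟩ := hzd.mem_nhds_iff.mp hU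
        exact ⟨V, hV, hxV, fun p hp hc => hUf p hp (hVU hc.1) (hVU hc.2)⟩
      choose V hVcl hxV hVfree using h2
      obtain ⟨t, htc, htcov⟩ := LindelofSpace.elim_nhds_subcover V
        (fun x => (hVcl x).2.mem_nhds (hxV x))
      have htne : t.Nonempty := by
        obtain ⟨x0⟩ := hX
        have hx0 : x0 ∈ ⋃ x ∈ t, V x := htcov.symm ▸ Set.mem_univ x0
        obtain ⟨a, hat, -⟩ := Set.mem_iUnion₂.mp hx0
        exact ⟨a, hat⟩
      obtain ⟨f, hft⟩ := Set.Countable.exists_eq_range htc htne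
      have hex : ∀ x : X, ∃ n, x ∈ V (f n) := by
        intro x
        have hx : x ∈ ⋃ y ∈ t, V y := htcov.symm ▸ Set.mem_univ x
        obtain ⟨y, hyt, hxy⟩ := Set.mem_iUnion₂.mp hx
        rw [hft] at hyt
        obtain ⟨n, rfl⟩ := hyt
        exact ⟨n, hxy⟩
      refine ⟨fun x => Nat.find (hex x), ?_, ?_⟩
      · refine IsLocallyConstant.continuous (IsLocallyConstant.iff_isOpen_fiber.mpr ?_)
        intro n
        have hfib : (fun x => Nat.find (hex x)) ⁻¹' {n}
            = V (f n) ∩ ⋂ m ∈ Finset.range n, (V (f m))ᶜ := by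
          ext x
          simp only [Set.mem_preimage, Set.mem_singleton_iff, Set.mem_inter_iff,
            Set.mem_iInter, Finset.mem_range, Set.mem_compl_iff]
          constructor
          · rintro rfl
            exact ⟨Nat.find_spec (hex x), fun m hm => Nat.find_min (hex x) hm⟩
          · rintro ⟨h1, h2⟩
            exact (Nat.find_eq_iff (hex x)).mpr ⟨h1, fun m hm => h2 m hm⟩
        rw [hfib]
        exact ((hVcl (f n)).2).inter
          (isOpen_biInter_finset fun m _ => (hVcl (f m)).1.isOpen_compl)
      · intro x y hxy hcxy
        have hx : x ∈ V (f (Nat.find (hex x))) := Nat.find_spec (hex x)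
        have hy : y ∈ V (f (Nat.find (hex y))) := Nat.find_spec (hex y)
        have heq : Nat.find (hex x) = Nat.find (hex y) := hcxy
        rw [← heq] at hy
        exact hVfree (f (Nat.find (hex x))) (x, y) hxy ⟨hx, hy⟩
    obtain ⟨xi, hxi⟩ := hbad
    obtain ⟨U, hU⟩ := (nhds xi).exists_antitone_basis
    have hUnhds : ∀ n, U n ∈ nhds xi := fun n => hU.1.mem_of_mem trivial
    have hpair : ∀ n : ℕ, ∃ p : X × X, p ∈ R ∧ p.1 ∈ U n ∧ p.2 ∈ U n := by
      intro n
      obtain ⟨p, hp, h1, h2⟩ := hxi (U n) (hUnhds n)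
      exact ⟨p, hp, h1, h2⟩
    choose p hpR hp1 hp2 using hpair
    set y : ℕ → X := fun k => if k % 2 = 0 then (p (k / 2)).1 else (p (k / 2)).2 with hy
    have hyU : ∀ k, y k ∈ U (k / 2) := by
      intro k
      simp only [hy]
      split
      · exact hp1 _
      · exact hp2 _
    have hyev : ∀ n, y (2 * n) = (p n).1 ∧ y (2 * n + 1) = (p n).2 := by
      intro n
      constructor
      · have h1 : (2 * n) % 2 = 0 := by omega
        have h2 : (2 * n) / 2 = n := by omega
        simp [hy, h1, h2]
      · have h1 : ¬ ((2 * n + 1) % 2 = 0) := by omega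
        have h2 : (2 * n + 1) / 2 = n := by omega
        simp [hy, h1, h2]
    set φ : ↥X1 → X := fun z =>
      if h : ∃ k, (z : ℕ → Bool) k = true then y (Nat.find h) else xi with hφ
    have hφz : ∀ (n : ℕ) (hm : zpt n ∈ X1), φ ⟨zpt n, hm⟩ = y n := by
      intro n hm
      have hex : ∃ k, zpt n k = true := ⟨n, by simp [zpt]⟩
      simp only [hφ]
      rw [dif_pos hex, zpt_find hex]
    have hφinf : ∀ (hm : (fun _ => false : ℕ → Bool) ∈ X1), φ ⟨fun _ => false, hm⟩ = xi := by
      intro hm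
      simp [hφ]
    -- key: the value of φ on a neighborhood
    refine ⟨φ, ?_, ?_⟩
    · rw [continuous_iff_continuousAt]
      rintro ⟨zv, hz⟩
      rcases hz with hz0 | ⟨n, hzn⟩
      · -- the limit point
        intro s hs
        have hφval : φ ⟨zv, Or.inl hz0⟩ = xi := by
          simp only [Set.mem_setOf_eq] at hz0
          subst hz0
          exact hφinf _
        rw [hφval] at hs
        rw [Filter.mem_map]
        obtain ⟨m, -, hms⟩ := hU.1.mem_iff.mp hs
        have hTopen : IsOpen (Subtype.val ⁻¹' {w : ℕ → Bool | ∀ k < 2 * m + 1, w k = false}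
            : Set ↥X1) := (isOpen_coord_false (2 * m + 1)).preimage continuous_subtype_val
        refine Filter.mem_of_superset (hTopen.mem_nhds ?_) ?_
        · simp only [Set.mem_preimage, Set.mem_setOf_eq]
          intro k _
          simp only [Set.mem_setOf_eq] at hz0
          rw [hz0]
        · rintro ⟨wv, hw⟩ hwT
          simp only [Set.mem_preimage, Set.mem_setOf_eq] at hwT
          rcases hw with hw0 | ⟨j, hwj⟩
          · have : φ ⟨wv, Or.inl hw0⟩ = xi := by
              simp only [Set.mem_setOf_eq] at hw0
              subst hw0
              exact hφinf _
            rw [Set.mem_preimage, this]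
            exact hms (mem_of_mem_nhds (hUnhds m))
          · have hj : 2 * m + 1 ≤ j := by
              by_contra hc
              push_neg at hc
              have := hwT j hc
              rw [hwj] at this
              simp at this
            have hval : φ ⟨wv, Or.inr ⟨j, hwj⟩⟩ = y j := by
              have : (⟨wv, Or.inr ⟨j, hwj⟩⟩ : ↥X1) = ⟨zpt j, zpt_mem j⟩ := by
                apply Subtype.ext
                exact hwj
              rw [this, hφz]
            rw [Set.mem_preimage, hval]
            have hmj : m ≤ j / 2 := by omega
            exact hms (hU.2 hmj (hyU j))
      · -- isolated points
        intro s hs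
        rw [Filter.mem_map]
        have hTopen : IsOpen (Subtype.val ⁻¹'
            ({w : ℕ → Bool | w n = true} ∩ {w | ∀ k < n, w k = false}) : Set ↥X1) := by
          apply IsOpen.preimage continuous_subtype_val
          apply IsOpen.inter
          · have he : {w : ℕ → Bool | w n = true}
                = (fun w : ℕ → Bool => w n) ⁻¹' ({true} : Set Bool) := rfl
            rw [he]
            exact (continuous_apply n).isOpen_preimage _ (isOpen_discrete _)
          · exact isOpen_coord_false n
        refine Filter.mem_of_superset (hTopen.mem_nhds ?_) ?_
        · simp only [Set.mem_preimage, Set.mem_inter_iff, Set.mem_setOf_eq]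
          rw [hzn]
          constructor
          · simp
          · intro k hk
            simp [Nat.not_le.mpr hk]
        · rintro ⟨wv, hw⟩ hwT
          simp only [Set.mem_preimage, Set.mem_inter_iff, Set.mem_setOf_eq] at hwT
          obtain ⟨hwn, hwlt⟩ := hwT
          -- identify w with z
          have hww : wv = zpt n := by
            rcases hw with hw0 | ⟨j, hwj⟩
            · simp only [Set.mem_setOf_eq] at hw0
              rw [hw0] at hwn
              simp at hwn
            · rw [hwj] at hwn hwlt ⊢
              have hjn : j ≤ n := by simpa using hwn
              have hnj : ¬ j < n := fun hc => by
                have := hwlt j hc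
                simp at this
              have : j = n := by omega
              rw [this]; rfl
          have : (⟨wv, hw⟩ : ↥X1) = ⟨zv, Or.inr ⟨n, hzn⟩⟩ :=
            Subtype.ext (hww.trans hzn.symm)
          rw [Set.mem_preimage, this]
          exact mem_of_mem_nhds hs
    · rintro u v ⟨n, h1, h2⟩
      have hu : (⟨(u : ℕ → Bool), u.2⟩ : ↥X1) = ⟨zpt (2 * n), zpt_mem _⟩ := Subtype.ext h1
      have hv : (⟨(v : ℕ → Bool), v.2⟩ : ↥X1) = ⟨zpt (2 * n + 1), zpt_mem _⟩ := Subtype.ext h2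
      have hu' : u = ⟨zpt (2 * n), zpt_mem _⟩ := by
        rcases u with ⟨uv, hu2⟩; exact hu
      have hv' : v = ⟨zpt (2 * n + 1), zpt_mem _⟩ := by
        rcases v with ⟨vv, hv2⟩; exact hv
      rw [hu', hv', hφz, hφz, (hyev n).1, (hyev n).2]
      exact hpR n
end

section
/- Let X be a nonempty zero-dimensional metrizable separable space and f : X → X a continuous involution (f∘f = id) with f(x) ≠ x for every x ∈ X. Then the continuous chromatic number of (X,G_f) equals 2: there is a continuous 2-coloring of (X,G_f), and since G_f is nonempty there is no continuous 1-coloring. -/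
open TopologicalSpace

theorem stmt14 (X : Type*) [TopologicalSpace X] [Nonempty X] (h0 : Is0DMS X)
    (f : X → X) (hf : Continuous f) (hinvol : f ∘ f = id) (hfpf : ∀ x, f x ≠ x) :
    HasContColoring (FnGraph f) 2 ∧ ¬ HasContColoring (FnGraph f) 1 := by
  classical
  obtain ⟨hm, hsep, hz⟩ := h0
  haveI := hm
  haveI := hsep
  letI : MetricSpace X := TopologicalSpace.metrizableSpaceMetric X
  haveI : SecondCountableTopology X := UniformSpace.secondCountable_of_separable X
  have hff : ∀ x, f (f x) = x := fun x => congrFun hinvol x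
  -- for each x, a clopen nbhd U with U ∩ f⁻¹ U = ∅
  have key : ∀ x : X, ∃ U : Set X, IsClopen U ∧ x ∈ U ∧ U ∩ f ⁻¹' U = ∅ := by
    intro x
    obtain ⟨V, W, hV, hW, hxV, hxW, hVW⟩ := t2_separation (hfpf x).symm
    have hopen : IsOpen (V ∩ f ⁻¹' W) := hV.inter (hW.preimage hf)
    obtain ⟨U, hUc, hxU, hUsub⟩ :=
      hz.exists_subset_of_mem_open (⟨hxV, hxW⟩ : x ∈ V ∩ f ⁻¹' W) hopen
    refine ⟨U, hUc, hxU, ?_⟩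
    ext y
    simp only [Set.mem_inter_iff, Set.mem_preimage, Set.mem_empty_iff_false, iff_false,
      not_and]
    intro hy hfy
    exact hVW.le_bot ⟨(hUsub hfy).1, (hUsub hy).2⟩
  choose U hUclopen hUmem hUdisj using key
  -- countable subcover
  obtain ⟨T, hTc, hTU⟩ := TopologicalSpace.isOpen_iUnion_countable U
    (fun x => (hUclopen x).2)
  have hTuniv : ⋃ x ∈ T, U x = Set.univ := by
    rw [hTU]; ext y
    simp only [Set.mem_iUnion, Set.mem_univ, iff_true]
    exact ⟨y, hUmem y⟩
  have hTne : T.Nonempty := by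
    by_contra h
    rw [Set.not_nonempty_iff_eq_empty] at h
    have := hTuniv
    rw [h] at this
    simp only [Set.mem_empty_iff_false, Set.iUnion_of_empty, Set.iUnion_empty] at this
    exact (Set.univ_nonempty.ne_empty this.symm)
  obtain ⟨g, hg⟩ := hTc.exists_eq_range hTne
  set u : ℕ → Set X := fun n => U (g n) with hu
  have huclopen : ∀ n, IsClopen (u n) := fun n => hUclopen (g n)
  have hudisj : ∀ n, u n ∩ f ⁻¹' u n = ∅ := fun n => hUdisj (g n)
  have hucover : ∀ x : X, ∃ n, x ∈ u n := by
    intro x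
    have : x ∈ ⋃ y ∈ T, U y := by rw [hTuniv]; trivial
    obtain ⟨y, hyT, hxy⟩ := Set.mem_iUnion₂.1 this
    have : y ∈ Set.range g := by rw [← hg]; exact hyT
    obtain ⟨n, rfl⟩ := this
    exact ⟨n, hxy⟩
  -- the fundamental domain
  set V : ℕ → Set X := fun n => u n ∩ ⋂ m ∈ Finset.range n, (u m ∪ f ⁻¹' u m)ᶜ with hV
  have hVmem : ∀ n x, x ∈ V n ↔ x ∈ u n ∧ ∀ m < n, x ∉ u m ∧ f x ∉ u m := by
    intro n x
    simp only [hV, Set.mem_inter_iff, Set.mem_iInter, Finset.mem_range, Set.mem_compl_iff,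
      Set.mem_union, Set.mem_preimage, not_or]
  have hVclopen : ∀ n, IsClopen (V n) := by
    intro n
    exact (huclopen n).inter (isClopen_biInter_finset fun m _ =>
      ((huclopen m).union ((huclopen m).preimage hf)).compl)
  set A : Set X := ⋃ n, V n with hA
  have hAopen : IsOpen A := isOpen_iUnion fun n => (hVclopen n).isOpen
  -- x ∈ A → f x ∉ A
  have claimA : ∀ x, x ∈ A → f x ∉ A := by
    intro x hx hfx
    obtain ⟨n, hn⟩ := Set.mem_iUnion.1 hx
    obtain ⟨m, hm⟩ := Set.mem_iUnion.1 hfx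
    rw [hVmem] at hn hm
    rcases lt_trichotomy m n with h | h | h
    · exact (hn.2 m h).2 hm.1
    · subst h
      have : x ∈ u m ∩ f ⁻¹' u m := ⟨hn.1, hm.1⟩
      rw [hudisj m] at this; exact this
    · refine (hm.2 n h).2 ?_
      rw [hff x]; exact hn.1
  -- x ∉ A → f x ∈ A
  have claimB : ∀ x, x ∉ A → f x ∈ A := by
    intro x hx
    have hex : ∃ n, x ∈ u n ∨ f x ∈ u n := by
      obtain ⟨n, hn⟩ := hucover x; exact ⟨n, Or.inl hn⟩
    set n := Nat.find hex with hn
    have hmin : ∀ m < n, x ∉ u m ∧ f x ∉ u m := by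
      intro m hmn
      have := Nat.find_min hex hmn
      push_neg at this
      exact this
    rcases Nat.find_spec hex with h | h
    · exfalso
      apply hx
      exact Set.mem_iUnion.2 ⟨n, (hVmem n x).2 ⟨h, hmin⟩⟩
    · refine Set.mem_iUnion.2 ⟨n, (hVmem n (f x)).2 ⟨h, ?_⟩⟩
      intro m hmn
      refine ⟨(hmin m hmn).2, ?_⟩
      rw [hff x]; exact (hmin m hmn).1
  have hAcompl : Aᶜ = f ⁻¹' A := by
    ext x
    simp only [Set.mem_compl_iff, Set.mem_preimage]
    constructor
    · exact claimB x
    · intro h hx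
      exact claimA x hx h
  have hAclopen : IsClopen A := by
    refine ⟨?_, hAopen⟩
    rw [← isOpen_compl_iff, hAcompl]
    exact hAopen.preimage hf
  -- the coloring
  constructor
  · refine ⟨fun x => if x ∈ A then 0 else 1, ?_, ?_⟩
    · apply IsLocallyConstant.continuous
      rw [IsLocallyConstant.iff_isOpen_fiber]
      refine Fin.forall_fin_two.2 ⟨?_, ?_⟩
      · have : (fun x => if x ∈ A then (0 : Fin 2) else 1) ⁻¹' {0} = A := by
          ext x; by_cases hx : x ∈ A <;> simp [hx]
        rw [this]; exact hAclopen.isOpen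
      · have : (fun x => if x ∈ A then (0 : Fin 2) else 1) ⁻¹' {1} = Aᶜ := by
          ext x; by_cases hx : x ∈ A <;> simp [hx]
        rw [this]; exact hAclopen.compl.isOpen
    · rintro x y ⟨hxy, hor⟩
      replace hor : y = f x ∨ x = f y := hor
      have hyfx : y = f x := by
        rcases hor with h | h
        · exact h
        · rw [h, hff]
      subst hyfx
      by_cases hx : x ∈ A
      · have := claimA x hx
        simp [hx, this]
      · have := claimB x hx
        simp [hx, this]
  · rintro ⟨c, _, hc⟩
    obtain ⟨x⟩ := (inferInstance : Nonempty X)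
    exact hc x (f x) ⟨(hfpf x).symm, Or.inl rfl⟩ (Subsingleton.elim _ _)
end

section
/- Let P and Q be closed nowhere dense subsets of the Cantor space 2^ℕ, and let h : P → Q be a homeomorphism with h(x) ≠ x for every x ∈ P. Then there is a homeomorphism h* : 2^ℕ → 2^ℕ extending h such that h*(x) ≠ x for every x ∈ 2^ℕ. -/
open Set Function

noncomputable section

namespace KR

abbrev X := ℕ → Bool

/-- cylinder of length n around x -/
def cyl (x : X) (n : ℕ) : Set X := {y | ∀ i < n, y i = x i}

lemma mem_cyl_self (x : X) (n : ℕ) : x ∈ cyl x n := fun _ _ => rfl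

lemma cyl_eq_iInter (x : X) (n : ℕ) :
    cyl x n = ⋂ i ∈ Finset.range n, (fun y : X => y i) ⁻¹' {x i} := by
  ext y; simp [cyl]

lemma isClopen_cyl (x : X) (n : ℕ) : IsClopen (cyl x n) := by
  rw [cyl_eq_iInter]
  exact isClopen_biInter_finset fun i _ =>
    (isClopen_discrete {x i}).preimage (continuous_apply i)

lemma cyl_mem_nhds (x : X) (n : ℕ) : cyl x n ∈ nhds x :=
  (isClopen_cyl x n).2.mem_nhds (mem_cyl_self x n)

lemma cyl_anti (x : X) {m n : ℕ} (h : m ≤ n) : cyl x n ⊆ cyl x m :=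
  fun y hy i hi => hy i (lt_of_lt_of_le hi h)

lemma cyl_eq_of_mem {x y : X} {n : ℕ} (hy : y ∈ cyl x n) : cyl y n = cyl x n := by
  ext z; constructor <;> intro hz i hi
  · rw [hz i hi, hy i hi]
  · rw [hz i hi, ← hy i hi]

/-- any open set contains a cylinder around each of its points -/
lemma exists_cyl_subset {U : Set X} (hU : IsOpen U) {x : X} (hx : x ∈ U) :
    ∃ n, cyl x n ⊆ U := by
  obtain ⟨I, u, hIu, hsub⟩ := isOpen_pi_iff.mp hU x hx
  rcases I.eq_empty_or_nonempty with rfl | hne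
  · exact ⟨0, fun y _ => hsub (by simp)⟩
  · refine ⟨(I.max' hne) + 1, fun y hy => hsub ?_⟩
    intro i hi
    have : y i = x i := hy i (Nat.lt_succ_of_le (I.le_max' i hi))
    rw [this]; exact (hIu i hi).2

/-- a point in the closure of s has points of s in all its cylinders -/
lemma mem_closure_of_cyl (x : X) (s : Set X) (h : ∀ n, (s ∩ cyl x n).Nonempty) :
    x ∈ closure s := by
  rw [mem_closure_iff_nhds]
  intro t ht
  obtain ⟨n, hn⟩ := exists_cyl_subset (isOpen_interior) (mem_interior_iff_mem_nhds.mpr ht)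
  obtain ⟨y, hys, hyc⟩ := h n
  exact ⟨y, hn hyc |> interior_subset, hys⟩

/-- two distinct points in every cylinder -/
lemma cyl_two_points (x : X) (n : ℕ) :
    ∃ y z, y ∈ cyl x n ∧ z ∈ cyl x n ∧ y ≠ z := by
  refine ⟨fun i => if i < n then x i else true, fun i => if i < n then x i else false,
    fun i hi => if_pos hi, fun i hi => if_pos hi, ?_⟩
  intro hyz
  have := congrFun hyz n
  simp at this

/-- clopen sets are determined by finitely many coordinates -/
lemma clopen_determined {U : Set X} (hU : IsClopen U) :
    ∃ N, ∀ x ∈ U, cyl x N ⊆ U := by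
  -- cover X by cylinders inside U or inside Uᶜ
  have hcov : ∀ x : X, ∃ n, cyl x n ⊆ U ∨ cyl x n ⊆ Uᶜ := by
    intro x
    by_cases hx : x ∈ U
    · obtain ⟨n, hn⟩ := exists_cyl_subset hU.2 hx
      exact ⟨n, Or.inl hn⟩
    · obtain ⟨n, hn⟩ := exists_cyl_subset hU.1.isOpen_compl hx
      exact ⟨n, Or.inr hn⟩
  choose f hf using hcov
  have : (univ : Set X) ⊆ ⋃ x : X, cyl x (f x) :=
    fun x _ => mem_iUnion.mpr ⟨x, mem_cyl_self x (f x)⟩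
  obtain ⟨t, ht⟩ := CompactSpace.isCompact_univ.elim_finite_subcover
    (fun x : X => cyl x (f x)) (fun x => (isClopen_cyl x (f x)).2) this
  refine ⟨(t.image f).sup id, ?_⟩
  intro x hxU y hy
  obtain ⟨z, hzt, hz⟩ := mem_iUnion₂.mp (ht (mem_univ x))
  have hfz : f z ≤ (t.image f).sup id := Finset.le_sup (f := id) (Finset.mem_image_of_mem f hzt)
  have hyz : y ∈ cyl z (f z) := by
    intro i hi
    rw [hy i (lt_of_lt_of_le hi hfz)]; exact hz i hi
  rcases hf z with hsub | hsub
  · exact hsub hyz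
  · exact absurd hxU (hsub hz)

/-- clopen separation of disjoint compact sets -/
lemma clopen_separation {K₀ K₁ : Set X} (h₀ : IsCompact K₀) (h₁ : IsCompact K₁)
    (hd : K₀ ∩ K₁ = ∅) : ∃ D : Set X, IsClopen D ∧ K₀ ⊆ D ∧ K₁ ∩ D = ∅ := by
  have key : ∀ x ∈ K₀, ∃ n, cyl x n ∩ K₁ = ∅ := by
    intro x hx
    by_contra hc
    push_neg at hc
    have hx1 : x ∈ closure K₁ := by
      apply mem_closure_of_cyl
      intro n
      obtain ⟨y, hy1, hy2⟩ := hc n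
      exact ⟨y, hy2, hy1⟩
    rw [h₁.isClosed.closure_eq] at hx1
    have : x ∈ K₀ ∩ K₁ := ⟨hx, hx1⟩
    rw [hd] at this
    exact this
  choose f hf using key
  have hcov : K₀ ⊆ ⋃ x : ↥K₀, cyl x (f x x.2) :=
    fun x hx => mem_iUnion.mpr ⟨⟨x, hx⟩, mem_cyl_self _ _⟩
  obtain ⟨t, ht⟩ := h₀.elim_finite_subcover (fun x : ↥K₀ => cyl x (f x x.2))
    (fun x => (isClopen_cyl _ _).2) hcov
  refine ⟨⋃ x ∈ t, cyl (x : X) (f x x.2), ?_, ht, ?_⟩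
  · exact isClopen_biUnion_finset fun x _ => isClopen_cyl _ _
  · rw [eq_empty_iff_forall_notMem]
    rintro y ⟨hy1, hy2⟩
    obtain ⟨z, _, hz⟩ := mem_iUnion₂.mp hy2
    have : y ∈ cyl (z : X) (f z z.2) ∩ K₁ := ⟨hz, hy1⟩
    rw [hf z z.2] at this
    exact this

/-! ### Partial homeomorphisms between clopen sets -/

open Classical in
/-- a homeomorphism between subsets, packaged as global functions -/
structure CHom (U V : Set X) where
  f : X → X
  g : X → X
  cf : ContinuousOn f U
  cg : ContinuousOn g V
  mf : MapsTo f U V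
  mg : MapsTo g V U
  gf : ∀ x ∈ U, g (f x) = x
  fg : ∀ y ∈ V, f (g y) = y

def CHom.symm {U V : Set X} (e : CHom U V) : CHom V U :=
  ⟨e.g, e.f, e.cg, e.cf, e.mg, e.mf, e.fg, e.gf⟩

def CHom.trans {U V W : Set X} (a : CHom U V) (b : CHom V W) : CHom U W :=
  ⟨b.f ∘ a.f, a.g ∘ b.g, b.cf.comp a.cf a.mf, a.cg.comp b.cg b.mg,
    b.mf.comp a.mf, a.mg.comp b.mg,
    fun x hx => by simp only [comp_apply, b.gf _ (a.mf hx), a.gf _ hx],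
    fun y hy => by simp only [comp_apply, a.fg _ (b.mg hy), b.fg _ hy]⟩

def CHom.congr {U V U' V' : Set X} (e : CHom U V) (hU : U = U') (hV : V = V') :
    CHom U' V' := hU ▸ hV ▸ e

open Classical in
def CHom.glue {A₀ A₁ B₀ B₁ : Set X} (hA₀ : IsClopen A₀) (hA₁ : IsClopen A₁)
    (hB₀ : IsClopen B₀) (hB₁ : IsClopen B₁)
    (hAd : A₀ ∩ A₁ = ∅) (hBd : B₀ ∩ B₁ = ∅)
    (e₀ : CHom A₀ B₀) (e₁ : CHom A₁ B₁) : CHom (A₀ ∪ A₁) (B₀ ∪ B₁) where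
  f := fun x => if x ∈ A₀ then e₀.f x else e₁.f x
  g := fun y => if y ∈ B₀ then e₀.g y else e₁.g y
  cf := by
    intro x hx
    have key : ContinuousAt (fun x => if x ∈ A₀ then e₀.f x else e₁.f x) x := by
      rcases hx with hx | hx
      · refine (e₀.cf.continuousAt (hA₀.2.mem_nhds hx)).congr ?_
        filter_upwards [hA₀.2.mem_nhds hx] with y hy
        exact (if_pos hy).symm
      · refine (e₁.cf.continuousAt (hA₁.2.mem_nhds hx)).congr ?_
        filter_upwards [hA₁.2.mem_nhds hx] with y hy
        have : y ∉ A₀ := fun hy0 => by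
          have : y ∈ A₀ ∩ A₁ := ⟨hy0, hy⟩; rw [hAd] at this; exact this
        exact (if_neg this).symm
    exact key.continuousWithinAt
  cg := by
    intro y hy
    have key : ContinuousAt (fun y => if y ∈ B₀ then e₀.g y else e₁.g y) y := by
      rcases hy with hy | hy
      · refine (e₀.cg.continuousAt (hB₀.2.mem_nhds hy)).congr ?_
        filter_upwards [hB₀.2.mem_nhds hy] with z hz
        exact (if_pos hz).symm
      · refine (e₁.cg.continuousAt (hB₁.2.mem_nhds hy)).congr ?_
        filter_upwards [hB₁.2.mem_nhds hy] with z hz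
        have : z ∉ B₀ := fun hz0 => by
          have : z ∈ B₀ ∩ B₁ := ⟨hz0, hz⟩; rw [hBd] at this; exact this
        exact (if_neg this).symm
    exact key.continuousWithinAt
  mf := by
    intro x hx
    rcases hx with hx | hx
    · simp only [if_pos hx]; exact Or.inl (e₀.mf hx)
    · have hx0 : x ∉ A₀ := fun hx0 => by
        have : x ∈ A₀ ∩ A₁ := ⟨hx0, hx⟩; rw [hAd] at this; exact this
      simp only [if_neg hx0]; exact Or.inr (e₁.mf hx)
  mg := by
    intro y hy
    rcases hy with hy | hy
    · simp only [if_pos hy]; exact Or.inl (e₀.mg hy)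
    · have hy0 : y ∉ B₀ := fun hy0 => by
        have : y ∈ B₀ ∩ B₁ := ⟨hy0, hy⟩; rw [hBd] at this; exact this
      simp only [if_neg hy0]; exact Or.inr (e₁.mg hy)
  gf := by
    intro x hx
    rcases hx with hx | hx
    · simp only [if_pos hx, if_pos (e₀.mf hx)]; exact e₀.gf _ hx
    · have hx0 : x ∉ A₀ := fun hx0 => by
        have : x ∈ A₀ ∩ A₁ := ⟨hx0, hx⟩; rw [hAd] at this; exact this
      have h1 : e₁.f x ∉ B₀ := fun hb => by
        have : e₁.f x ∈ B₀ ∩ B₁ := ⟨hb, e₁.mf hx⟩; rw [hBd] at this; exact this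
      simp only [if_neg hx0, if_neg h1]; exact e₁.gf _ hx
  fg := by
    intro y hy
    rcases hy with hy | hy
    · simp only [if_pos hy, if_pos (e₀.mg hy)]; exact e₀.fg _ hy
    · have hy0 : y ∉ B₀ := fun hy0 => by
        have : y ∈ B₀ ∩ B₁ := ⟨hy0, hy⟩; rw [hBd] at this; exact this
      have h1 : e₁.g y ∉ A₀ := fun ha => by
        have : e₁.g y ∈ A₀ ∩ A₁ := ⟨ha, e₁.mg hy⟩; rw [hAd] at this; exact this
      simp only [if_neg hy0, if_neg h1]; exact e₁.fg _ hy

/-! ### cons and tail -/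

def bcons (b : Bool) (x : X) : X := fun n => match n with
  | 0 => b
  | m + 1 => x m

def btail (x : X) : X := fun n => x (n + 1)

lemma continuous_bcons (b : Bool) : Continuous (bcons b) := by
  apply continuous_pi
  intro n
  match n with
  | 0 => exact continuous_const
  | m + 1 => exact continuous_apply m

lemma continuous_btail : Continuous btail :=
  continuous_pi fun n => continuous_apply (n + 1)

lemma btail_bcons (b : Bool) (x : X) : btail (bcons b x) = x := rfl

lemma bcons_btail {b : Bool} {y : X} (hy : y 0 = b) : bcons b (btail y) = y := by
  funext n
  match n with
  | 0 => exact hy.symm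
  | m + 1 => rfl

/-- partial homeo given by bcons -/
def chomBcons (b : Bool) (U : Set X) (hU : U ⊆ {x | x 0 = b}) :
    CHom (bcons b ⁻¹' U) U where
  f := bcons b
  g := btail
  cf := (continuous_bcons b).continuousOn
  cg := continuous_btail.continuousOn
  mf := fun x hx => hx
  mg := fun y hy => by
    show bcons b (btail y) ∈ U
    rw [bcons_btail (hU hy)]; exact hy
  gf := fun x _ => btail_bcons b x
  fg := fun y hy => bcons_btail (hU hy)

lemma isClopen_firstcoord (b : Bool) : IsClopen {x : X | x 0 = b} :=
  (isClopen_discrete {b}).preimage (continuous_apply 0)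

lemma firstcoord_union : {x : X | x 0 = false} ∪ {x : X | x 0 = true} = univ := by
  ext x; simp [Bool.eq_false_or_eq_true (x 0)]

lemma firstcoord_disj : {x : X | x 0 = false} ∩ {x : X | x 0 = true} = ∅ := by
  ext x; simp

lemma bcons_image_eq (b : Bool) (U : Set X) :
    bcons b '' (bcons b ⁻¹' U) = U ∩ {x | x 0 = b} := by
  ext y
  constructor
  · rintro ⟨x, hx, rfl⟩; exact ⟨hx, rfl⟩
  · rintro ⟨hy, hy0⟩
    exact ⟨btail y, by rwa [mem_preimage, bcons_btail hy0], bcons_btail hy0⟩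

lemma nonempty_chom_univ : ∀ (N : ℕ) (U : Set X), IsClopen U → U.Nonempty →
    (∀ x ∈ U, cyl x N ⊆ U) → Nonempty (CHom U univ) := by
  intro N
  induction N with
  | zero =>
    intro U hU hUne hdet
    obtain ⟨x, hx⟩ := hUne
    have : U = univ := eq_univ_of_univ_subset (by
      have := hdet x hx
      intro y _
      exact this (fun i hi => absurd hi (Nat.not_lt_zero i)))
    exact ⟨(⟨id, id, continuous_id.continuousOn, continuous_id.continuousOn,
      fun a ha => by rwa [this] at ha, fun a ha => by rwa [← this] at ha,
      fun _ _ => rfl, fun _ _ => rfl⟩ : CHom U univ)⟩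
  | succ N ih =>
    intro U hU hUne hdet
    set Uf := bcons false ⁻¹' U with hUfdef
    set Ut := bcons true ⁻¹' U with hUtdef
    have hclopen : ∀ b, IsClopen (bcons b ⁻¹' U) := fun b => hU.preimage (continuous_bcons b)
    have hdet' : ∀ b, ∀ y ∈ bcons b ⁻¹' U, cyl y N ⊆ bcons b ⁻¹' U := by
      intro b y hy z hz
      show bcons b z ∈ U
      apply hdet (bcons b y) hy
      intro i hi
      match i with
      | 0 => rfl
      | m + 1 => exact hz m (by omega)
    have hUsplit : (U ∩ {x | x 0 = false}) ∪ (U ∩ {x | x 0 = true}) = U := by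
      rw [← inter_union_distrib_left, firstcoord_union, inter_univ]
    have hsub : ∀ b, U ∩ {x | x 0 = b} ⊆ {x : X | x 0 = b} := fun b => inter_subset_right
    -- CHom from (bcons b ⁻¹' U) to U ∩ {x0 = b}
    have hpre : ∀ b, bcons b ⁻¹' (U ∩ {x | x 0 = b}) = bcons b ⁻¹' U := by
      intro b; ext x; simp [mem_preimage, bcons]
    have cb : ∀ b, CHom (bcons b ⁻¹' U) (U ∩ {x | x 0 = b}) := fun b =>
      (chomBcons b (U ∩ {x | x 0 = b}) (hsub b)).congr (hpre b) rfl
    have hne_iff : ∀ b, (bcons b ⁻¹' U).Nonempty ↔ (U ∩ {x | x 0 = b}).Nonempty := by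
      intro b
      constructor
      · rintro ⟨x, hx⟩; exact ⟨bcons b x, hx, rfl⟩
      · rintro ⟨y, hy, hy0⟩; exact ⟨btail y, by rwa [mem_preimage, bcons_btail hy0]⟩
    rcases eq_empty_or_nonempty (U ∩ {x | x 0 = false}) with hf | hf
    · -- everything is in the true part
      have htne : (U ∩ {x | x 0 = true}).Nonempty := by
        rw [← hUsplit] at hUne
        rcases hUne with ⟨x, hx | hx⟩
        · rw [hf] at hx; exact absurd hx (notMem_empty x)
        · exact ⟨x, hx⟩
      have hUeq : U ∩ {x | x 0 = true} = U := by
        conv_rhs => rw [← hUsplit]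
        rw [hf, empty_union]
      obtain ⟨e⟩ := ih (bcons true ⁻¹' U) (hclopen true) ((hne_iff true).mpr htne) (hdet' true)
      exact ⟨((cb true).congr rfl hUeq).symm.trans e⟩
    · rcases eq_empty_or_nonempty (U ∩ {x | x 0 = true}) with ht | ht
      · have hUeq : U ∩ {x | x 0 = false} = U := by
          conv_rhs => rw [← hUsplit]
          rw [ht, union_empty]
        obtain ⟨e⟩ := ih (bcons false ⁻¹' U) (hclopen false) ((hne_iff false).mpr hf) (hdet' false)
        exact ⟨((cb false).congr rfl hUeq).symm.trans e⟩
      · -- both halves nonempty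
        obtain ⟨ef⟩ := ih (bcons false ⁻¹' U) (hclopen false) ((hne_iff false).mpr hf) (hdet' false)
        obtain ⟨et⟩ := ih (bcons true ⁻¹' U) (hclopen true) ((hne_iff true).mpr ht) (hdet' true)
        have hb : ∀ b, CHom univ {x : X | x 0 = b} := by
          intro b
          have : bcons b ⁻¹' {x : X | x 0 = b} = univ := by
            ext x; simp [mem_preimage, bcons]
          exact (chomBcons b {x : X | x 0 = b} (fun _ hx => hx)).congr this rfl
        have pf : CHom (U ∩ {x | x 0 = false}) {x : X | x 0 = false} :=
          (cb false).symm.trans (ef.trans (hb false))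
        have pt : CHom (U ∩ {x | x 0 = true}) {x : X | x 0 = true} :=
          (cb true).symm.trans (et.trans (hb true))
        have hd : (U ∩ {x | x 0 = false}) ∩ (U ∩ {x | x 0 = true}) = ∅ := by
          ext x; simp only [mem_inter_iff, mem_setOf_eq, mem_empty_iff_false, iff_false]
          rintro ⟨⟨-, h1⟩, ⟨-, h2⟩⟩; rw [h1] at h2; exact Bool.false_ne_true h2
        have glued := CHom.glue (hU.inter (isClopen_firstcoord false))
          (hU.inter (isClopen_firstcoord true)) (isClopen_firstcoord false)
          (isClopen_firstcoord true) hd firstcoord_disj pf pt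
        exact ⟨glued.congr hUsplit firstcoord_union⟩

/-- Any two nonempty clopen subsets of Cantor space admit a CHom. -/
lemma nonempty_chom {U V : Set X} (hU : IsClopen U) (hV : IsClopen V)
    (hUne : U.Nonempty) (hVne : V.Nonempty) : Nonempty (CHom U V) := by
  obtain ⟨NU, hNU⟩ := clopen_determined hU
  obtain ⟨NV, hNV⟩ := clopen_determined hV
  obtain ⟨eU⟩ := nonempty_chom_univ NU U hU hUne hNU
  obtain ⟨eV⟩ := nonempty_chom_univ NV V hV hVne hNV
  exact ⟨eU.trans eV.symm⟩


/-! ### splitting and carving -/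

/-- every nonempty clopen set splits into two nonempty clopen pieces -/
lemma clopen_split {C : Set X} (hC : IsClopen C) (hCne : C.Nonempty) :
    ∃ C₀ C₁ : Set X, IsClopen C₀ ∧ IsClopen C₁ ∧ C₀.Nonempty ∧ C₁.Nonempty ∧
      C₀ ∪ C₁ = C ∧ C₀ ∩ C₁ = ∅ := by
  obtain ⟨x, hx⟩ := hCne
  have h2 : ∃ y ∈ C, y ≠ x := by
    by_contra hc
    push_neg at hc
    obtain ⟨n, hn⟩ := exists_cyl_subset hC.2 hx
    obtain ⟨y, z, hy, hz, hyz⟩ := cyl_two_points x n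
    apply hyz; rw [hc y (hn hy), hc z (hn hz)]
  obtain ⟨y, hyC, hyx⟩ := h2
  have hex : ∃ M, y M ≠ x M := by
    by_contra hc
    push_neg at hc
    exact hyx (funext hc)
  obtain ⟨M, hM⟩ := hex
  refine ⟨C ∩ cyl x (M + 1), C ∩ (cyl x (M + 1))ᶜ, hC.inter (isClopen_cyl x (M + 1)),
    hC.inter (isClopen_cyl x (M + 1)).compl, ⟨x, hx, mem_cyl_self x _⟩,
    ⟨y, hyC, fun hy => hM (hy M (Nat.lt_succ_self M))⟩, ?_, ?_⟩
  · rw [← inter_union_distrib_left, union_compl_self, inter_univ]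
  · ext z; simp only [mem_inter_iff, mem_compl_iff, mem_empty_iff_false, iff_false]
    tauto

/-- carve a nonempty clopen subset of a nonempty open set avoiding a closed nowhere dense set -/
lemma clopen_carve {O S : Set X} (hO : IsOpen O) (hOne : O.Nonempty)
    (hSc : IsClosed S) (hS : IsNowhereDense S) :
    ∃ W : Set X, IsClopen W ∧ W.Nonempty ∧ W ⊆ O ∧ W ∩ S = ∅ := by
  have hdiff : (O \ S).Nonempty := by
    rw [diff_nonempty]
    intro hsub
    have hOsub : O ⊆ interior (closure S) :=
      fun x hx => mem_interior_iff_mem_nhds.mpr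
        (Filter.mem_of_superset (hO.mem_nhds hx) (hsub.trans subset_closure))
    rw [hS] at hOsub
    obtain ⟨x, hx⟩ := hOne
    exact hOsub hx
  obtain ⟨x, hx⟩ := hdiff
  obtain ⟨n, hn⟩ := exists_cyl_subset (hO.sdiff hSc) hx
  refine ⟨cyl x n, isClopen_cyl x n, ⟨x, mem_cyl_self x n⟩,
    fun y hy => (hn hy).1, ?_⟩
  ext y; simp only [mem_inter_iff, mem_empty_iff_false, iff_false]
  rintro ⟨hy1, hy2⟩
  exact (hn hy1).2 hy2

/-! ### fixed point free partial homeomorphisms -/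

open Classical in
lemma exists_fpf {U V : Set X} (hU : IsClopen U) (hV : IsClopen V)
    (hne : U = ∅ ↔ V = ∅) :
    ∃ g g' : X → X, ContinuousOn g U ∧ MapsTo g U V ∧ MapsTo g' V U ∧
      (∀ x ∈ U, g' (g x) = x) ∧ (∀ y ∈ V, g (g' y) = y) ∧ (∀ x ∈ U, g x ≠ x) := by
  rcases eq_empty_or_nonempty U with hUe | hUne
  · have hVe : V = ∅ := hne.mp hUe
    subst hUe; subst hVe
    exact ⟨id, id, continuous_id.continuousOn, mapsTo_empty _ _, mapsTo_empty _ _,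
      fun x hx => absurd hx (notMem_empty x), fun y hy => absurd hy (notMem_empty y),
      fun x hx => absurd hx (notMem_empty x)⟩
  · have hVne : V.Nonempty := by
      rw [nonempty_iff_ne_empty]
      intro hVe
      rw [nonempty_iff_ne_empty] at hUne
      exact hUne (hne.mpr hVe)
    by_cases hUV : U ∩ V = ∅
    · obtain ⟨e⟩ := nonempty_chom hU hV hUne hVne
      refine ⟨e.f, e.g, e.cf, e.mf, e.mg, e.gf, e.fg, ?_⟩
      intro x hx hfx
      have hmem : x ∈ U ∩ V := ⟨hx, hfx ▸ e.mf hx⟩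
      rw [hUV] at hmem; exact hmem
    · have hCne : (U ∩ V).Nonempty := nonempty_iff_ne_empty.mpr hUV
      have hCcl : IsClopen (U ∩ V) := hU.inter hV
      obtain ⟨C₀, C₁, hC₀, hC₁, hC₀ne, hC₁ne, hCu, hCd⟩ := clopen_split hCcl hCne
      have hC₀U : C₀ ⊆ U := fun x hx => ((hCu ▸ (Or.inl hx : x ∈ C₀ ∪ C₁)) : x ∈ U ∩ V).1
      have hC₁U : C₁ ⊆ U := fun x hx => ((hCu ▸ (Or.inr hx : x ∈ C₀ ∪ C₁)) : x ∈ U ∩ V).1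
      have hC₀V : C₀ ⊆ V := fun x hx => ((hCu ▸ (Or.inl hx : x ∈ C₀ ∪ C₁)) : x ∈ U ∩ V).2
      have hC₁V : C₁ ⊆ V := fun x hx => ((hCu ▸ (Or.inr hx : x ∈ C₀ ∪ C₁)) : x ∈ U ∩ V).2
      have hU' : IsClopen (U ∩ C₀ᶜ) := hU.inter hC₀.compl
      have hV' : IsClopen (V ∩ C₁ᶜ) := hV.inter hC₁.compl
      have hU'ne : (U ∩ C₀ᶜ).Nonempty := by
        obtain ⟨y, hy⟩ := hC₁ne
        refine ⟨y, hC₁U hy, fun hy0 => ?_⟩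
        have : y ∈ C₀ ∩ C₁ := ⟨hy0, hy⟩
        rw [hCd] at this; exact this
      have hV'ne : (V ∩ C₁ᶜ).Nonempty := by
        obtain ⟨y, hy⟩ := hC₀ne
        refine ⟨y, hC₀V hy, fun hy0 => ?_⟩
        have : y ∈ C₀ ∩ C₁ := ⟨hy, hy0⟩
        rw [hCd] at this; exact this
      obtain ⟨e₀⟩ := nonempty_chom hC₀ hC₁ hC₀ne hC₁ne
      obtain ⟨e₁⟩ := nonempty_chom hU' hV' hU'ne hV'ne
      have hAd : C₀ ∩ (U ∩ C₀ᶜ) = ∅ := by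
        ext x; simp only [mem_inter_iff, mem_compl_iff, mem_empty_iff_false, iff_false]
        tauto
      have hBd : C₁ ∩ (V ∩ C₁ᶜ) = ∅ := by
        ext x; simp only [mem_inter_iff, mem_compl_iff, mem_empty_iff_false, iff_false]
        tauto
      have hAu : C₀ ∪ (U ∩ C₀ᶜ) = U := by
        ext x
        constructor
        · rintro (hx | hx)
          · exact hC₀U hx
          · exact hx.1
        · intro hx
          by_cases hx0 : x ∈ C₀
          · exact Or.inl hx0
          · exact Or.inr ⟨hx, hx0⟩
      have hBu : C₁ ∪ (V ∩ C₁ᶜ) = V := by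
        ext x
        constructor
        · rintro (hx | hx)
          · exact hC₁V hx
          · exact hx.1
        · intro hx
          by_cases hx0 : x ∈ C₁
          · exact Or.inl hx0
          · exact Or.inr ⟨hx, hx0⟩
      set G := CHom.glue hC₀ hU' hC₁ hV' hAd hBd e₀ e₁ with hGdef
      rw [← hAu, ← hBu]
      refine ⟨G.f, G.g, G.cf, G.mf, G.mg, G.gf, G.fg, ?_⟩
      intro x hx hfx
      have hGfx : G.f x = (if x ∈ C₀ then e₀.f x else e₁.f x) := rfl
      rcases hx with hx | hx
      · rw [hGfx, if_pos hx] at hfx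
        have : x ∈ C₀ ∩ C₁ := ⟨hx, hfx ▸ e₀.mf hx⟩
        rw [hCd] at this; exact this
      · have hx0 : x ∉ C₀ := fun h0 => by
          have : x ∈ C₀ ∩ (U ∩ C₀ᶜ) := ⟨h0, hx⟩
          rw [hAd] at this; exact this
        rw [hGfx, if_neg hx0] at hfx
        have hxV' : x ∈ V ∩ C₁ᶜ := hfx ▸ e₁.mf hx
        have hxC : x ∈ C₀ ∪ C₁ := hCu.symm ▸ (⟨hx.1, hxV'.1⟩ : x ∈ U ∩ V)
        rcases hxC with h0 | h1
        · exact hx0 h0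
        · exact hxV'.2 h1


/-! ### images under a partial homeomorphism between closed subsets -/

/-- image of the trace of `A` on `R` under `e : R ≃ₜ S`, as a subset of `X` -/
def img (R S : Set X) (e : ↥R ≃ₜ ↥S) (A : Set X) : Set X :=
  Subtype.val '' (⇑e '' (Subtype.val ⁻¹' A))

lemma mem_img {R S : Set X} {e : ↥R ≃ₜ ↥S} {A : Set X} {y : X} :
    y ∈ img R S e A ↔ ∃ p : ↥R, (p : X) ∈ A ∧ ((e p : X)) = y := by
  simp only [img, mem_image, mem_preimage]
  constructor
  · rintro ⟨q, ⟨p, hp, rfl⟩, rfl⟩; exact ⟨p, hp, rfl⟩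
  · rintro ⟨p, hp, rfl⟩; exact ⟨e p, ⟨p, hp, rfl⟩, rfl⟩

lemma img_subset (R S : Set X) (e : ↥R ≃ₜ ↥S) (A : Set X) : img R S e A ⊆ S := by
  rintro y hy
  rw [mem_img] at hy
  obtain ⟨p, -, rfl⟩ := hy
  exact (e p).2

lemma img_empty (R S : Set X) (e : ↥R ≃ₜ ↥S) : img R S e ∅ = ∅ := by
  ext y; rw [mem_img]; simp

lemma img_empty_iff {R S : Set X} {e : ↥R ≃ₜ ↥S} {A : Set X} :
    img R S e A = ∅ ↔ R ∩ A = ∅ := by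
  constructor
  · intro hemp
    ext x
    simp only [mem_inter_iff, mem_empty_iff_false, iff_false]
    rintro ⟨hxR, hxA⟩
    have : ((e ⟨x, hxR⟩ : X)) ∈ img R S e A := mem_img.mpr ⟨⟨x, hxR⟩, hxA, rfl⟩
    rw [hemp] at this; exact this
  · intro hemp
    ext y
    simp only [mem_empty_iff_false, iff_false, mem_img]
    rintro ⟨p, hp, rfl⟩
    have : (p : X) ∈ R ∩ A := ⟨p.2, hp⟩
    rw [hemp] at this; exact this

lemma img_union (R S : Set X) (e : ↥R ≃ₜ ↥S) (A₀ A₁ : Set X) :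
    img R S e (A₀ ∪ A₁) = img R S e A₀ ∪ img R S e A₁ := by
  ext y
  simp only [mem_img, mem_union]
  constructor
  · rintro ⟨p, hp | hp, rfl⟩
    · exact Or.inl ⟨p, hp, rfl⟩
    · exact Or.inr ⟨p, hp, rfl⟩
  · rintro (⟨p, hp, rfl⟩ | ⟨p, hp, rfl⟩)
    · exact ⟨p, Or.inl hp, rfl⟩
    · exact ⟨p, Or.inr hp, rfl⟩

lemma img_disj {R S : Set X} (e : ↥R ≃ₜ ↥S) {A₀ A₁ : Set X} (hd : A₀ ∩ A₁ = ∅) :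
    img R S e A₀ ∩ img R S e A₁ = ∅ := by
  ext y
  simp only [mem_inter_iff, mem_empty_iff_false, iff_false, mem_img]
  rintro ⟨⟨p, hp, hp2⟩, ⟨p', hp', hpp'⟩⟩
  have hpe : p' = p := e.injective (Subtype.ext (hpp'.trans hp2.symm))
  rw [hpe] at hp'
  have : (p : X) ∈ A₀ ∩ A₁ := ⟨hp, hp'⟩
  rw [hd] at this; exact this

lemma img_compact {R S : Set X} (hR : IsClosed R) (e : ↥R ≃ₜ ↥S) {A : Set X}
    (hA : IsClosed A) : IsCompact (img R S e A) := by
  have : CompactSpace ↥R := isCompact_iff_compactSpace.mp hR.isCompact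
  have h1 : IsCompact (Subtype.val ⁻¹' A : Set ↥R) :=
    (hA.preimage continuous_subtype_val).isCompact
  exact ((h1.image e.continuous).image continuous_subtype_val)

lemma img_flip {R S : Set X} (e : ↥R ≃ₜ ↥S) {A B : Set X}
    (him : img R S e A = S ∩ B) : img S R e.symm B = R ∩ A := by
  ext x
  rw [mem_img]
  constructor
  · rintro ⟨q, hq, rfl⟩
    refine ⟨(e.symm q).2, ?_⟩
    have hmem : (q : X) ∈ S ∩ B := ⟨q.2, hq⟩
    rw [← him, mem_img] at hmem
    obtain ⟨p, hp, hpq⟩ := hmem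
    have : e p = q := Subtype.ext hpq
    rw [← this, e.symm_apply_apply]
    exact hp
  · rintro ⟨hxR, hxA⟩
    refine ⟨e ⟨x, hxR⟩, ?_, by rw [e.symm_apply_apply]⟩
    have : ((e ⟨x, hxR⟩ : X)) ∈ S ∩ B := him ▸ mem_img.mpr ⟨⟨x, hxR⟩, hxA, rfl⟩
    exact this.2

/-- the key one-sided refinement step -/
lemma exists_Bside {R S : Set X} (hR : IsClosed R) (hSnd : IsNowhereDense S)
    (hScl : IsClosed S) (e : ↥R ≃ₜ ↥S) {A B A₀ A₁ : Set X}
    (hB : IsClopen B) (him : img R S e A = S ∩ B) (hact : R ∩ A ≠ ∅)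
    (hA0 : IsClopen A₀) (hA1 : IsClopen A₁) (hAu : A₀ ∪ A₁ = A) (hAd : A₀ ∩ A₁ = ∅) :
    ∃ B₀ B₁ : Set X, IsClopen B₀ ∧ IsClopen B₁ ∧ B₀ ∪ B₁ = B ∧ B₀ ∩ B₁ = ∅ ∧
      img R S e A₀ = S ∩ B₀ ∧ img R S e A₁ = S ∩ B₁ ∧
      (A₀ = ∅ ↔ B₀ = ∅) ∧ (A₁ = ∅ ↔ B₁ = ∅) := by
  have hKu : img R S e A₀ ∪ img R S e A₁ = S ∩ B := by rw [← img_union, hAu, him]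
  have hKd : img R S e A₀ ∩ img R S e A₁ = ∅ := img_disj e hAd
  have hK₀S : img R S e A₀ ⊆ S := img_subset _ _ _ _
  have hK₁S : img R S e A₁ ⊆ S := img_subset _ _ _ _
  have hBne : B.Nonempty := by
    rw [nonempty_iff_ne_empty]
    intro hBe
    subst hBe
    rw [inter_empty] at him
    exact hact (img_empty_iff.mp him)
  rcases eq_empty_or_nonempty A₀ with hA₀e | hA₀ne
  · -- A₀ empty
    have hA1A : A₁ = A := by rw [← hAu, hA₀e, empty_union]
    refine ⟨∅, B, isClopen_empty, hB, empty_union B, empty_inter B, ?_, ?_, ?_, ?_⟩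
    · rw [hA₀e, img_empty, inter_empty]
    · rw [hA1A, him]
    · simp [hA₀e]
    · constructor
      · intro hA1e
        exfalso
        apply hact
        rw [← hA1A, hA1e, inter_empty]
      · intro hBe; exact absurd hBe (nonempty_iff_ne_empty.mp hBne)
  · rcases eq_empty_or_nonempty A₁ with hA₁e | hA₁ne
    · have hA0A : A₀ = A := by rw [← hAu, hA₁e, union_empty]
      refine ⟨B, ∅, hB, isClopen_empty, union_empty B, inter_empty B, ?_, ?_, ?_, ?_⟩
      · rw [hA0A, him]
      · rw [hA₁e, img_empty, inter_empty]
      · constructor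
        · intro hA0e
          exact absurd (by rw [← hA0A, hA0e, inter_empty] : R ∩ A = ∅) hact
        · intro hBe; exact absurd hBe (nonempty_iff_ne_empty.mp hBne)
      · simp [hA₁e]
    · -- both A's nonempty
      rcases eq_empty_or_nonempty (img R S e A₀) with hK₀e | hK₀ne
      · -- carve a clopen piece of B avoiding S for the A₀ side
        obtain ⟨W, hW, hWne, hWB, hWS⟩ := clopen_carve hB.2 hBne hScl hSnd
        have hK₁eq : img R S e A₁ = S ∩ B := by rw [← hKu, hK₀e, empty_union]
        have hK₁ne : (img R S e A₁).Nonempty := by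
          rw [nonempty_iff_ne_empty]
          intro hh
          have h1 : R ∩ A₁ = ∅ := img_empty_iff.mp hh
          have h0 : R ∩ A₀ = ∅ := img_empty_iff.mp hK₀e
          apply hact
          rw [← hAu, inter_union_distrib_left, h0, h1, union_empty]
        refine ⟨W, B ∩ Wᶜ, hW, hB.inter hW.compl, ?_, ?_, ?_, ?_, ?_, ?_⟩
        · ext x
          constructor
          · rintro (hx | hx)
            · exact hWB hx
            · exact hx.1
          · intro hx
            by_cases hxW : x ∈ W
            · exact Or.inl hxW
            · exact Or.inr ⟨hx, hxW⟩
        · ext x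
          simp only [mem_inter_iff, mem_compl_iff, mem_empty_iff_false, iff_false]
          tauto
        · rw [hK₀e]
          ext x
          simp only [mem_inter_iff, mem_empty_iff_false, false_iff]
          intro hx
          have : x ∈ W ∩ S := ⟨hx.2, hx.1⟩
          rw [hWS] at this; exact this
        · have : S ∩ (B ∩ Wᶜ) = (S ∩ B) ∩ Wᶜ := by rw [inter_assoc]
          rw [this, ← hK₁eq]
          ext x
          simp only [mem_inter_iff, mem_compl_iff]
          constructor
          · intro hx
            refine ⟨hx, fun hxW => ?_⟩
            have h1 : x ∈ W ∩ S := ⟨hxW, hK₁S hx⟩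
            rw [hWS] at h1; exact h1
          · tauto
        · constructor
          · intro hh; exact absurd hh (nonempty_iff_ne_empty.mp hA₀ne)
          · intro hh; exact absurd hh (nonempty_iff_ne_empty.mp hWne)
        · constructor
          · intro hh; exact absurd hh (nonempty_iff_ne_empty.mp hA₁ne)
          · intro hh
            exfalso
            obtain ⟨y, hy⟩ := hK₁ne
            have hyB : y ∈ S ∩ B := hK₁eq ▸ hy
            have hyW : y ∉ W := fun hyW => by
              have : y ∈ W ∩ S := ⟨hyW, hyB.1⟩
              rw [hWS] at this; exact this
            have : y ∈ B ∩ Wᶜ := ⟨hyB.2, hyW⟩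
            rw [hh] at this; exact this
      · rcases eq_empty_or_nonempty (img R S e A₁) with hK₁e | hK₁ne
        · -- symmetric: carve for the A₁ side
          obtain ⟨W, hW, hWne, hWB, hWS⟩ := clopen_carve hB.2 hBne hScl hSnd
          have hK₀eq : img R S e A₀ = S ∩ B := by rw [← hKu, hK₁e, union_empty]
          refine ⟨B ∩ Wᶜ, W, hB.inter hW.compl, hW, ?_, ?_, ?_, ?_, ?_, ?_⟩
          · ext x
            constructor
            · rintro (hx | hx)
              · exact hx.1
              · exact hWB hx
            · intro hx
              by_cases hxW : x ∈ W
              · exact Or.inr hxW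
              · exact Or.inl ⟨hx, hxW⟩
          · ext x
            simp only [mem_inter_iff, mem_compl_iff, mem_empty_iff_false, iff_false]
            tauto
          · have h2 : S ∩ (B ∩ Wᶜ) = (S ∩ B) ∩ Wᶜ := by rw [inter_assoc]
            rw [h2, ← hK₀eq]
            ext x
            simp only [mem_inter_iff, mem_compl_iff]
            constructor
            · intro hx
              refine ⟨hx, fun hxW => ?_⟩
              have h1 : x ∈ W ∩ S := ⟨hxW, hK₀S hx⟩
              rw [hWS] at h1; exact h1
            · tauto
          · rw [hK₁e]
            ext x
            simp only [mem_inter_iff, mem_empty_iff_false, false_iff]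
            intro hx
            have : x ∈ W ∩ S := ⟨hx.2, hx.1⟩
            rw [hWS] at this; exact this
          · constructor
            · intro hh; exact absurd hh (nonempty_iff_ne_empty.mp hA₀ne)
            · intro hh
              exfalso
              obtain ⟨y, hy⟩ := hK₀ne
              have hyB : y ∈ S ∩ B := hK₀eq ▸ hy
              have hyW : y ∉ W := fun hyW => by
                have : y ∈ W ∩ S := ⟨hyW, hyB.1⟩
                rw [hWS] at this; exact this
              have : y ∈ B ∩ Wᶜ := ⟨hyB.2, hyW⟩
              rw [hh] at this; exact this
          · constructor
            · intro hh; exact absurd hh (nonempty_iff_ne_empty.mp hA₁ne)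
            · intro hh; exact absurd hh (nonempty_iff_ne_empty.mp hWne)
        · -- both K's nonempty : separate
          obtain ⟨D, hD, hK₀D, hK₁D⟩ := clopen_separation
            (img_compact hR e hA0.1) (img_compact hR e hA1.1) hKd
          refine ⟨B ∩ D, B ∩ Dᶜ, hB.inter hD, hB.inter hD.compl, ?_, ?_, ?_, ?_, ?_, ?_⟩
          · rw [← inter_union_distrib_left, union_compl_self, inter_univ]
          · ext x
            simp only [mem_inter_iff, mem_compl_iff, mem_empty_iff_false, iff_false]
            tauto
          · have h2 : S ∩ (B ∩ D) = (S ∩ B) ∩ D := by rw [inter_assoc]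
            rw [h2, ← hKu]
            ext x
            simp only [mem_inter_iff, mem_union]
            constructor
            · intro hx
              exact ⟨Or.inl hx, hK₀D hx⟩
            · rintro ⟨hx | hx, hxD⟩
              · exact hx
              · exfalso
                have : x ∈ (img R S e A₁) ∩ D := ⟨hx, hxD⟩
                rw [hK₁D] at this; exact this
          · have h2 : S ∩ (B ∩ Dᶜ) = (S ∩ B) ∩ Dᶜ := by rw [inter_assoc]
            rw [h2, ← hKu]
            ext x
            simp only [mem_inter_iff, mem_union, mem_compl_iff]
            constructor
            · intro hx
              refine ⟨Or.inr hx, fun hxD => ?_⟩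
              have : x ∈ (img R S e A₁) ∩ D := ⟨hx, hxD⟩
              rw [hK₁D] at this; exact this
            · rintro ⟨hx | hx, hxD⟩
              · exact absurd (hK₀D hx) hxD
              · exact hx
          · constructor
            · intro hh; exact absurd hh (nonempty_iff_ne_empty.mp hA₀ne)
            · intro hh
              exfalso
              obtain ⟨y, hy⟩ := hK₀ne
              have : y ∈ B ∩ D := ⟨(hKu.symm ▸ Or.inl hy : y ∈ S ∩ B).2, hK₀D hy⟩
              rw [hh] at this; exact this
          · constructor
            · intro hh; exact absurd hh (nonempty_iff_ne_empty.mp hA₁ne)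
            · intro hh
              exfalso
              obtain ⟨y, hy⟩ := hK₁ne
              have hyD : y ∉ D := fun hyD => by
                have : y ∈ (img R S e A₁) ∩ D := ⟨hy, hyD⟩
                rw [hK₁D] at this; exact this
              have : y ∈ B ∩ Dᶜ := ⟨(hKu.symm ▸ Or.inr hy : y ∈ S ∩ B).2, hyD⟩
              rw [hh] at this; exact this

lemma img_univ (R S : Set X) (e : ↥R ≃ₜ ↥S) : img R S e univ = S := by
  ext y
  rw [mem_img]
  constructor
  · rintro ⟨p, -, rfl⟩; exact (e p).2
  · intro hy; exact ⟨e.symm ⟨y, hy⟩, mem_univ _, by rw [e.apply_symm_apply]⟩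

/-! ### the Knaster–Reichbach tree construction -/

attribute [local instance 10] Classical.propDecidable

structure Setup : Type where
  P : Set X
  Q : Set X
  e : ↥P ≃ₜ ↥Q
  Pc : IsClosed P
  Qc : IsClosed Q
  Pnd : IsNowhereDense P
  Qnd : IsNowhereDense Q
  fpf : ∀ p : ↥P, ((e p : X)) ≠ ↑p

variable (σ : Setup)

def Good (A B : Set X) : Prop :=
  IsClopen A ∧ IsClopen B ∧ img σ.P σ.Q σ.e A = σ.Q ∩ B ∧ (A = ∅ ↔ B = ∅)

def ChildSpec (d : ℕ) (A B : Set X) (c : (Set X × Set X) × (Set X × Set X)) : Prop :=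
  Good σ c.1.1 c.1.2 ∧ Good σ c.2.1 c.2.2 ∧
  c.1.1 ∪ c.2.1 = A ∧ c.1.1 ∩ c.2.1 = ∅ ∧ c.1.2 ∪ c.2.2 = B ∧ c.1.2 ∩ c.2.2 = ∅ ∧
  (σ.P ∩ A = ∅ → c = ((A, B), (∅, ∅))) ∧
  (σ.P ∩ A ≠ ∅ → d % 2 = 0 →
    c.1.1 = A ∩ {x | x (d / 2) = false} ∧ c.2.1 = A ∩ {x | x (d / 2) = true}) ∧
  (σ.P ∩ A ≠ ∅ → d % 2 = 1 →
    c.1.2 = B ∩ {x | x (d / 2) = false} ∧ c.2.2 = B ∩ {x | x (d / 2) = true})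

lemma good_empty : Good σ ∅ ∅ :=
  ⟨isClopen_empty, isClopen_empty, by rw [img_empty, inter_empty], Iff.rfl⟩

lemma good_univ : Good σ univ univ :=
  ⟨isClopen_univ, isClopen_univ, by rw [img_univ, inter_univ], Iff.rfl⟩

lemma exists_children (d : ℕ) (A B : Set X) (hg : Good σ A B) :
    ∃ c, ChildSpec σ d A B c := by
  obtain ⟨hAcl, hBcl, him, hiff⟩ := hg
  by_cases hact : σ.P ∩ A = ∅
  · refine ⟨((A, B), (∅, ∅)), ⟨hAcl, hBcl, him, hiff⟩, good_empty σ, ?_, ?_, ?_, ?_,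
      fun _ => rfl, fun hne _ => absurd hact hne, fun hne _ => absurd hact hne⟩
    · exact union_empty A
    · exact inter_empty A
    · exact union_empty B
    · exact inter_empty B
  · rcases Nat.mod_two_eq_zero_or_one d with hd | hd
    · -- even : split the A side along coordinate d/2
      set k := d / 2
      have hcoord : IsClopen {x : X | x k = false} ∧ IsClopen {x : X | x k = true} :=
        ⟨(isClopen_discrete {false}).preimage (continuous_apply k),
         (isClopen_discrete {true}).preimage (continuous_apply k)⟩
      have hAu : (A ∩ {x | x k = false}) ∪ (A ∩ {x | x k = true}) = A := by
        rw [← inter_union_distrib_left]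
        have : {x : X | x k = false} ∪ {x : X | x k = true} = univ := by
          ext x; simp [Bool.eq_false_or_eq_true (x k)]
        rw [this, inter_univ]
      have hAd : (A ∩ {x | x k = false}) ∩ (A ∩ {x | x k = true}) = ∅ := by
        ext x
        simp only [mem_inter_iff, mem_setOf_eq, mem_empty_iff_false, iff_false]
        rintro ⟨⟨-, h1⟩, -, h2⟩
        rw [h1] at h2; exact Bool.false_ne_true h2
      obtain ⟨B₀, B₁, hB₀cl, hB₁cl, hBu, hBd, him₀, him₁, hiff₀, hiff₁⟩ :=
        exists_Bside σ.Pc σ.Qnd σ.Qc σ.e hBcl him hact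
          (hAcl.inter hcoord.1) (hAcl.inter hcoord.2) hAu hAd
      refine ⟨((A ∩ {x | x k = false}, B₀), (A ∩ {x | x k = true}, B₁)),
        ⟨hAcl.inter hcoord.1, hB₀cl, him₀, hiff₀⟩,
        ⟨hAcl.inter hcoord.2, hB₁cl, him₁, hiff₁⟩,
        hAu, hAd, hBu, hBd, fun hc => absurd hc hact,
        fun _ _ => ⟨rfl, rfl⟩,
        fun _ hodd => absurd (hd.symm.trans hodd) (by norm_num)⟩
    · -- odd : split the B side along coordinate d/2
      set k := d / 2
      have hcoord : IsClopen {x : X | x k = false} ∧ IsClopen {x : X | x k = true} :=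
        ⟨(isClopen_discrete {false}).preimage (continuous_apply k),
         (isClopen_discrete {true}).preimage (continuous_apply k)⟩
      have hBu : (B ∩ {x | x k = false}) ∪ (B ∩ {x | x k = true}) = B := by
        rw [← inter_union_distrib_left]
        have : {x : X | x k = false} ∪ {x : X | x k = true} = univ := by
          ext x; simp [Bool.eq_false_or_eq_true (x k)]
        rw [this, inter_univ]
      have hBd : (B ∩ {x | x k = false}) ∩ (B ∩ {x | x k = true}) = ∅ := by
        ext x
        simp only [mem_inter_iff, mem_setOf_eq, mem_empty_iff_false, iff_false]
        rintro ⟨⟨-, h1⟩, -, h2⟩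
        rw [h1] at h2; exact Bool.false_ne_true h2
      have him' : img σ.Q σ.P σ.e.symm B = σ.P ∩ A := img_flip σ.e him
      have hact' : σ.Q ∩ B ≠ ∅ := by
        intro hc
        apply hact
        rw [← him', img_empty_iff.mpr hc]
      obtain ⟨A₀, A₁, hA₀cl, hA₁cl, hAu, hAd, him₀', him₁', hiff₀, hiff₁⟩ :=
        exists_Bside σ.Qc σ.Pnd σ.Pc σ.e.symm hAcl him' hact'
          (hBcl.inter hcoord.1) (hBcl.inter hcoord.2) hBu hBd
      have him₀ : img σ.P σ.Q σ.e A₀ = σ.Q ∩ (B ∩ {x | x k = false}) := by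
        have := img_flip σ.e.symm him₀'
        rwa [Homeomorph.symm_symm] at this
      have him₁ : img σ.P σ.Q σ.e A₁ = σ.Q ∩ (B ∩ {x | x k = true}) := by
        have := img_flip σ.e.symm him₁'
        rwa [Homeomorph.symm_symm] at this
      refine ⟨((A₀, B ∩ {x | x k = false}), (A₁, B ∩ {x | x k = true})),
        ⟨hA₀cl, hBcl.inter hcoord.1, him₀, hiff₀.symm⟩,
        ⟨hA₁cl, hBcl.inter hcoord.2, him₁, hiff₁.symm⟩,
        hAu, hAd, hBu, hBd, fun hc => absurd hc hact,
        fun _ hev => absurd (hd.symm.trans hev) (by norm_num),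
        fun _ _ => ⟨rfl, rfl⟩⟩

def children (d : ℕ) (nd : Set X × Set X) : (Set X × Set X) × (Set X × Set X) :=
  if hg : Good σ nd.1 nd.2 then Classical.choose (exists_children σ d nd.1 nd.2 hg)
  else ((∅, ∅), (∅, ∅))

def state : List Bool → Set X × Set X
  | [] => (univ, univ)
  | false :: s => (children σ s.length (state s)).1
  | true :: s => (children σ s.length (state s)).2

lemma good_state : ∀ s : List Bool, Good σ (state σ s).1 (state σ s).2 := by
  intro s
  induction s with
  | nil => exact good_univ σ
  | cons b s ih =>
    have hcs : ChildSpec σ s.length (state σ s).1 (state σ s).2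
        (children σ s.length (state σ s)) := by
      rw [children, dif_pos ih]
      exact Classical.choose_spec (exists_children σ s.length _ _ ih)
    cases b
    · exact hcs.1
    · exact hcs.2.1

lemma children_spec (s : List Bool) :
    ChildSpec σ s.length (state σ s).1 (state σ s).2 (children σ s.length (state σ s)) := by
  rw [children, dif_pos (good_state σ s)]
  exact Classical.choose_spec (exists_children σ s.length _ _ (good_state σ s))

lemma state_cons (b : Bool) (s : List Bool) :
    state σ (b :: s) = (if b then (children σ s.length (state σ s)).2
      else (children σ s.length (state σ s)).1) := by
  cases b <;> rfl

lemma A_union (s : List Bool) :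
    (state σ (false :: s)).1 ∪ (state σ (true :: s)).1 = (state σ s).1 :=
  (children_spec σ s).2.2.1

lemma A_disj (s : List Bool) :
    (state σ (false :: s)).1 ∩ (state σ (true :: s)).1 = ∅ :=
  (children_spec σ s).2.2.2.1

lemma B_union (s : List Bool) :
    (state σ (false :: s)).2 ∪ (state σ (true :: s)).2 = (state σ s).2 :=
  (children_spec σ s).2.2.2.2.1

lemma B_disj (s : List Bool) :
    (state σ (false :: s)).2 ∩ (state σ (true :: s)).2 = ∅ :=
  (children_spec σ s).2.2.2.2.2.1

lemma A_sub (b : Bool) (s : List Bool) : (state σ (b :: s)).1 ⊆ (state σ s).1 := by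
  rw [← A_union σ s]
  cases b
  · exact subset_union_left
  · exact subset_union_right

lemma B_sub (b : Bool) (s : List Bool) : (state σ (b :: s)).2 ⊆ (state σ s).2 := by
  rw [← B_union σ s]
  cases b
  · exact subset_union_left
  · exact subset_union_right

lemma frozen_children (s : List Bool) (hf : σ.P ∩ (state σ s).1 = ∅) :
    state σ (false :: s) = state σ s ∧ state σ (true :: s) = (∅, ∅) := by
  have hc := (children_spec σ s).2.2.2.2.2.2.1 hf
  constructor
  · show (children σ s.length (state σ s)).1 = state σ s
    rw [hc]
  · show (children σ s.length (state σ s)).2 = (∅, ∅)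
    rw [hc]

lemma coordA (s : List Bool) (hact : σ.P ∩ (state σ s).1 ≠ ∅) (hev : s.length % 2 = 0)
    (b : Bool) :
    (state σ (b :: s)).1 = (state σ s).1 ∩ {x | x (s.length / 2) = b} := by
  have hc := (children_spec σ s).2.2.2.2.2.2.2.1 hact hev
  cases b
  · exact hc.1
  · exact hc.2

lemma coordB (s : List Bool) (hact : σ.P ∩ (state σ s).1 ≠ ∅) (hodd : s.length % 2 = 1)
    (b : Bool) :
    (state σ (b :: s)).2 = (state σ s).2 ∩ {x | x (s.length / 2) = b} := by
  have hc := (children_spec σ s).2.2.2.2.2.2.2.2 hact hodd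
  cases b
  · exact hc.1
  · exact hc.2

lemma suffix_subset {s t : List Bool} (hst : s <:+ t) :
    (state σ t).1 ⊆ (state σ s).1 ∧ (state σ t).2 ⊆ (state σ s).2 := by
  induction t with
  | nil =>
    rw [List.suffix_nil] at hst
    subst hst
    exact ⟨Subset.rfl, Subset.rfl⟩
  | cons b t ih =>
    rcases List.suffix_cons_iff.mp hst with rfl | hst'
    · exact ⟨Subset.rfl, Subset.rfl⟩
    · exact ⟨(A_sub σ b t).trans (ih hst').1, (B_sub σ b t).trans (ih hst').2⟩

lemma state_uniqueA : ∀ (s t : List Bool), s.length = t.length →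
    ∀ x : X, x ∈ (state σ s).1 → x ∈ (state σ t).1 → s = t := by
  intro s
  induction s with
  | nil =>
    intro t hlen x _ _
    exact (List.eq_nil_of_length_eq_zero hlen.symm).symm
  | cons a s ih =>
    intro t hlen x hxs hxt
    cases t with
    | nil => exact absurd hlen (by simp)
    | cons b t =>
      have hst : s = t := ih t (by simpa using hlen) x (A_sub σ a s hxs) (A_sub σ b t hxt)
      subst hst
      have hab : a = b := by
        by_contra hne
        have key : x ∈ (state σ (false :: s)).1 ∩ (state σ (true :: s)).1 := by
          cases a <;> cases b <;> simp_all <;> exact ⟨hxs, hxt⟩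
        rw [A_disj σ s] at key
        exact key
      rw [hab]

lemma state_uniqueB : ∀ (s t : List Bool), s.length = t.length →
    ∀ y : X, y ∈ (state σ s).2 → y ∈ (state σ t).2 → s = t := by
  intro s
  induction s with
  | nil =>
    intro t hlen y _ _
    exact (List.eq_nil_of_length_eq_zero hlen.symm).symm
  | cons a s ih =>
    intro t hlen y hxs hxt
    cases t with
    | nil => exact absurd hlen (by simp)
    | cons b t =>
      have hst : s = t := ih t (by simpa using hlen) y (B_sub σ a s hxs) (B_sub σ b t hxt)
      subst hst
      have hab : a = b := by
        by_contra hne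
        have key : y ∈ (state σ (false :: s)).2 ∩ (state σ (true :: s)).2 := by
          cases a <;> cases b <;> simp_all <;> exact ⟨hxs, hxt⟩
        rw [B_disj σ s] at key
        exact key
      rw [hab]

/-! ### branches -/

def branchA (x : X) : ℕ → List Bool
  | 0 => []
  | n + 1 =>
    (if x ∈ (state σ (true :: branchA x n)).1 then true else false) :: branchA x n

def branchB (y : X) : ℕ → List Bool
  | 0 => []
  | n + 1 =>
    (if y ∈ (state σ (true :: branchB y n)).2 then true else false) :: branchB y n

lemma branchA_length (x : X) : ∀ n, (branchA σ x n).length = n := by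
  intro n
  induction n with
  | zero => rfl
  | succ n ih => simp [branchA, ih]

lemma branchB_length (y : X) : ∀ n, (branchB σ y n).length = n := by
  intro n
  induction n with
  | zero => rfl
  | succ n ih => simp [branchB, ih]

lemma branchA_mem (x : X) : ∀ n, x ∈ (state σ (branchA σ x n)).1 := by
  intro n
  induction n with
  | zero => exact mem_univ x
  | succ n ih =>
    show x ∈ (state σ ((if x ∈ (state σ (true :: branchA σ x n)).1 then true else false)
      :: branchA σ x n)).1
    by_cases hx : x ∈ (state σ (true :: branchA σ x n)).1
    · rw [if_pos hx]; exact hx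
    · rw [if_neg hx]
      have := A_union σ (branchA σ x n)
      rw [← this] at ih
      rcases ih with h | h
      · exact h
      · exact absurd h hx

lemma branchB_mem (y : X) : ∀ n, y ∈ (state σ (branchB σ y n)).2 := by
  intro n
  induction n with
  | zero => exact mem_univ y
  | succ n ih =>
    show y ∈ (state σ ((if y ∈ (state σ (true :: branchB σ y n)).2 then true else false)
      :: branchB σ y n)).2
    by_cases hy : y ∈ (state σ (true :: branchB σ y n)).2
    · rw [if_pos hy]; exact hy
    · rw [if_neg hy]
      have := B_union σ (branchB σ y n)
      rw [← this] at ih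
      rcases ih with h | h
      · exact h
      · exact absurd h hy

lemma branchA_suffix (x : X) {m n : ℕ} (hmn : m ≤ n) : branchA σ x m <:+ branchA σ x n := by
  induction n with
  | zero =>
    rw [Nat.le_zero] at hmn
    subst hmn
    exact List.suffix_rfl
  | succ n ih =>
    rcases Nat.lt_or_ge m (n + 1) with hlt | hge
    · exact (ih (Nat.lt_succ_iff.mp hlt)).trans (List.suffix_cons _ _)
    · have : m = n + 1 := le_antisymm hmn hge
      subst this
      exact List.suffix_rfl

lemma branchB_suffix (y : X) {m n : ℕ} (hmn : m ≤ n) : branchB σ y m <:+ branchB σ y n := by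
  induction n with
  | zero =>
    rw [Nat.le_zero] at hmn
    subst hmn
    exact List.suffix_rfl
  | succ n ih =>
    rcases Nat.lt_or_ge m (n + 1) with hlt | hge
    · exact (ih (Nat.lt_succ_iff.mp hlt)).trans (List.suffix_cons _ _)
    · have : m = n + 1 := le_antisymm hmn hge
      subst this
      exact List.suffix_rfl

lemma branchA_eq_of_mem {x : X} {s : List Bool} (hx : x ∈ (state σ s).1) :
    branchA σ x s.length = s :=
  state_uniqueA σ (branchA σ x s.length) s (branchA_length σ x s.length) x
    (branchA_mem σ x s.length) hx

lemma branchB_eq_of_mem {y : X} {s : List Bool} (hy : y ∈ (state σ s).2) :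
    branchB σ y s.length = s :=
  state_uniqueB σ (branchB σ y s.length) s (branchB_length σ y s.length) y
    (branchB_mem σ y s.length) hy

/-! ### frozen nodes -/

def Fz (s : List Bool) : Prop := σ.P ∩ (state σ s).1 = ∅

lemma fzB {s : List Bool} (hf : Fz σ s) : σ.Q ∩ (state σ s).2 = ∅ := by
  rw [← (good_state σ s).2.2.1]
  exact img_empty_iff.mpr hf

lemma actB {s : List Bool} (hf : ¬Fz σ s) : σ.Q ∩ (state σ s).2 ≠ ∅ := by
  intro hc
  apply hf
  have himg := img_flip σ.e (good_state σ s).2.2.1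
  show σ.P ∩ (state σ s).1 = ∅
  rw [← himg]
  exact img_empty_iff.mpr hc

lemma fz_suffix {s t : List Bool} (hst : s <:+ t) (hf : Fz σ s) : Fz σ t := by
  have hsub := (suffix_subset σ hst).1
  rw [Fz, ← subset_empty_iff, ← hf]
  exact inter_subset_inter Subset.rfl hsub

/-! ### termination -/

lemma coordA_branch {x : X} {j : ℕ} (hact : ¬Fz σ (branchA σ x (2 * j))) :
    (state σ (branchA σ x (2 * j + 1))).1 ⊆ {y : X | y j = x j} := by
  set u := branchA σ x (2 * j) with hu
  have hlen : u.length = 2 * j := branchA_length σ x _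
  have hev : u.length % 2 = 0 := by omega
  have hdiv : u.length / 2 = j := by omega
  have hcons : ∃ b : Bool, branchA σ x (2 * j + 1) = b :: u := ⟨_, rfl⟩
  obtain ⟨b, hb⟩ := hcons
  have hco := coordA σ u hact hev b
  rw [hdiv] at hco
  have hxmem : x ∈ (state σ (b :: u)).1 := hb ▸ branchA_mem σ x (2 * j + 1)
  rw [hco] at hxmem
  have hxj : x j = b := hxmem.2
  rw [hb, hco]
  intro y hy
  rw [hxj]
  exact hy.2

lemma findFzA {x : X} (hx : x ∉ σ.P) : ∃ n, Fz σ (branchA σ x n) := by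
  by_contra hall
  push_neg at hall
  have key : ∀ j n, 2 * j + 1 ≤ n → (state σ (branchA σ x n)).1 ⊆ {y : X | y j = x j} := by
    intro j n hn
    have h1 := coordA_branch σ (x := x) (j := j) (hall _)
    exact ((suffix_subset σ (branchA_suffix σ x hn)).1).trans h1
  have hclos : x ∈ closure σ.P := by
    apply mem_closure_of_cyl
    intro k
    have hne : σ.P ∩ (state σ (branchA σ x (2 * k + 1))).1 ≠ ∅ := hall _
    obtain ⟨p, hpP, hpA⟩ := nonempty_iff_ne_empty.mpr hne
    refine ⟨p, hpP, ?_⟩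
    intro j hj
    exact key j (2 * k + 1) (by omega) hpA
  rw [σ.Pc.closure_eq] at hclos
  exact hx hclos

lemma coordB_branch {y : X} {j : ℕ} (hact : ¬Fz σ (branchB σ y (2 * j + 1))) :
    (state σ (branchB σ y (2 * j + 2))).2 ⊆ {z : X | z j = y j} := by
  set u := branchB σ y (2 * j + 1) with hu
  have hlen : u.length = 2 * j + 1 := branchB_length σ y _
  have hodd : u.length % 2 = 1 := by omega
  have hdiv : u.length / 2 = j := by omega
  have hcons : ∃ b : Bool, branchB σ y (2 * j + 2) = b :: u := ⟨_, rfl⟩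
  obtain ⟨b, hb⟩ := hcons
  have hco := coordB σ u hact hodd b
  rw [hdiv] at hco
  have hymem : y ∈ (state σ (b :: u)).2 := hb ▸ branchB_mem σ y (2 * j + 2)
  rw [hco] at hymem
  have hyj : y j = b := hymem.2
  rw [hb, hco]
  intro z hz
  rw [hyj]
  exact hz.2

lemma findFzB {y : X} (hy : y ∉ σ.Q) : ∃ n, Fz σ (branchB σ y n) := by
  by_contra hall
  push_neg at hall
  have key : ∀ j n, 2 * j + 2 ≤ n → (state σ (branchB σ y n)).2 ⊆ {z : X | z j = y j} := by
    intro j n hn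
    have h1 := coordB_branch σ (y := y) (j := j) (hall _)
    exact ((suffix_subset σ (branchB_suffix σ y hn)).2).trans h1
  have hclos : y ∈ closure σ.Q := by
    apply mem_closure_of_cyl
    intro k
    have hne : σ.Q ∩ (state σ (branchB σ y (2 * k + 2))).2 ≠ ∅ := actB σ (hall _)
    obtain ⟨q, hqQ, hqB⟩ := nonempty_iff_ne_empty.mpr hne
    refine ⟨q, hqQ, ?_⟩
    intro j hj
    exact key j (2 * k + 2) (by omega) hqB
  rw [σ.Qc.closure_eq] at hclos
  exact hy hclos

/-! ### the frozen-piece homeomorphisms -/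

def Gd (s : List Bool) : X → X :=
  Classical.choose (exists_fpf (good_state σ s).1 (good_state σ s).2.1 (good_state σ s).2.2.2)

def Gd' (s : List Bool) : X → X :=
  Classical.choose (Classical.choose_spec
    (exists_fpf (good_state σ s).1 (good_state σ s).2.1 (good_state σ s).2.2.2))

lemma Gd_spec (s : List Bool) :
    ContinuousOn (Gd σ s) (state σ s).1 ∧
    MapsTo (Gd σ s) (state σ s).1 (state σ s).2 ∧
    MapsTo (Gd' σ s) (state σ s).2 (state σ s).1 ∧
    (∀ x ∈ (state σ s).1, Gd' σ s (Gd σ s x) = x) ∧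
    (∀ y ∈ (state σ s).2, Gd σ s (Gd' σ s y) = y) ∧
    (∀ x ∈ (state σ s).1, Gd σ s x ≠ x) :=
  Classical.choose_spec (Classical.choose_spec
    (exists_fpf (good_state σ s).1 (good_state σ s).2.1 (good_state σ s).2.2.2))

/-! ### the extension and its inverse -/

def HH (x : X) : X :=
  if hx : x ∈ σ.P then ((σ.e ⟨x, hx⟩ : X))
  else Gd σ (branchA σ x (Nat.find (findFzA σ hx))) x

def HH' (y : X) : X :=
  if hy : y ∈ σ.Q then ((σ.e.symm ⟨y, hy⟩ : X))
  else Gd' σ (branchB σ y (Nat.find (findFzB σ hy))) y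

lemma tA_min_suffix {x : X} (hx : x ∉ σ.P) :
    ∀ u, u <:+ branchA σ x (Nat.find (findFzA σ hx)) →
      u.length < (branchA σ x (Nat.find (findFzA σ hx))).length → ¬Fz σ u := by
  intro u hsuf hlen hFzu
  have hxu : x ∈ (state σ u).1 :=
    (suffix_subset σ hsuf).1 (branchA_mem σ x _)
  have heq : branchA σ x u.length = u := branchA_eq_of_mem σ hxu
  have hN : (branchA σ x (Nat.find (findFzA σ hx))).length = Nat.find (findFzA σ hx) :=
    branchA_length σ x _
  exact Nat.find_min (findFzA σ hx) (m := u.length) (by omega) (by rw [heq]; exact hFzu)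

lemma tB_min_suffix {y : X} (hy : y ∉ σ.Q) :
    ∀ u, u <:+ branchB σ y (Nat.find (findFzB σ hy)) →
      u.length < (branchB σ y (Nat.find (findFzB σ hy))).length → ¬Fz σ u := by
  intro u hsuf hlen hFzu
  have hyu : y ∈ (state σ u).2 :=
    (suffix_subset σ hsuf).2 (branchB_mem σ y _)
  have heq : branchB σ y u.length = u := branchB_eq_of_mem σ hyu
  have hN : (branchB σ y (Nat.find (findFzB σ hy))).length = Nat.find (findFzB σ hy) :=
    branchB_length σ y _
  exact Nat.find_min (findFzB σ hy) (m := u.length) (by omega) (by rw [heq]; exact hFzu)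

lemma findA_eq_of {z : X} (hz : z ∉ σ.P) {t : List Bool} (hFz : Fz σ t)
    (hzt : z ∈ (state σ t).1)
    (hmin : ∀ u, u <:+ t → u.length < t.length → ¬Fz σ u) :
    branchA σ z (Nat.find (findFzA σ hz)) = t := by
  have h1 : branchA σ z t.length = t := branchA_eq_of_mem σ hzt
  have hle : Nat.find (findFzA σ hz) ≤ t.length :=
    Nat.find_le (by rw [h1]; exact hFz)
  have hge : t.length ≤ Nat.find (findFzA σ hz) := by
    by_contra hlt
    push_neg at hlt
    have hsuf : branchA σ z (Nat.find (findFzA σ hz)) <:+ t := by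
      rw [← h1]
      exact branchA_suffix σ z (le_of_lt hlt)
    exact hmin _ hsuf (by rw [branchA_length]; exact hlt)
      (Nat.find_spec (findFzA σ hz))
  have : Nat.find (findFzA σ hz) = t.length := le_antisymm hle hge
  rw [this, h1]

lemma findB_eq_of {z : X} (hz : z ∉ σ.Q) {t : List Bool} (hFz : Fz σ t)
    (hzt : z ∈ (state σ t).2)
    (hmin : ∀ u, u <:+ t → u.length < t.length → ¬Fz σ u) :
    branchB σ z (Nat.find (findFzB σ hz)) = t := by
  have h1 : branchB σ z t.length = t := branchB_eq_of_mem σ hzt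
  have hle : Nat.find (findFzB σ hz) ≤ t.length :=
    Nat.find_le (by rw [h1]; exact hFz)
  have hge : t.length ≤ Nat.find (findFzB σ hz) := by
    by_contra hlt
    push_neg at hlt
    have hsuf : branchB σ z (Nat.find (findFzB σ hz)) <:+ t := by
      rw [← h1]
      exact branchB_suffix σ z (le_of_lt hlt)
    exact hmin _ hsuf (by rw [branchB_length]; exact hlt)
      (Nat.find_spec (findFzB σ hz))
  have : Nat.find (findFzB σ hz) = t.length := le_antisymm hle hge
  rw [this, h1]

lemma HH_leftInv : ∀ x : X, HH' σ (HH σ x) = x := by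
  intro x
  by_cases hx : x ∈ σ.P
  · simp only [HH]
    rw [dif_pos hx]
    have hq : ((σ.e ⟨x, hx⟩ : X)) ∈ σ.Q := (σ.e ⟨x, hx⟩).2
    simp only [HH']
    rw [dif_pos hq, Subtype.coe_eta, Homeomorph.symm_apply_apply]
  · simp only [HH]
    rw [dif_neg hx]
    have hFzt : Fz σ (branchA σ x (Nat.find (findFzA σ hx))) := Nat.find_spec (findFzA σ hx)
    have hxt : x ∈ (state σ (branchA σ x (Nat.find (findFzA σ hx)))).1 := branchA_mem σ x _
    have hyB : Gd σ (branchA σ x (Nat.find (findFzA σ hx))) x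
        ∈ (state σ (branchA σ x (Nat.find (findFzA σ hx)))).2 :=
      (Gd_spec σ _).2.1 hxt
    have hyQ : Gd σ (branchA σ x (Nat.find (findFzA σ hx))) x ∉ σ.Q := by
      intro hq
      have hmem : Gd σ (branchA σ x (Nat.find (findFzA σ hx))) x
          ∈ σ.Q ∩ (state σ (branchA σ x (Nat.find (findFzA σ hx)))).2 := ⟨hq, hyB⟩
      rw [fzB σ hFzt] at hmem
      exact hmem
    simp only [HH']
    rw [dif_neg hyQ, findB_eq_of σ hyQ hFzt hyB (tA_min_suffix σ hx)]
    exact (Gd_spec σ _).2.2.2.1 x hxt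

lemma HH_rightInv : ∀ y : X, HH σ (HH' σ y) = y := by
  intro y
  by_cases hy : y ∈ σ.Q
  · simp only [HH']
    rw [dif_pos hy]
    have hp : ((σ.e.symm ⟨y, hy⟩ : X)) ∈ σ.P := (σ.e.symm ⟨y, hy⟩).2
    simp only [HH]
    rw [dif_pos hp, Subtype.coe_eta, Homeomorph.apply_symm_apply]
  · simp only [HH']
    rw [dif_neg hy]
    have hFzt : Fz σ (branchB σ y (Nat.find (findFzB σ hy))) := Nat.find_spec (findFzB σ hy)
    have hyt : y ∈ (state σ (branchB σ y (Nat.find (findFzB σ hy)))).2 := branchB_mem σ y _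
    have hxA : Gd' σ (branchB σ y (Nat.find (findFzB σ hy))) y
        ∈ (state σ (branchB σ y (Nat.find (findFzB σ hy)))).1 :=
      (Gd_spec σ _).2.2.1 hyt
    have hxP : Gd' σ (branchB σ y (Nat.find (findFzB σ hy))) y ∉ σ.P := by
      intro hp
      have hmem : Gd' σ (branchB σ y (Nat.find (findFzB σ hy))) y
          ∈ σ.P ∩ (state σ (branchB σ y (Nat.find (findFzB σ hy)))).1 := ⟨hp, hxA⟩
      rw [hFzt] at hmem
      exact hmem
    simp only [HH]
    rw [dif_neg hxP, findA_eq_of σ hxP hFzt hxA (tB_min_suffix σ hy)]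
    exact (Gd_spec σ _).2.2.2.2.1 y hyt

lemma HH_ne (x : X) : HH σ x ≠ x := by
  by_cases hx : x ∈ σ.P
  · simp only [HH]
    rw [dif_pos hx]
    exact σ.fpf ⟨x, hx⟩
  · simp only [HH]
    rw [dif_neg hx]
    exact (Gd_spec σ _).2.2.2.2.2 x (branchA_mem σ x _)

lemma HH_ext (p : ↥σ.P) : HH σ ↑p = ↑(σ.e p) := by
  simp only [HH]
  rw [dif_pos p.2, Subtype.coe_eta]

/-! ### continuity -/

lemma HH_mapsTo (s : List Bool) (hact : ¬Fz σ s) :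
    ∀ z ∈ (state σ s).1, HH σ z ∈ (state σ s).2 := by
  intro z hz
  by_cases hzP : z ∈ σ.P
  · simp only [HH]
    rw [dif_pos hzP]
    have hmem : ((σ.e ⟨z, hzP⟩ : X)) ∈ img σ.P σ.Q σ.e (state σ s).1 :=
      mem_img.mpr ⟨⟨z, hzP⟩, hz, rfl⟩
    rw [(good_state σ s).2.2.1] at hmem
    exact hmem.2
  · simp only [HH]
    rw [dif_neg hzP]
    have h1 : branchA σ z s.length = s := branchA_eq_of_mem σ hz
    have hsle : s.length ≤ Nat.find (findFzA σ hzP) := by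
      by_contra hlt
      push_neg at hlt
      have hsuf : branchA σ z (Nat.find (findFzA σ hzP)) <:+ s := by
        rw [← h1]
        exact branchA_suffix σ z (le_of_lt hlt)
      exact hact (fz_suffix σ hsuf (Nat.find_spec (findFzA σ hzP)))
    have hsuf : s <:+ branchA σ z (Nat.find (findFzA σ hzP)) := by
      rw [← h1]
      exact branchA_suffix σ z hsle
    exact (suffix_subset σ hsuf).2 ((Gd_spec σ _).2.1 (branchA_mem σ z _))

lemma coordB_branchA {x : X} (hx : x ∈ σ.P) (j : ℕ) :
    (state σ (branchA σ x (2 * j + 2))).2 ⊆ {z : X | z j = ((σ.e ⟨x, hx⟩ : X)) j} := by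
  set u := branchA σ x (2 * j + 1) with hu
  have hact : ¬Fz σ u := by
    intro hFz
    have hmem : x ∈ σ.P ∩ (state σ u).1 := ⟨hx, branchA_mem σ x _⟩
    rw [hFz] at hmem
    exact hmem
  have hlen : u.length = 2 * j + 1 := branchA_length σ x _
  obtain ⟨b, hb⟩ : ∃ b : Bool, branchA σ x (2 * j + 2) = b :: u := ⟨_, rfl⟩
  have hco := coordB σ u hact (by omega) b
  rw [(by omega : u.length / 2 = j)] at hco
  have hxA : x ∈ (state σ (b :: u)).1 := hb ▸ branchA_mem σ x (2 * j + 2)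
  have hφ : ((σ.e ⟨x, hx⟩ : X)) ∈ (state σ (b :: u)).2 := by
    have hmem : ((σ.e ⟨x, hx⟩ : X)) ∈ img σ.P σ.Q σ.e (state σ (b :: u)).1 :=
      mem_img.mpr ⟨⟨x, hx⟩, hxA, rfl⟩
    rw [(good_state σ (b :: u)).2.2.1] at hmem
    exact hmem.2
  rw [hco] at hφ
  have hφj : ((σ.e ⟨x, hx⟩ : X)) j = b := hφ.2
  rw [hb, hco]
  intro z hz
  rw [hφj]
  exact hz.2

lemma HH_continuous : Continuous (HH σ) := by
  rw [continuous_iff_continuousAt]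
  intro x
  by_cases hx : x ∈ σ.P
  · rw [ContinuousAt, Filter.tendsto_def]
    intro W hW
    obtain ⟨k, hk⟩ := exists_cyl_subset isOpen_interior (mem_interior_iff_mem_nhds.mpr hW)
    have hact : ¬Fz σ (branchA σ x (2 * k + 2)) := by
      intro hFz
      have hmem : x ∈ σ.P ∩ (state σ (branchA σ x (2 * k + 2))).1 :=
        ⟨hx, branchA_mem σ x _⟩
      rw [hFz] at hmem
      exact hmem
    have hHx : HH σ x = ((σ.e ⟨x, hx⟩ : X)) := by
      simp only [HH]; rw [dif_pos hx]
    have hkey : ∀ j < k, (state σ (branchA σ x (2 * k + 2))).2 ⊆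
        {z : X | z j = (HH σ x) j} := by
      intro j hj
      rw [hHx]
      have hsuf : branchA σ x (2 * j + 2) <:+ branchA σ x (2 * k + 2) :=
        branchA_suffix σ x (by omega)
      exact ((suffix_subset σ hsuf).2).trans (coordB_branchA σ hx j)
    refine Filter.mem_of_superset
      (((good_state σ (branchA σ x (2 * k + 2))).1.2).mem_nhds (branchA_mem σ x _)) ?_
    intro z hz
    have hzB := HH_mapsTo σ _ hact z hz
    have hcyl : HH σ z ∈ cyl (HH σ x) k := fun j hj => hkey j hj hzB
    show HH σ z ∈ W
    exact interior_subset (hk hcyl)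
  · have hFzt : Fz σ (branchA σ x (Nat.find (findFzA σ hx))) := Nat.find_spec (findFzA σ hx)
    have hAnbhd : (state σ (branchA σ x (Nat.find (findFzA σ hx)))).1 ∈ nhds x :=
      ((good_state σ _).1.2).mem_nhds (branchA_mem σ x _)
    have heq : ∀ z ∈ (state σ (branchA σ x (Nat.find (findFzA σ hx)))).1,
        HH σ z = Gd σ (branchA σ x (Nat.find (findFzA σ hx))) z := by
      intro z hz
      have hzP : z ∉ σ.P := by
        intro hzP
        have hmem : z ∈ σ.P ∩ (state σ (branchA σ x (Nat.find (findFzA σ hx)))).1 := ⟨hzP, hz⟩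
        rw [hFzt] at hmem
        exact hmem
      simp only [HH]
      rw [dif_neg hzP, findA_eq_of σ hzP hFzt hz (tA_min_suffix σ hx)]
    have hca : ContinuousAt (Gd σ (branchA σ x (Nat.find (findFzA σ hx)))) x :=
      (Gd_spec σ _).1.continuousAt hAnbhd
    exact hca.congr (Filter.eventuallyEq_of_mem hAnbhd fun z hz => (heq z hz).symm)

end KR

theorem stmt15 (P Q : Set (ℕ → Bool))
    (hPclosed : IsClosed P) (hQclosed : IsClosed Q)
    (hPnd : IsNowhereDense P) (hQnd : IsNowhereDense Q)
    (h : ↥P ≃ₜ ↥Q) (hfpf : ∀ x : ↥P, (h x : ℕ → Bool) ≠ ↑x) :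
    ∃ H : (ℕ → Bool) ≃ₜ (ℕ → Bool),
      (∀ x : ↥P, H ↑x = ↑(h x)) ∧ ∀ x : ℕ → Bool, H x ≠ x := by
  let σ : KR.Setup := KR.Setup.mk P Q h hPclosed hQclosed hPnd hQnd hfpf
  let E : (ℕ → Bool) ≃ (ℕ → Bool) :=
    ⟨KR.HH σ, KR.HH' σ, KR.HH_leftInv σ, KR.HH_rightInv σ⟩
  have hc : Continuous E := KR.HH_continuous σ
  refine ⟨hc.homeoOfEquivCompactToT2, ?_, ?_⟩
  · intro x
    exact KR.HH_ext σ x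
  · intro x
    exact KR.HH_ne σ x
end
end

section
/- Let X be a zero-dimensional metrizable compact space, D ⊆ X a nonempty closed subset, and f : D → X an injective continuous map with f(x) ≠ x for every x ∈ D. Then the continuous chromatic number of (X,G_f) belongs to {2,3}: there is a continuous 3-coloring of (X,G_f), and since G_f is nonempty there is no continuous 1-coloring. -/
open TopologicalSpace

/-!
Every point has an open neighbourhood containing no edge of `G_f` (separate `x` from `f x`), so
by compactness and zero-dimensionality `X` is a finite union of clopen `G_f`-independent sets.
A continuous 3-coloring that is proper on the edges inside a clopen set `C` extends to one that
is proper inside `C ∪ A` for any independent `A`: the set `F j` of points adjacent to a point of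
`C` of colour `j` is closed, and as every point has at most two neighbours (`f x` and `f⁻¹ x`)
the open sets `(F j)ᶜ` cover `X`. A continuous choice of `j` with `x ∉ F j` colours `Cᶜ`.
-/

open Set Function

section Selection

variable {X ι : Type*} [TopologicalSpace X] [CompactSpace X] [T2Space X]
  [TotallyDisconnectedSpace X] [TopologicalSpace ι]

theorem exists_continuous_forall_mem_of_iUnion_eq_univ {G : ι → Set X}
    (hG : ∀ i, IsOpen (G i)) (hcov : ⋃ i, G i = univ) :
    ∃ g : X → ι, Continuous g ∧ ∀ x, x ∈ G (g x) := by
  obtain ⟨n, W, hW, hWcov, hWdisj⟩ :=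
    (IsOpenCover.of_sets hG hcov).exists_finite_nonempty_disjoint_clopen_cover
  choose i hi using fun k => (hW k).2
  choose k hk using fun x => mem_iUnion.mp (hWcov (mem_univ x))
  have hk_fiber : ∀ m, k ⁻¹' {m} = W m := fun m => by
    ext x
    refine ⟨fun h => h ▸ hk x, fun hx => ?_⟩
    by_contra hne
    exact disjoint_left.mp (Clopens.coe_disjoint.mpr (hWdisj hne)) (hk x) hx
  have hk_cont : Continuous k := continuous_discrete_rng.mpr fun m => by
    rw [hk_fiber]
    exact (W m).isClopen.isOpen
  exact ⟨i ∘ k, continuous_of_discreteTopology.comp hk_cont, fun x => hi _ (hk x)⟩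

end Selection

section PartialFunction

variable {X : Type*} {D : Set X} (f : D → X)

def IsIndepSet (A : Set X) : Prop :=
  ∀ y : D, ↑y ∈ A → f y ∉ A

def IsProperColoringOn {κ : Type*} (c : X → κ) (S : Set X) : Prop :=
  ∀ y : D, ↑y ∈ S → f y ∈ S → c y ≠ c (f y)

def adjSet (S : Set X) : Set X :=
  (↑) '' (f ⁻¹' S) ∪ f '' ((↑) ⁻¹' S)

variable {f}

theorem IsIndepSet.mono {A B : Set X} (hB : IsIndepSet f B) (hAB : A ⊆ B) : IsIndepSet f A :=
  fun y hy hfy => hB y (hAB hy) (hAB hfy)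

theorem exists_notMem_adjSet_inter_preimage (hinj : Injective f) (c : X → Fin 3) (S : Set X)
    (x : X) : ∃ j, x ∉ adjSet f (S ∩ c ⁻¹' {j}) := by
  have hout : {j | x ∈ (↑) '' (f ⁻¹' (S ∩ c ⁻¹' {j}))}.Subsingleton := by
    rintro j ⟨y, ⟨-, rfl⟩, hy⟩ k ⟨z, ⟨-, rfl⟩, rfl⟩
    rw [Subtype.ext hy]
  have hin : {j | x ∈ f '' ((↑) ⁻¹' (S ∩ c ⁻¹' {j}))}.Subsingleton := by
    rintro j ⟨y, ⟨-, rfl⟩, hy⟩ k ⟨z, ⟨-, rfl⟩, rfl⟩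
    rw [hinj hy]
  by_contra! hall
  have : (3 : ℕ∞) ≤ 1 + 1 := calc
    (3 : ℕ∞) = (univ : Set (Fin 3)).encard := by simp
    _ = ({j | x ∈ (↑) '' (f ⁻¹' (S ∩ c ⁻¹' {j}))} ∪
          {j | x ∈ f '' ((↑) ⁻¹' (S ∩ c ⁻¹' {j}))}).encard :=
      congrArg encard (eq_univ_of_forall hall).symm
    _ ≤ _ := encard_union_le _ _
    _ ≤ 1 + 1 := add_le_add (encard_le_one_iff_subsingleton.mpr hout)
      (encard_le_one_iff_subsingleton.mpr hin)
  exact absurd this (by decide)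

variable [TopologicalSpace X]

theorem isClosed_adjSet [CompactSpace X] [T2Space X] (hD : IsClosed D)
    (hf : Continuous f) {S : Set X} (hS : IsClosed S) : IsClosed (adjSet f S) := by
  have : CompactSpace D := isCompact_iff_compactSpace.mp hD.isCompact
  exact ((hS.preimage hf).isCompact.image continuous_subtype_val).isClosed.union
    ((hS.preimage continuous_subtype_val).isCompact.image hf).isClosed

theorem exists_isOpen_mem_isIndepSet [T2Space X] (hD : IsClosed D) (hf : Continuous f)
    (hfix : ∀ y : D, f y ≠ y) (x : X) : ∃ U, IsOpen U ∧ x ∈ U ∧ IsIndepSet f U := by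
  by_cases hx : x ∈ D
  · obtain ⟨U₁, U₂, hU₁, hU₂, hfx, hxU₂, hdisj⟩ := t2_separation (hfix ⟨x, hx⟩)
    obtain ⟨W, hW, hWf⟩ := isOpen_induced_iff.mp (hU₁.preimage hf)
    have hxW : x ∈ W := (congrArg (⟨x, hx⟩ ∈ ·) hWf).mpr hfx
    refine ⟨U₂ ∩ W, hU₂.inter hW, ⟨hxU₂, hxW⟩, fun y hy hfy => ?_⟩
    have hfyU₁ : f y ∈ U₁ := (congrArg (y ∈ ·) hWf).mp hy.2
    exact disjoint_left.mp hdisj hfyU₁ hfy.1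
  · exact ⟨Dᶜ, hD.isOpen_compl, hx, fun y hy => absurd y.2 hy⟩

theorem IsProperColoringOn.exists_union [CompactSpace X] [T2Space X] [TotallyDisconnectedSpace X]
    (hD : IsClosed D) (hf : Continuous f) (hinj : Injective f) {C A : Set X} (hC : IsClopen C)
    (hA : IsIndepSet f A) {c : X → Fin 3} (hc : Continuous c) (hcC : IsProperColoringOn f c C) :
    ∃ c' : X → Fin 3, Continuous c' ∧ IsProperColoringOn f c' (C ∪ A) := by
  classical
  set F : Fin 3 → Set X := fun j => adjSet f (C ∩ c ⁻¹' {j})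
  have hF : ∀ j, IsClosed (F j) := fun j =>
    isClosed_adjSet hD hf (hC.isClosed.inter (isClosed_singleton.preimage hc))
  obtain ⟨g, hg, hgF⟩ := exists_continuous_forall_mem_of_iUnion_eq_univ
    (G := fun j => (F j)ᶜ) (fun j => (hF j).isOpen_compl)
    (eq_univ_of_forall fun x => mem_iUnion.mpr (exists_notMem_adjSet_inter_preimage hinj c C x))
  refine ⟨C.piecewise c g, ?_, ?_⟩
  · exact Continuous.piecewise (by simp [hC.frontier_eq]) hc hg
  · intro y hy hfy
    by_cases hyC : ↑y ∈ C <;> by_cases hfyC : f y ∈ C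
    · simpa [hyC, hfyC] using hcC y hyC hfyC
    · have : f y ∈ F (c y) := Or.inr ⟨y, ⟨hyC, rfl⟩, rfl⟩
      simp only [piecewise_eq_of_mem _ _ _ hyC, piecewise_eq_of_notMem _ _ _ hfyC]
      exact fun h => hgF (f y) (h ▸ this)
    · have : ↑y ∈ F (c (f y)) := Or.inl ⟨y, ⟨hfyC, rfl⟩, rfl⟩
      simp only [piecewise_eq_of_mem _ _ _ hfyC, piecewise_eq_of_notMem _ _ _ hyC]
      exact fun h => hgF y (h.symm ▸ this)
    · exact absurd (hfy.resolve_left hfyC) (hA y (hy.resolve_left hyC))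

theorem exists_continuous_isProperColoringOn_biUnion [CompactSpace X] [T2Space X]
    [TotallyDisconnectedSpace X] (hD : IsClosed D) (hf : Continuous f) (hinj : Injective f)
    {ι : Type*} {V : ι → Set X} (hV : ∀ i, IsClopen (V i)) (hVf : ∀ i, IsIndepSet f (V i))
    (s : Finset ι) : ∃ c : X → Fin 3, Continuous c ∧ IsProperColoringOn f c (⋃ i ∈ s, V i) := by
  classical
  induction s using Finset.induction_on with
  | empty => exact ⟨fun _ => 0, continuous_const, fun y hy => by simp at hy⟩
  | insert a s _ ih =>
    obtain ⟨c, hc, hcs⟩ := ih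
    rw [Finset.set_biUnion_insert, union_comm]
    exact hcs.exists_union hD hf hinj (isClopen_biUnion_finset fun i _ => hV i) (hVf a) hc

theorem IsProperColoringOn.hasContColoring {n : ℕ} {c : X → Fin n}
    (hc : Continuous c) (hcf : IsProperColoringOn f c univ) :
    HasContColoring (PartialGraph D f) n := by
  refine ⟨c, hc, ?_⟩
  rintro x y ⟨-, ⟨hx, hxy⟩ | ⟨hy, hyx⟩⟩
  · rw [← show f ⟨x, hx⟩ = y from hxy]
    exact hcf ⟨x, hx⟩ trivial trivial
  · rw [← show f ⟨y, hy⟩ = x from hyx]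
    exact (hcf ⟨y, hy⟩ trivial trivial).symm

theorem hasContColoring_three [CompactSpace X] [T2Space X] [TotallyDisconnectedSpace X]
    (hD : IsClosed D) (hf : Continuous f) (hinj : Injective f) (hfix : ∀ y : D, f y ≠ y) :
    HasContColoring (PartialGraph D f) 3 := by
  choose U hU hxU hUf using exists_isOpen_mem_isIndepSet hD hf hfix
  obtain ⟨n, W, hWU, hWcov⟩ := (IsOpenCover.of_sets hU
    (eq_univ_of_forall fun x => mem_iUnion.mpr ⟨x, hxU x⟩)).exists_finite_clopen_cover
  obtain ⟨c, hc, hcW⟩ := exists_continuous_isProperColoringOn_biUnion hD hf hinj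
    (fun j => (W j).isClopen) (fun j => (hUf _).mono (hWU j).choose_spec) Finset.univ
  simp only [Finset.mem_univ, iUnion_true, univ_subset_iff.mp hWcov] at hcW
  exact hcW.hasContColoring hc

end PartialFunction

theorem not_hasContColoring_one {X : Type*} [TopologicalSpace X] {G : Set (X × X)}
    (hG : G.Nonempty) : ¬ HasContColoring G 1 := by
  rintro ⟨c, -, hc⟩
  obtain ⟨⟨x, y⟩, hxy⟩ := hG
  exact hc x y hxy (Subsingleton.elim _ _)

theorem stmt16 (X : Type*) [TopologicalSpace X] (h0 : Is0DMC X)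
    (D : Set X) (hD : IsClosed D) (hne : D.Nonempty)
    (f : ↥D → X) (hf : Continuous f) (hinj : Function.Injective f)
    (hfpf : ∀ x : ↥D, f x ≠ ↑x) :
    HasContColoring (PartialGraph D f) 3 ∧ ¬ HasContColoring (PartialGraph D f) 1 := by
  obtain ⟨_, _, hzd⟩ := h0
  have : TotallyDisconnectedSpace X :=
    (totallySeparatedSpace_of_t0_of_basis_clopen hzd).totallyDisconnectedSpace
  obtain ⟨x, hx⟩ := hne
  exact ⟨hasContColoring_three hD hf hinj hfpf,
    not_hasContColoring_one ⟨(x, f ⟨x, hx⟩), (hfpf ⟨x, hx⟩).symm, Or.inl ⟨hx, rfl⟩⟩⟩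
end
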